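/- arXiv:2102.09975 — 2 statements merged into one kernel-verified Lean document; each statement's English description precedes it below -/
import Mathlib

section
/- Let k ≥ 2. There is a constant C_k > 0 such that for all z₁,…,z_k ∈ ℂ∖ℝ with |Re z_i| ≤ 3 and 0 < |Im z_i| ≤ 1 for each i, and all N×N complex matrices A₁,…,A_{k−1}, the matrix M_{[k]} := Σ_{π∈NCP([k])} pTr_{K(π)}(A₁,…,A_{k−1}) ∏_{B∈π} m_∘[B] satisfies ‖M_{[k]}‖ ≤ C_k · (ρ / η_*^{k−1}) · ∏_{j=1}^{k−1} ‖A_j‖, where η_* := min_i |Im z_i| and ρ := max_i |Im m(z_i)|/π. -/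
open MeasureTheory ProbabilityTheory Finset
open scoped ENNReal Classical

noncomputable section

namespace Paper

/-- The normalized trace `⟨R⟩ = N⁻¹ Tr R`. -/
def ntr {N : ℕ} (R : Matrix (Fin N) (Fin N) ℂ) : ℂ := (N : ℂ)⁻¹ * R.trace

/-- The (ℓ²→ℓ²) operator norm of a matrix. -/
def opNorm {N : ℕ} (A : Matrix (Fin N) (Fin N) ℂ) : ℝ :=
  ‖(Matrix.toEuclideanCLM (𝕜 := ℂ) A : EuclideanSpace ℂ (Fin N) →L[ℂ] EuclideanSpace ℂ (Fin N))‖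

/-- Euclidean norm of a vector in ℂ^N. -/
def vnorm {N : ℕ} (x : Fin N → ℂ) : ℝ := Real.sqrt (∑ i, Complex.normSq (x i))

/-- The sesquilinear form `⟨x, M y⟩`. -/
def bil {N : ℕ} (x : Fin N → ℂ) (M : Matrix (Fin N) (Fin N) ℂ) (y : Fin N → ℂ) : ℂ :=
  ∑ i, (starRingEnd ℂ) (x i) * M.mulVec y i

/-- `π` is a partition of the finite set `S ⊆ ℕ`, encoded as a finite set of blocks. -/
def IsPartition (S : Finset ℕ) (π : Finset (Finset ℕ)) : Prop :=
  (∀ B ∈ π, B.Nonempty) ∧ (∀ B ∈ π, B ⊆ S) ∧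
    (∀ x ∈ S, ∃! B : Finset ℕ, B ∈ π ∧ x ∈ B)

/-- A family of blocks is crossing if there are `a < c < b < d` with `a,b` in a block and
`c,d` in a different block. -/
def Crossing (π : Finset (Finset ℕ)) : Prop :=
  ∃ B ∈ π, ∃ B' ∈ π, B ≠ B' ∧
    ∃ a ∈ B, ∃ b ∈ B, ∃ c ∈ B', ∃ d ∈ B', a < c ∧ c < b ∧ b < d

/-- The set `NCP(S)` of non-crossing partitions of `S`. -/
def NCP (S : Finset ℕ) : Finset (Finset (Finset ℕ)) :=
  S.powerset.powerset.filter fun π => IsPartition S π ∧ ¬ Crossing π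

/-- Refinement order on partitions: every block of `π` is contained in a block of `σ`. -/
def Refines (π σ : Finset (Finset ℕ)) : Prop := ∀ B ∈ π, ∃ B' ∈ σ, B ⊆ B'

/-- The interleaving of a partition `π` of `S` (placed on the even integers `2s`, `s ∈ S`) with
a partition `σ` of the copy of `S` placed on the odd integers `2s+1`, `s ∈ S`. -/
def interleaved (π σ : Finset (Finset ℕ)) : Finset (Finset ℕ) :=
  π.image (fun B => B.image fun x => 2 * x) ∪ σ.image (fun B => B.image fun x => 2 * x + 1)

/-- `σ` is the Kreweras complement of `π ∈ NCP(S)`: it is the maximal (in refinement order)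
non-crossing partition of (a copy of) `S` such that the interleaved union `π ∪ σ̄` is
non-crossing. -/
def IsKreweras (S : Finset ℕ) (π σ : Finset (Finset ℕ)) : Prop :=
  σ ∈ NCP S ∧ ¬ Crossing (interleaved π σ) ∧
    ∀ σ' ∈ NCP S, ¬ Crossing (interleaved π σ') → Refines σ' σ

/-- The product `∏_{j ∈ B} A j`, ordered by increasing index. -/
def ordProd {N : ℕ} (B : Finset ℕ) (A : ℕ → Matrix (Fin N) (Fin N) ℂ) :
    Matrix (Fin N) (Fin N) ℂ :=
  ((B.sort (· ≤ ·)).map A).prod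

/-- `⟨A₁,…⟩_π := ∏_{B∈π} ⟨∏_{j∈B} A_j⟩` (each product ordered by increasing index). -/
def piTrace {N : ℕ} (π : Finset (Finset ℕ)) (A : ℕ → Matrix (Fin N) (Fin N) ℂ) : ℂ :=
  ∏ B ∈ π, ntr (ordProd B A)

/-- The `π`-partial-trace `pTr_π(A₁,…)`, where `s` is the distinguished (maximal) element of the
ground set: `(∏_{j∈B(s), j≠s} A_j) ∏_{B∈π, s∉B} ⟨∏_{j∈B} A_j⟩`. -/
def pTr {N : ℕ} (s : ℕ) (π : Finset (Finset ℕ)) (A : ℕ → Matrix (Fin N) (Fin N) ℂ) :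
    Matrix (Fin N) (Fin N) ℂ :=
  (∏ B ∈ π.filter (fun B => s ∉ B), ntr (ordProd B A)) •
    ordProd (((π.filter fun B => s ∈ B).sup id).erase s) A

/-- `fmax k g = max_{1 ≤ i ≤ k} g i` (0 if `k = 0`). -/
def fmax (k : ℕ) (g : ℕ → ℝ) : ℝ :=
  if h : (Finset.Icc 1 k).Nonempty then (Finset.Icc 1 k).sup' h g else 0

/-- `fmin k g = min_{1 ≤ i ≤ k} g i` (0 if `k = 0`). -/
def fmin (k : ℕ) (g : ℕ → ℝ) : ℝ :=
  if h : (Finset.Icc 1 k).Nonempty then (Finset.Icc 1 k).inf' h g else 0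

/-- `fmax2 k g = max_{1 ≤ i ≠ j ≤ k} g i j`. -/
def fmax2 (k : ℕ) (g : ℕ → ℕ → ℝ) : ℝ :=
  if h : ((Finset.Icc 1 k).offDiag).Nonempty then
    ((Finset.Icc 1 k).offDiag).sup' h (fun p => g p.1 p.2) else 0

/-- A Wigner matrix: random Hermitian `N×N` matrix with independent entries (up to Hermitian
symmetry), identically distributed off-diagonal entries of mean zero and variance `1/N` with
`E w_{ab}² ∈ ℝ`, identically distributed real diagonal entries of mean zero, and all `p`-th
moments of the normalized entries bounded by `Cmom p`. -/
structure IsWigner {Ω : Type} [MeasurableSpace Ω] (P : Measure Ω) (N : ℕ)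
    (W : Ω → Matrix (Fin N) (Fin N) ℂ) (Cmom : ℕ → ℝ) : Prop where
  herm : ∀ ω, (W ω).IsHermitian
  meas : ∀ a b, Measurable fun ω => W ω a b
  indep : iIndepFun
    (fun (p : {p : Fin N × Fin N // p.1 ≤ p.2}) (ω : Ω) => W ω p.1.1 p.1.2) P
  identOff : ∀ a b a' b' : Fin N, a < b → a' < b' →
    IdentDistrib (fun ω => W ω a b) (fun ω => W ω a' b') P P
  identDiag : ∀ a a' : Fin N,
    IdentDistrib (fun ω => W ω a a) (fun ω => W ω a' a') P P
  diagReal : ∀ ω a, (W ω a a).im = 0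
  mean_zero : ∀ a b, ∫ ω, W ω a b ∂P = 0
  variance_one : ∀ a b : Fin N, a < b → ∫ ω, Complex.normSq (W ω a b) ∂P = (N : ℝ)⁻¹
  second_real : ∀ a b : Fin N, a < b → (∫ ω, (W ω a b) ^ 2 ∂P).im = 0
  moments : ∀ p : ℕ, ∀ a b, ∫ ω, ‖W ω a b‖ ^ p ∂P ≤ Cmom p * (N : ℝ) ^ (-(p : ℝ) / 2)

/-- `f(W)` for a Hermitian matrix `W`, via the spectral theorem. -/
def matFun {N : ℕ} (f : ℝ → ℂ) (W : Matrix (Fin N) (Fin N) ℂ) : Matrix (Fin N) (Fin N) ℂ :=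
  if hW : W.IsHermitian then
    (hW.eigenvectorUnitary : Matrix (Fin N) (Fin N) ℂ) *
      Matrix.diagonal (fun i => f (hW.eigenvalues i)) *
      star (hW.eigenvectorUnitary : Matrix (Fin N) (Fin N) ℂ)
  else 0

/-- The matrix exponential `e^{isW}`. -/
def uexp {N : ℕ} (s : ℝ) (W : Matrix (Fin N) (Fin N) ℂ) : Matrix (Fin N) (Fin N) ℂ :=
  NormedSpace.exp ((Complex.I * (s : ℂ)) • W)

/-- Heisenberg time evolution `A(t) = e^{itW} A e^{-itW}`. -/
def heis {N : ℕ} (t : ℝ) (W A : Matrix (Fin N) (Fin N) ℂ) : Matrix (Fin N) (Fin N) ℂ :=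
  uexp t W * A * uexp (-t) W

/-- The semicircle density `ρ_sc(x) = √(4-x²)/(2π)`. -/
def rhoSC (x : ℝ) : ℝ := Real.sqrt (4 - x ^ 2) / (2 * Real.pi)

/-- The semicircle average `⟨g⟩_sc = ∫_{-2}^2 g(x) ρ_sc(x) dx`. -/
def scInt (g : ℝ → ℂ) : ℂ := ∫ x in (-2 : ℝ)..2, (rhoSC x : ℂ) * g x

/-- The Stieltjes transform of the semicircle law. -/
def mSC (z : ℂ) : ℂ := ∫ x in (-2 : ℝ)..2, (rhoSC x : ℂ) / ((x : ℂ) - z)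

/-- `φ(s) = ∫_{-2}^2 ρ_sc(x) e^{isx} dx`. -/
def phiSC (s : ℝ) : ℂ := ∫ x in (-2 : ℝ)..2, (rhoSC x : ℂ) * Complex.exp (Complex.I * s * x)

/-- `g` is a weak derivative of `f` on `ℝ`. -/
def IsWeakDeriv (f g : ℝ → ℂ) : Prop :=
  ∀ φ : ℝ → ℂ, ContDiff ℝ (⊤ : ℕ∞) φ → HasCompactSupport φ →
    ∫ x, f x * deriv φ x = - ∫ x, g x * φ x

/-- `f ∈ H^k(ℝ)`, witnessed by the family `d` of its weak derivatives (`d j` is the `j`-th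
weak derivative, `d 0 = f`, all in `L²`). -/
structure InSobolev (k : ℕ) (f : ℝ → ℂ) (d : ℕ → ℝ → ℂ) : Prop where
  d0 : d 0 = f
  wd : ∀ j < k, IsWeakDeriv (d j) (d (j + 1))
  l2 : ∀ j ≤ k, MemLp (d j) 2 volume

/-- The Sobolev norm `‖f‖_{H^k}` computed from the family of weak derivatives of `f`. -/
def sobNorm (k : ℕ) (d : ℕ → ℝ → ℂ) : ℝ :=
  Real.sqrt (∑ j ∈ Finset.range (k + 1), ((eLpNorm (d j) 2 volume).toReal) ^ 2)

/-- `dd` is the divided-difference functional of `g : ℂ → ℂ`, as a symmetric function of a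
multiset of base points: characterized by the value `g z` on singletons, the standard recursion
when two of the points differ, and the derivative formula at coinciding points. -/
def IsDivDiff (g : ℂ → ℂ) (dd : Multiset ℂ → ℂ) : Prop :=
  (∀ z : ℂ, dd {z} = g z) ∧
  (∀ (z₁ zn : ℂ) (s : Multiset ℂ), z₁ ≠ zn →
      dd (z₁ ::ₘ zn ::ₘ s) = (dd (zn ::ₘ s) - dd (z₁ ::ₘ s)) / (zn - z₁)) ∧
  (∀ n : ℕ, 1 ≤ n → ∀ z : ℂ,
      dd (Multiset.replicate n z) = iteratedDeriv (n - 1) g z / (Nat.factorial (n - 1)))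

/-- graphs on `S`: a set of edges `(a,b)`, `a < b`, with endpoints in `S`. -/
def GraphsOn (S : Finset ℕ) : Finset (Finset (ℕ × ℕ)) :=
  ((S ×ˢ S).filter fun p => p.1 < p.2).powerset

/-- Two edges cross if `a < c < b < d`. -/
def GraphCrossing (E : Finset (ℕ × ℕ)) : Prop :=
  ∃ e ∈ E, ∃ e' ∈ E, e.1 < e'.1 ∧ e'.1 < e.2 ∧ e.2 < e'.2

/-- The set `NCG(S)` of non-crossing graphs on vertex set `S`. -/
def NCG (S : Finset ℕ) : Finset (Finset (ℕ × ℕ)) :=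
  (GraphsOn S).filter fun E => ¬ GraphCrossing E

/-- The graph `E` is connected on the vertex set `S`. -/
def GraphConnected (S : Finset ℕ) (E : Finset (ℕ × ℕ)) : Prop :=
  ∀ x ∈ S, ∀ y ∈ S, Relation.ReflTransGen (fun a b => (a, b) ∈ E ∨ (b, a) ∈ E) x y

/-- The set `NCG_c(S)` of connected non-crossing graphs on vertex set `S`. -/
def NCGc (S : Finset ℕ) : Finset (Finset (ℕ × ℕ)) :=
  (NCG S).filter fun E => GraphConnected S E

/-- `q_{ab} = m_a m_b / (1 - m_a m_b)`. -/
def qq (m1 m2 : ℂ) : ℂ := m1 * m2 / (1 - m1 * m2)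


-- ## Section 1: matrix norm toolkit

lemma opNorm_nonneg' {N : ℕ} (A : Matrix (Fin N) (Fin N) ℂ) : 0 ≤ opNorm A := norm_nonneg _

lemma opNorm_mul_le' {N : ℕ} (A B : Matrix (Fin N) (Fin N) ℂ) :
    opNorm (A * B) ≤ opNorm A * opNorm B := by
  unfold opNorm
  rw [map_mul]
  exact norm_mul_le _ _

lemma opNorm_one_le {N : ℕ} : opNorm (1 : Matrix (Fin N) (Fin N) ℂ) ≤ 1 := by
  unfold opNorm
  rw [map_one]
  exact ContinuousLinearMap.norm_id_le

lemma euclidean_coord_le_norm {N : ℕ} (w : EuclideanSpace ℂ (Fin N)) (i : Fin N) :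
    ‖w i‖ ≤ ‖w‖ := by
  rw [EuclideanSpace.norm_eq]
  have h1 : ‖w i‖ ^ 2 ≤ ∑ l, ‖w l‖ ^ 2 :=
    Finset.single_le_sum (f := fun l => ‖w l‖ ^ 2) (fun l _ => sq_nonneg _) (Finset.mem_univ i)
  calc ‖w i‖ = Real.sqrt (‖w i‖ ^ 2) := by rw [Real.sqrt_sq (norm_nonneg _)]
  _ ≤ _ := Real.sqrt_le_sqrt h1

lemma entry_le_opNorm {N : ℕ} (A : Matrix (Fin N) (Fin N) ℂ) (i j : Fin N) :
    ‖A i j‖ ≤ opNorm A := by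
  have h : Matrix.toEuclideanCLM (𝕜 := ℂ) A ((WithLp.equiv 2 (Fin N → ℂ)).symm (Pi.single j 1))
      = WithLp.toLp 2 (A.mulVec (Pi.single j 1)) := Matrix.toEuclideanCLM_toLp (𝕜 := ℂ) A (Pi.single j 1)
  have hv : ‖(WithLp.equiv 2 (Fin N → ℂ)).symm (Pi.single j (1:ℂ))‖ = 1 := by
    rw [EuclideanSpace.norm_eq]
    have : ∀ l, ‖(WithLp.equiv 2 (Fin N → ℂ)).symm (Pi.single j (1:ℂ)) l‖ ^ 2
        = if l = j then 1 else 0 := by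
      intro l
      by_cases hl : l = j <;> simp [hl, Pi.single_apply]
    rw [Finset.sum_congr rfl fun l _ => this l]
    simp
  have hb := ContinuousLinearMap.le_opNorm
    (Matrix.toEuclideanCLM (𝕜 := ℂ) A) ((WithLp.equiv 2 (Fin N → ℂ)).symm (Pi.single j 1))
  rw [hv, mul_one, h] at hb
  refine le_trans ?_ hb
  refine le_trans ?_ (euclidean_coord_le_norm _ i)
  apply le_of_eq
  congr 1
  rw [WithLp.ofLp_toLp]
  simp [Matrix.toLin'_apply, Matrix.mulVec_single]

lemma ntr_le_opNorm {N : ℕ} (R : Matrix (Fin N) (Fin N) ℂ) : ‖ntr R‖ ≤ opNorm R := by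
  unfold ntr Matrix.trace
  rcases Nat.eq_zero_or_pos N with hN | hN
  · subst hN; simp [opNorm_nonneg']
  calc ‖((N:ℂ))⁻¹ * ∑ i, R.diag i‖ = (N:ℝ)⁻¹ * ‖∑ i, R.diag i‖ := by
        rw [norm_mul]
        congr 1
        rw [norm_inv]
        simp
  _ ≤ (N:ℝ)⁻¹ * ∑ i : Fin N, opNorm R := by
        gcongr
        refine le_trans (norm_sum_le _ _) ?_
        exact Finset.sum_le_sum fun i _ => entry_le_opNorm R i i
  _ = opNorm R := by
        rw [Finset.sum_const, Finset.card_univ, Fintype.card_fin, nsmul_eq_mul]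
        rw [← mul_assoc, inv_mul_cancel₀ (by positivity), one_mul]

lemma opNorm_list_prod_le {N : ℕ} (l : List (Matrix (Fin N) (Fin N) ℂ)) :
    opNorm l.prod ≤ (l.map opNorm).prod := by
  induction l with
  | nil => simpa using opNorm_one_le
  | cons a t ih =>
      simp only [List.prod_cons, List.map_cons]
      refine le_trans (opNorm_mul_le' _ _) ?_
      exact mul_le_mul_of_nonneg_left ih (opNorm_nonneg' a)

lemma opNorm_ordProd_le {N : ℕ} (B : Finset ℕ) (A : ℕ → Matrix (Fin N) (Fin N) ℂ) :
    opNorm (ordProd B A) ≤ ∏ j ∈ B, opNorm (A j) := by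
  refine le_trans (opNorm_list_prod_le _) (le_of_eq ?_)
  rw [List.map_map, Finset.prod_eq_multiset_prod, ← Finset.sort_eq B (· ≤ ·),
    Multiset.map_coe, Multiset.prod_coe]
  rfl


-- ## Section 2: partition toolkit

lemma isPartition_of_mem_NCP {S : Finset ℕ} {π : Finset (Finset ℕ)} (h : π ∈ NCP S) :
    IsPartition S π := by
  unfold NCP at h
  exact (Finset.mem_filter.mp h).2.1

lemma blocks_disjoint {S : Finset ℕ} {π : Finset (Finset ℕ)} (h : IsPartition S π)
    {B B' : Finset ℕ} (hB : B ∈ π) (hB' : B' ∈ π) (hne : B ≠ B') : Disjoint B B' := by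
  rw [Finset.disjoint_left]
  intro x hx hx'
  have hxS : x ∈ S := h.2.1 B hB hx
  obtain ⟨C, _, huniq⟩ := h.2.2 x hxS
  exact hne ((huniq B ⟨hB, hx⟩).trans (huniq B' ⟨hB', hx'⟩).symm)

lemma biUnion_blocks {S : Finset ℕ} {π : Finset (Finset ℕ)} (h : IsPartition S π) :
    π.biUnion (fun B => B) = S := by
  ext x
  simp only [Finset.mem_biUnion]
  constructor
  · rintro ⟨B, hB, hx⟩; exact h.2.1 B hB hx
  · intro hx
    obtain ⟨B, ⟨hB, hxB⟩, _⟩ := h.2.2 x hx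
    exact ⟨B, hB, hxB⟩

lemma prod_blocks {M : Type*} [CommMonoid M] {S : Finset ℕ} {π : Finset (Finset ℕ)}
    (h : IsPartition S π) (f : ℕ → M) :
    ∏ B ∈ π, ∏ j ∈ B, f j = ∏ j ∈ S, f j := by
  rw [← Finset.prod_biUnion, biUnion_blocks h]
  intro B hB B' hB' hne
  exact blocks_disjoint h hB hB' hne

lemma sum_card_blocks {S : Finset ℕ} {π : Finset (Finset ℕ)} (h : IsPartition S π) :
    ∑ B ∈ π, B.card = S.card := by
  rw [← Finset.card_biUnion, biUnion_blocks h]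
  intro B hB B' hB' hne
  exact blocks_disjoint h hB hB' hne

lemma card_blocks_le {S : Finset ℕ} {π : Finset (Finset ℕ)} (h : IsPartition S π) :
    π.card ≤ S.card := by
  rw [← sum_card_blocks h]
  calc π.card = ∑ _B ∈ π, 1 := by simp
  _ ≤ _ := Finset.sum_le_sum fun B hB => Finset.card_pos.mpr (h.1 B hB)

lemma top_mem_NCP {S : Finset ℕ} (hS : S.Nonempty) : {S} ∈ NCP S := by
  unfold NCP
  rw [Finset.mem_filter]
  refine ⟨?_, ⟨?_, ?_, ?_⟩, ?_⟩
  · simp [Finset.singleton_subset_iff]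
  · intro B hB; rw [Finset.mem_singleton] at hB; subst hB; exact hS
  · intro B hB; rw [Finset.mem_singleton] at hB; subst hB; exact Finset.Subset.refl _
  · intro x hx
    exact ⟨S, ⟨Finset.mem_singleton_self S, hx⟩, fun B hB => Finset.mem_singleton.mp hB.1⟩
  · rintro ⟨B, hB, B', hB', hne, -⟩
    rw [Finset.mem_singleton] at hB hB'
    exact hne (hB.trans hB'.symm)

lemma block_ne_top {S : Finset ℕ} {π : Finset (Finset ℕ)} (h : IsPartition S π)
    (hne : π ≠ {S}) {B : Finset ℕ} (hB : B ∈ π) : B ≠ S := by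
  intro hBS
  apply hne
  apply Finset.eq_singleton_iff_unique_mem.mpr
  refine ⟨hBS ▸ hB, fun B' hB' => ?_⟩
  by_contra hne'
  obtain ⟨x, hx⟩ := h.1 B' hB'
  have hxS : x ∈ S := h.2.1 B' hB' hx
  obtain ⟨C, -, huniq⟩ := h.2.2 x hxS
  exact hne' ((huniq B' ⟨hB', hx⟩).trans (huniq S ⟨hBS ▸ hB, hxS⟩).symm)

lemma card_NCP_le (S : Finset ℕ) : (NCP S).card ≤ 2 ^ (2 ^ S.card) := by
  calc (NCP S).card ≤ S.powerset.powerset.card := Finset.card_le_card (Finset.filter_subset _ _)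
  _ = 2 ^ (2 ^ S.card) := by rw [Finset.card_powerset, Finset.card_powerset]

lemma NCP_singleton (i : ℕ) : NCP {i} = {{{i}}} := by
  apply Finset.eq_singleton_iff_unique_mem.mpr
  constructor
  · exact top_mem_NCP ⟨i, Finset.mem_singleton_self i⟩
  · intro π hπ
    have hp := isPartition_of_mem_NCP hπ
    apply Finset.eq_singleton_iff_unique_mem.mpr
    constructor
    · obtain ⟨B, ⟨hB, hiB⟩, -⟩ := hp.2.2 i (Finset.mem_singleton_self i)
      have : B = {i} := Finset.Subset.antisymm (hp.2.1 B hB) (Finset.singleton_subset_iff.mpr hiB)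
      rwa [← this]
    · intro B hB
      exact Finset.Subset.antisymm (hp.2.1 B hB)
        (Finset.singleton_subset_iff.mpr (by
          obtain ⟨x, hx⟩ := hp.1 B hB
          have := hp.2.1 B hB hx
          rw [Finset.mem_singleton] at this
          rwa [← this]))

/-- unique block containing a given element -/
lemma filter_mem_eq_singleton {S : Finset ℕ} {π : Finset (Finset ℕ)} (h : IsPartition S π)
    {x : ℕ} (hx : x ∈ S) :
    ∃ B₀ ∈ π, x ∈ B₀ ∧ π.filter (fun B => x ∈ B) = {B₀} := by
  obtain ⟨B₀, ⟨hB₀, hxB₀⟩, huniq⟩ := h.2.2 x hx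
  refine ⟨B₀, hB₀, hxB₀, ?_⟩
  apply Finset.eq_singleton_iff_unique_mem.mpr
  constructor
  · exact Finset.mem_filter.mpr ⟨hB₀, hxB₀⟩
  · intro B hB
    rw [Finset.mem_filter] at hB
    exact huniq B hB


-- ## Section 3a: basic analytic facts

@[fun_prop]
lemma rhoSC_cont : Continuous rhoSC := by
  unfold rhoSC
  fun_prop

@[fun_prop]
lemma cont_rhoSC_C : Continuous fun x : ℝ => ((rhoSC x : ℝ) : ℂ) :=
  Complex.continuous_ofReal.comp rhoSC_cont

lemma rhoSC_nonneg (x : ℝ) : 0 ≤ rhoSC x := by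
  unfold rhoSC
  positivity

lemma rhoSC_le_invpi (x : ℝ) : rhoSC x ≤ Real.pi⁻¹ := by
  unfold rhoSC
  rw [div_le_iff₀ (by positivity)]
  have h1 : Real.sqrt (4 - x ^ 2) ≤ 2 := by
    rw [show (2:ℝ) = Real.sqrt 4 by rw [show (4:ℝ) = 2^2 by norm_num, Real.sqrt_sq]; norm_num]
    exact Real.sqrt_le_sqrt (by nlinarith [sq_nonneg x])
  calc Real.sqrt (4 - x^2) ≤ 2 := h1
  _ ≤ Real.pi⁻¹ * (2 * Real.pi) := by
      rw [← mul_assoc, mul_comm Real.pi⁻¹ 2, mul_assoc, inv_mul_cancel₀ Real.pi_ne_zero, mul_one]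
  _ = _ := rfl

lemma rhoSC_pos {x : ℝ} (h1 : -2 < x) (h2 : x < 2) : 0 < rhoSC x := by
  unfold rhoSC
  apply div_pos
  · apply Real.sqrt_pos.mpr
    nlinarith
  · positivity

lemma sub_ne_zero_of_im {z : ℂ} (hz : z.im ≠ 0) (x : ℝ) : (x : ℂ) - z ≠ 0 := by
  intro h
  apply hz
  have := congrArg Complex.im h
  simpa using this.symm

lemma abs_im_le_norm_sub (z : ℂ) (x : ℝ) : |z.im| ≤ ‖(x : ℂ) - z‖ := by
  have h := Complex.abs_im_le_norm ((x : ℂ) - z)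
  rw [Complex.sub_im, Complex.ofReal_im, zero_sub, abs_neg] at h
  exact h

lemma normSq_sub_pos {z : ℂ} (hz : z.im ≠ 0) (x : ℝ) : 0 < Complex.normSq ((x:ℂ) - z) :=
  Complex.normSq_pos.mpr (sub_ne_zero_of_im hz x)

/-- `J(z) = ∫ ρ(x)/|x-z|² dx`. -/
def Jint (z : ℂ) : ℝ := ∫ x in (-2:ℝ)..2, rhoSC x * (Complex.normSq ((x:ℂ) - z))⁻¹

lemma cont_inv_sub {z : ℂ} (hz : z.im ≠ 0) : Continuous fun x : ℝ => ((x:ℂ) - z)⁻¹ := by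
  apply Continuous.inv₀
  · fun_prop
  · exact fun x => sub_ne_zero_of_im hz x

lemma cont_nsqinv {z : ℂ} (hz : z.im ≠ 0) :
    Continuous fun x : ℝ => (Complex.normSq ((x:ℂ) - z))⁻¹ := by
  apply Continuous.inv₀
  · exact Complex.continuous_normSq.comp (by fun_prop)
  · exact fun x => ne_of_gt (normSq_sub_pos hz x)

lemma im_intervalIntegral (f : ℝ → ℂ) (hf : IntervalIntegrable f volume (-2) 2) :
    (∫ x in (-2:ℝ)..2, f x).im = ∫ x in (-2:ℝ)..2, (f x).im := by
  rw [intervalIntegral.integral_of_le (by norm_num : (-2:ℝ) ≤ 2),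
      intervalIntegral.integral_of_le (by norm_num : (-2:ℝ) ≤ 2)]
  exact (integral_im hf.1).symm

lemma mSC_eq_int_inv (z : ℂ) : mSC z = ∫ x in (-2:ℝ)..2, (rhoSC x : ℂ) * ((x:ℂ) - z)⁻¹ := by
  unfold mSC
  simp only [div_eq_mul_inv]

lemma mSC_im {z : ℂ} (hz : z.im ≠ 0) : (mSC z).im = z.im * Jint z := by
  rw [mSC_eq_int_inv]
  rw [im_intervalIntegral (fun x => (rhoSC x : ℂ) * ((x:ℂ) - z)⁻¹) (((cont_rhoSC_C.mul (cont_inv_sub hz))).intervalIntegrable _ _)]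
  unfold Jint
  rw [← intervalIntegral.integral_const_mul]
  congr 1
  funext x
  have him : (((x:ℂ) - z)⁻¹).im = z.im / Complex.normSq ((x:ℂ) - z) := by
    rw [Complex.inv_im, Complex.sub_im, Complex.ofReal_im, zero_sub, neg_neg]
  rw [Complex.mul_im, Complex.ofReal_re, Complex.ofReal_im, zero_mul, add_zero, him]
  field_simp

lemma Jint_pos {z : ℂ} (hz : z.im ≠ 0) : 0 < Jint z := by
  apply intervalIntegral.intervalIntegral_pos_of_pos_on
  · exact ((rhoSC_cont.mul (cont_nsqinv hz))).intervalIntegrable _ _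
  · intro x hx
    exact mul_pos (rhoSC_pos hx.1 hx.2) (inv_pos.mpr (normSq_sub_pos hz x))
  · norm_num

lemma Jint_nonneg {z : ℂ} (hz : z.im ≠ 0) : 0 ≤ Jint z := le_of_lt (Jint_pos hz)

lemma Jint_eq {z : ℂ} (hz : z.im ≠ 0) : Jint z = |(mSC z).im| / |z.im| := by
  rw [mSC_im hz, abs_mul, abs_of_nonneg (Jint_nonneg hz)]
  field_simp [abs_ne_zero.mpr hz]

lemma abs_im_mSC_pos {z : ℂ} (hz : z.im ≠ 0) : 0 < |(mSC z).im| := by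
  rw [mSC_im hz, abs_mul]
  exact mul_pos (abs_pos.mpr hz) (abs_pos.mpr (ne_of_gt (Jint_pos hz)))

lemma poisson_le (c η : ℝ) (hη : 0 < η) :
    ∫ x in (-2:ℝ)..2, η / ((x - c)^2 + η^2) ≤ Real.pi := by
  have key : ∫ x in (-2:ℝ)..2, η / ((x - c)^2 + η^2)
      = Real.arctan ((2 - c)/η) - Real.arctan ((-2 - c)/η) := by
    have h1 : ∀ x : ℝ, η / ((x - c)^2 + η^2) = η⁻¹ * (1 + ((x - c)/η)^2)⁻¹ := by
      intro x
      rw [div_pow]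
      field_simp
      ring
    rw [intervalIntegral.integral_congr (g := fun x => η⁻¹ * (1 + ((x-c)/η)^2)⁻¹)
      (fun x _ => h1 x)]
    rw [intervalIntegral.integral_const_mul]
    have h2 : (∫ x in (-2:ℝ)..2, (1 + ((x - c)/η)^2)⁻¹)
        = ∫ x in (-2-c:ℝ)..(2-c), (1 + (x/η)^2)⁻¹ := by
      exact intervalIntegral.integral_comp_sub_right (fun u => (1 + (u/η)^2)⁻¹) c
    rw [h2, intervalIntegral.integral_comp_div (fun u => (1 + u^2)⁻¹) (ne_of_gt hη),
      integral_inv_one_add_sq]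
    rw [smul_eq_mul, ← mul_assoc, inv_mul_cancel₀ (ne_of_gt hη), one_mul]
  rw [key]
  have a1 := Real.arctan_lt_pi_div_two ((2 - c)/η)
  have a2 := Real.neg_pi_div_two_lt_arctan ((-2 - c)/η)
  linarith

lemma abs_im_mSC_le_one {z : ℂ} (hz : z.im ≠ 0) : |(mSC z).im| ≤ 1 := by
  rw [mSC_im hz, abs_mul, abs_of_nonneg (Jint_nonneg hz)]
  have hη : 0 < |z.im| := abs_pos.mpr hz
  have key : |z.im| * Jint z ≤ Real.pi⁻¹ * ∫ x in (-2:ℝ)..2, |z.im| / ((x - z.re)^2 + z.im^2) := by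
    unfold Jint
    rw [← intervalIntegral.integral_const_mul, ← intervalIntegral.integral_const_mul]
    apply intervalIntegral.integral_mono_on (by norm_num)
    · exact (continuous_const.mul (rhoSC_cont.mul (cont_nsqinv hz))).intervalIntegrable _ _
    · apply Continuous.intervalIntegrable
      apply continuous_const.mul
      apply Continuous.div continuous_const (by fun_prop)
      intro x
      nlinarith [sq_nonneg (x - z.re), sq_abs z.im, hη]
    · intro x _
      have hnsq : Complex.normSq ((x:ℂ) - z) = (x - z.re)^2 + z.im^2 := by
        rw [Complex.normSq_apply, Complex.sub_re, Complex.sub_im, Complex.ofReal_re,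
          Complex.ofReal_im]
        ring
      rw [← mul_assoc, mul_comm |z.im| (rhoSC x), mul_assoc, hnsq]
      apply mul_le_mul_of_nonneg_right (rhoSC_le_invpi x)
      rw [← div_eq_mul_inv]
      positivity
  refine le_trans key ?_
  have h2 : ∀ x:ℝ, |z.im| / ((x - z.re)^2 + z.im^2) = |z.im| / ((x - z.re)^2 + |z.im|^2) := by
    intro x
    rw [sq_abs]
  rw [intervalIntegral.integral_congr (fun x _ => h2 x)]
  calc Real.pi⁻¹ * ∫ x in (-2:ℝ)..2, |z.im| / ((x - z.re)^2 + |z.im|^2)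
      ≤ Real.pi⁻¹ * Real.pi := by
        apply mul_le_mul_of_nonneg_left (poisson_le z.re |z.im| hη)
        positivity
  _ = 1 := inv_mul_cancel₀ Real.pi_ne_zero


-- ## Section 3b: derivatives of mSC

/-- `F n z = ∫ ρ(x) (x-z)⁻ⁿ dx`. -/
def Fint (n : ℕ) (z : ℂ) : ℂ := ∫ x in (-2:ℝ)..2, (rhoSC x : ℂ) * (((x:ℂ) - z)⁻¹) ^ n

lemma cont_Fint_integrand (n : ℕ) {z : ℂ} (hz : z.im ≠ 0) :
    Continuous fun x : ℝ => (rhoSC x : ℂ) * (((x:ℂ) - z)⁻¹) ^ n :=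
  cont_rhoSC_C.mul ((cont_inv_sub hz).pow n)

lemma ball_im_bound {z₀ : ℂ} (hz : z₀.im ≠ 0) {z : ℂ}
    (h : z ∈ Metric.ball z₀ (|z₀.im| / 2)) : |z₀.im| / 2 ≤ |z.im| := by
  have h1 : dist z z₀ < |z₀.im| / 2 := Metric.mem_ball.mp h
  have h2 : |z.im - z₀.im| ≤ dist z z₀ := by
    rw [Complex.dist_eq]
    have := Complex.abs_im_le_norm (z - z₀)
    rwa [Complex.sub_im] at this
  have := abs_sub_abs_le_abs_sub z₀.im z.im
  rw [abs_sub_comm z₀.im z.im] at this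
  linarith [abs_nonneg z₀.im]

lemma ball_im_ne {z₀ : ℂ} (hz : z₀.im ≠ 0) {z : ℂ}
    (h : z ∈ Metric.ball z₀ (|z₀.im| / 2)) : z.im ≠ 0 := by
  have := ball_im_bound hz h
  have h0 : 0 < |z₀.im| := abs_pos.mpr hz
  intro hzero
  rw [hzero] at this
  simp at this
  linarith

lemma hasDerivAt_inv_pow (n : ℕ) (t : ℝ) {z : ℂ} (hne : (t:ℂ) - z ≠ 0) :
    HasDerivAt (fun w : ℂ => (((t:ℂ) - w)⁻¹) ^ n)
      ((n:ℂ) * (((t:ℂ) - z)⁻¹) ^ (n + 1)) z := by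
  have hg : HasDerivAt (fun w : ℂ => (t:ℂ) - w) (-1) z := by
    simpa using (hasDerivAt_id' z).const_sub (t:ℂ)
  have hz := hasDerivAt_zpow (-(n:ℤ)) ((t:ℂ) - z) (Or.inl hne)
  have hcomp := HasDerivAt.comp z hz hg
  have heq : (fun w : ℂ => (((t:ℂ) - w)⁻¹) ^ n) = (fun w : ℂ => w ^ (-(n:ℤ))) ∘
      (fun w : ℂ => (t:ℂ) - w) := by
    funext w
    simp only [Function.comp_apply, zpow_neg, zpow_natCast, inv_pow]
  rw [heq]
  refine hcomp.congr_deriv ?_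
  have h3 : ((-(n:ℤ) : ℤ) : ℂ) * ((t:ℂ) - z) ^ (-(n:ℤ) - 1) * (-1)
      = (n:ℂ) * ((t:ℂ) - z) ^ (-((n:ℤ) + 1)) := by
    rw [show -(n:ℤ) - 1 = -((n:ℤ)+1) by ring]
    push_cast
    ring
  rw [h3]
  congr 1
  rw [zpow_neg, inv_pow]
  norm_cast

lemma hasDerivAt_Fint (n : ℕ) {z₀ : ℂ} (hz : z₀.im ≠ 0) :
    HasDerivAt (Fint n) ((n:ℂ) * Fint (n + 1) z₀) z₀ := by
  have hε : (0:ℝ) < |z₀.im| / 2 := by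
    have := abs_pos.mpr hz; linarith
  set ε := |z₀.im| / 2 with hεdef
  have key := intervalIntegral.hasDerivAt_integral_of_dominated_loc_of_deriv_le
    (F := fun z (t:ℝ) => (rhoSC t : ℂ) * (((t:ℂ) - z)⁻¹) ^ n)
    (F' := fun z (t:ℝ) => (rhoSC t : ℂ) * ((n:ℂ) * (((t:ℂ) - z)⁻¹) ^ (n+1)))
    (bound := fun _ => Real.pi⁻¹ * ((n:ℝ) * (2 / |z₀.im|) ^ (n+1)))
    (μ := volume) (a := (-2:ℝ)) (b := 2) (x₀ := z₀) (Metric.ball_mem_nhds z₀ hε)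
    ?_ ?_ ?_ ?_ ?_ ?_
  · obtain ⟨-, hd⟩ := key
    refine hd.congr_deriv ?_
    unfold Fint
    rw [← intervalIntegral.integral_const_mul]
    congr 1
    funext t
    ring
  · filter_upwards [Metric.ball_mem_nhds z₀ hε] with z hzb
    exact (cont_Fint_integrand n (ball_im_ne hz hzb)).aestronglyMeasurable.restrict
  · exact (cont_Fint_integrand n hz).intervalIntegrable _ _
  · exact ((cont_rhoSC_C.mul (continuous_const.mul
      ((cont_inv_sub hz).pow (n+1)))).aestronglyMeasurable).restrict
  · apply MeasureTheory.ae_of_all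
    intro t _ x hx
    have him := ball_im_bound hz hx
    have hxim : x.im ≠ 0 := ball_im_ne hz hx
    rw [norm_mul, norm_mul, norm_pow, Complex.norm_natCast]
    have h1 : ‖((rhoSC t : ℝ) : ℂ)‖ ≤ Real.pi⁻¹ := by
      rw [Complex.norm_real, Real.norm_eq_abs, abs_of_nonneg (rhoSC_nonneg t)]
      exact rhoSC_le_invpi t
    have h2 : ‖((t:ℂ) - x)⁻¹‖ ≤ 2 / |z₀.im| := by
      rw [norm_inv]
      rw [div_eq_mul_inv, show (2:ℝ) * |z₀.im|⁻¹ = (|z₀.im|/2)⁻¹ from by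
        rw [div_eq_mul_inv, mul_inv, inv_inv]
        ring]
      apply inv_anti₀ hε
      exact le_trans him (abs_im_le_norm_sub x t)
    have hnn : (0:ℝ) ≤ ‖((t:ℂ) - x)⁻¹‖ := norm_nonneg _
    have hb2 : ‖((t:ℂ) - x)⁻¹‖ ^ (n+1) ≤ (2 / |z₀.im|) ^ (n+1) := pow_le_pow_left₀ hnn h2 _
    exact mul_le_mul h1 (mul_le_mul_of_nonneg_left hb2 (Nat.cast_nonneg n))
      (by positivity) (by positivity)
  · apply intervalIntegrable_const
  · apply MeasureTheory.ae_of_all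
    intro t _ x hx
    have hne : (t:ℂ) - x ≠ 0 := sub_ne_zero_of_im (ball_im_ne hz hx) t
    exact (hasDerivAt_inv_pow n t hne).const_mul _

lemma isOpen_im_ne : IsOpen {w : ℂ | w.im ≠ 0} := by
  have : {w : ℂ | w.im ≠ 0} = Complex.im ⁻¹' ({0}ᶜ) := rfl
  rw [this]
  exact Complex.continuous_im.isOpen_preimage _ (isOpen_compl_singleton)

lemma iteratedDeriv_mSC (n : ℕ) {z : ℂ} (hz : z.im ≠ 0) :
    iteratedDeriv n mSC z = (Nat.factorial n : ℂ) * Fint (n + 1) z := by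
  induction n generalizing z with
  | zero =>
      rw [iteratedDeriv_zero, mSC_eq_int_inv]
      unfold Fint
      norm_num
  | succ n ih =>
      rw [iteratedDeriv_succ]
      have hev : iteratedDeriv n mSC =ᶠ[nhds z]
          fun w => (Nat.factorial n : ℂ) * Fint (n + 1) w := by
        filter_upwards [isOpen_im_ne.mem_nhds hz] with w hw
        exact ih hw
      rw [hev.deriv_eq]
      have hd : HasDerivAt (fun w => (Nat.factorial n : ℂ) * Fint (n + 1) w)
          ((Nat.factorial n : ℂ) * (((n:ℕ)+1 : ℂ) * Fint (n + 2) z)) z := by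
        have := (hasDerivAt_Fint (n+1) hz).const_mul (Nat.factorial n : ℂ)
        refine this.congr_deriv ?_
        push_cast
        ring
      rw [hd.deriv]
      rw [Nat.factorial_succ]
      push_cast
      ring


-- ## Section 3c: integral representation of divided differences

/-- `∏_{z ∈ s} (x - z)⁻¹`. -/
def pfun (s : Multiset ℂ) (x : ℝ) : ℂ := (s.map fun z => ((x:ℂ) - z)⁻¹).prod

/-- `∫ ρ(x) ∏_{z ∈ s} (x-z)⁻¹ dx`. -/
def Dfun (s : Multiset ℂ) : ℂ := ∫ x in (-2:ℝ)..2, (rhoSC x : ℂ) * pfun s x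

lemma pfun_zero (x : ℝ) : pfun 0 x = 1 := by simp [pfun]

lemma pfun_cons (z : ℂ) (s : Multiset ℂ) (x : ℝ) :
    pfun (z ::ₘ s) x = ((x:ℂ) - z)⁻¹ * pfun s x := by
  simp [pfun]

lemma cont_pfun {s : Multiset ℂ} (hs : ∀ z ∈ s, z.im ≠ 0) : Continuous (pfun s) := by
  induction s using Multiset.induction_on with
  | empty => simpa [funext (pfun_zero)] using continuous_const
  | cons z t ih =>
      have h1 : Continuous fun x : ℝ => ((x:ℂ) - z)⁻¹ :=
        cont_inv_sub (hs z (Multiset.mem_cons_self z t))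
      have h2 := ih (fun w hw => hs w (Multiset.mem_cons_of_mem hw))
      have : pfun (z ::ₘ t) = fun x : ℝ => ((x:ℂ) - z)⁻¹ * pfun t x := funext (pfun_cons z t)
      rw [this]
      exact h1.mul h2

lemma cont_Dfun_integrand {s : Multiset ℂ} (hs : ∀ z ∈ s, z.im ≠ 0) :
    Continuous fun x : ℝ => (rhoSC x : ℂ) * pfun s x :=
  cont_rhoSC_C.mul (cont_pfun hs)

lemma Dfun_replicate (n : ℕ) (z : ℂ) : Dfun (Multiset.replicate n z) = Fint n z := by
  unfold Dfun Fint
  congr 1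
  funext x
  congr 1
  unfold pfun
  rw [Multiset.map_replicate, Multiset.prod_replicate]

lemma Dfun_step {z₁ z₂ : ℂ} (t : Multiset ℂ) (h1 : z₁.im ≠ 0) (h2 : z₂.im ≠ 0)
    (ht : ∀ z ∈ t, z.im ≠ 0) (hne : z₁ ≠ z₂) :
    Dfun (z₁ ::ₘ z₂ ::ₘ t) = (Dfun (z₂ ::ₘ t) - Dfun (z₁ ::ₘ t)) / (z₂ - z₁) := by
  have hz : z₂ - z₁ ≠ 0 := sub_ne_zero_of_ne (Ne.symm hne)
  rw [eq_div_iff hz]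
  have ht1 : ∀ z ∈ z₁ ::ₘ t, z.im ≠ 0 := by
    intro w hw
    rcases Multiset.mem_cons.mp hw with h | h
    · rwa [h]
    · exact ht w h
  have ht2 : ∀ z ∈ z₂ ::ₘ t, z.im ≠ 0 := by
    intro w hw
    rcases Multiset.mem_cons.mp hw with h | h
    · rwa [h]
    · exact ht w h
  unfold Dfun
  rw [← intervalIntegral.integral_mul_const, ← intervalIntegral.integral_sub
    ((cont_Dfun_integrand ht2).intervalIntegrable _ _)
    ((cont_Dfun_integrand ht1).intervalIntegrable _ _)]
  apply intervalIntegral.integral_congr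
  intro x _
  simp only [pfun_cons]
  have hxa : (x:ℂ) - z₁ ≠ 0 := sub_ne_zero_of_im h1 x
  have hxb : (x:ℂ) - z₂ ≠ 0 := sub_ne_zero_of_im h2 x
  field_simp
  ring

lemma dd_eq_Dfun {dd : Multiset ℂ → ℂ} (hdd : IsDivDiff mSC dd) :
    ∀ s : Multiset ℂ, s ≠ 0 → (∀ z ∈ s, z.im ≠ 0) → dd s = Dfun s := by
  intro s
  induction s using Multiset.strongInductionOn with
  | ih s IH =>
    intro hs0 hsim
    by_cases hsplit : ∃ a ∈ s, ∃ b ∈ s, a ≠ b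
    · obtain ⟨a, ha, b, hb, hab⟩ := hsplit
      have hbe : b ∈ s.erase a := Multiset.mem_erase_of_ne (Ne.symm hab) |>.mpr hb
      set t := (s.erase a).erase b with htdef
      have hs_eq : s = a ::ₘ b ::ₘ t := by
        rw [htdef, Multiset.cons_erase hbe, Multiset.cons_erase ha]
      have haim : a.im ≠ 0 := hsim a ha
      have hbim : b.im ≠ 0 := hsim b hb
      have htim : ∀ z ∈ t, z.im ≠ 0 := by
        intro w hw
        apply hsim
        rw [hs_eq]
        exact Multiset.mem_cons_of_mem (Multiset.mem_cons_of_mem hw)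
      have hbt_lt : b ::ₘ t < s := by
        rw [htdef, Multiset.cons_erase hbe]
        exact Multiset.erase_lt.mpr ha
      have hat_lt : a ::ₘ t < s := by
        have hae : a ∈ s.erase b := Multiset.mem_erase_of_ne hab |>.mpr ha
        have : a ::ₘ t = s.erase b := by
          rw [htdef, Multiset.erase_comm, Multiset.cons_erase hae]
        rw [this]
        exact Multiset.erase_lt.mpr hb
      have hIH1 : dd (b ::ₘ t) = Dfun (b ::ₘ t) := by
        apply IH _ hbt_lt (Multiset.cons_ne_zero)
        intro w hw
        rcases Multiset.mem_cons.mp hw with h | h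
        · rwa [h]
        · exact htim w h
      have hIH2 : dd (a ::ₘ t) = Dfun (a ::ₘ t) := by
        apply IH _ hat_lt (Multiset.cons_ne_zero)
        intro w hw
        rcases Multiset.mem_cons.mp hw with h | h
        · rwa [h]
        · exact htim w h
      rw [hs_eq, hdd.2.1 a b t hab, hIH1, hIH2, Dfun_step t haim hbim htim hab]
    · push_neg at hsplit
      obtain ⟨a, ha⟩ := Multiset.exists_mem_of_ne_zero hs0
      have hrep : s = Multiset.replicate (Multiset.card s) a := by
        apply Multiset.eq_replicate_card.mpr
        intro b hb
        by_contra hne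
        exact hne (hsplit b hb a ha)
      have hn1 : 1 ≤ Multiset.card s := by
        rw [Nat.one_le_iff_ne_zero]
        simpa using hs0
      have := hdd.2.2 (Multiset.card s) hn1 a
      rw [hrep, this, Dfun_replicate]
      rw [iteratedDeriv_mSC (Multiset.card s - 1) (hsim a ha)]
      rw [Nat.sub_add_cancel hn1]
      rw [mul_comm, mul_div_assoc]
      rw [div_self (by exact_mod_cast Nat.factorial_ne_zero _), mul_one]

-- ## Section 3d: bounds

lemma norm_pfun_le {η : ℝ} (hη : 0 < η) (x : ℝ) :
    ∀ (t : Multiset ℂ), (∀ z ∈ t, η ≤ |z.im|) →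
      ‖pfun t x‖ ≤ η⁻¹ ^ Multiset.card t := by
  intro t
  induction t using Multiset.induction_on with
  | empty => intro _; simp [pfun_zero]
  | cons z t ih =>
      intro hmem
      rw [pfun_cons, norm_mul]
      have h1 : ‖((x:ℂ) - z)⁻¹‖ ≤ η⁻¹ := by
        rw [norm_inv]
        apply inv_anti₀ hη
        exact le_trans (hmem z (Multiset.mem_cons_self z t)) (abs_im_le_norm_sub z x)
      have h2 := ih (fun w hw => hmem w (Multiset.mem_cons_of_mem hw))
      rw [Multiset.card_cons, pow_succ]
      rw [mul_comm (η⁻¹ ^ Multiset.card t) η⁻¹]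
      exact mul_le_mul h1 h2 (norm_nonneg _) (by positivity)

lemma Jint_le {z : ℂ} (hz : z.im ≠ 0) {η E : ℝ} (hη : 0 < η) (hηz : η ≤ |z.im|)
    (hE : |(mSC z).im| ≤ E) : Jint z ≤ E / η := by
  rw [Jint_eq hz]
  exact div_le_div₀ (le_trans (abs_nonneg _) hE) hE hη hηz

lemma int_rho_le_two : ∫ x in (-2:ℝ)..2, rhoSC x ≤ 2 := by
  have h1 : ∫ x in (-2:ℝ)..2, rhoSC x ≤ ∫ _x in (-2:ℝ)..2, Real.pi⁻¹ := by
    apply intervalIntegral.integral_mono_on (by norm_num)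
      (rhoSC_cont.intervalIntegrable _ _) (intervalIntegrable_const)
    intro x _
    exact rhoSC_le_invpi x
  rw [intervalIntegral.integral_const, smul_eq_mul] at h1
  have hpi : (2 - (-2:ℝ)) * Real.pi⁻¹ ≤ 2 := by
    rw [show (2:ℝ) - (-2) = 4 by norm_num]
    rw [mul_inv_le_iff₀ Real.pi_pos]
    nlinarith [Real.pi_gt_three]
  linarith

lemma Dfun_cons_bound {a b : ℂ} {t : Multiset ℂ} {η E : ℝ} (hη : 0 < η)
    (ha : a.im ≠ 0) (hηa : η ≤ |a.im|) (hEa : |(mSC a).im| ≤ E)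
    (hb : b.im ≠ 0) (hηb : η ≤ |b.im|) (hEb : |(mSC b).im| ≤ E)
    (ht : ∀ z ∈ t, z.im ≠ 0 ∧ η ≤ |z.im|) :
    ‖Dfun (a ::ₘ b ::ₘ t)‖ ≤ η⁻¹ ^ Multiset.card t * (E / η) := by
  have htim : ∀ z ∈ t, z.im ≠ 0 := fun z hz => (ht z hz).1
  have hsim : ∀ z ∈ a ::ₘ b ::ₘ t, z.im ≠ 0 := by
    intro w hw
    rcases Multiset.mem_cons.mp hw with h | hw2
    · rwa [h]
    rcases Multiset.mem_cons.mp hw2 with h | h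
    · rwa [h]
    · exact htim w h
  have hE0 : 0 ≤ E := le_trans (abs_nonneg _) hEa
  have key : ∀ x : ℝ, ‖(rhoSC x : ℂ) * pfun (a ::ₘ b ::ₘ t) x‖
      ≤ η⁻¹ ^ Multiset.card t * ((1:ℝ)/2 *
        (rhoSC x * (Complex.normSq ((x:ℂ) - a))⁻¹ + rhoSC x * (Complex.normSq ((x:ℂ) - b))⁻¹)) := by
    intro x
    rw [norm_mul, pfun_cons, pfun_cons, norm_mul, norm_mul]
    have hrx : ‖((rhoSC x:ℝ):ℂ)‖ = rhoSC x := by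
      rw [Complex.norm_real, Real.norm_eq_abs, abs_of_nonneg (rhoSC_nonneg x)]
    rw [hrx]
    have hpt := norm_pfun_le hη x t (fun z hz => (ht z hz).2)
    have hu : ‖((x:ℂ) - a)⁻¹‖ * ‖((x:ℂ) - b)⁻¹‖
        ≤ (1:ℝ)/2 * ((Complex.normSq ((x:ℂ) - a))⁻¹ + (Complex.normSq ((x:ℂ) - b))⁻¹) := by
      have hua : (‖((x:ℂ) - a)⁻¹‖)^2 = (Complex.normSq ((x:ℂ) - a))⁻¹ := by
        rw [norm_inv, ← Complex.sq_norm, inv_pow]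
      have hub : (‖((x:ℂ) - b)⁻¹‖)^2 = (Complex.normSq ((x:ℂ) - b))⁻¹ := by
        rw [norm_inv, ← Complex.sq_norm, inv_pow]
      nlinarith [sq_nonneg (‖((x:ℂ) - a)⁻¹‖ - ‖((x:ℂ) - b)⁻¹‖), norm_nonneg ((x:ℂ) - a)⁻¹,
        norm_nonneg ((x:ℂ) - b)⁻¹]
    calc rhoSC x * (‖((x:ℂ) - a)⁻¹‖ * (‖((x:ℂ) - b)⁻¹‖ * ‖pfun t x‖))
        = (rhoSC x * (‖((x:ℂ) - a)⁻¹‖ * ‖((x:ℂ) - b)⁻¹‖)) * ‖pfun t x‖ := by ring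
      _ ≤ (rhoSC x * ((1:ℝ)/2 * ((Complex.normSq ((x:ℂ) - a))⁻¹ +
            (Complex.normSq ((x:ℂ) - b))⁻¹))) * (η⁻¹ ^ Multiset.card t) := by
          apply mul_le_mul _ hpt (norm_nonneg _) (mul_nonneg (rhoSC_nonneg x)
            (mul_nonneg (by norm_num) (add_nonneg (inv_nonneg.mpr (Complex.normSq_nonneg _))
              (inv_nonneg.mpr (Complex.normSq_nonneg _)))))
          exact mul_le_mul_of_nonneg_left hu (rhoSC_nonneg x)
      _ = η⁻¹ ^ Multiset.card t * ((1:ℝ)/2 *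
          (rhoSC x * (Complex.normSq ((x:ℂ) - a))⁻¹ + rhoSC x * (Complex.normSq ((x:ℂ) - b))⁻¹)) := by
          ring
  calc ‖Dfun (a ::ₘ b ::ₘ t)‖
      ≤ ∫ x in (-2:ℝ)..2, ‖(rhoSC x : ℂ) * pfun (a ::ₘ b ::ₘ t) x‖ :=
        intervalIntegral.norm_integral_le_integral_norm (by norm_num)
    _ ≤ ∫ x in (-2:ℝ)..2, η⁻¹ ^ Multiset.card t * ((1:ℝ)/2 *
          (rhoSC x * (Complex.normSq ((x:ℂ) - a))⁻¹ + rhoSC x * (Complex.normSq ((x:ℂ) - b))⁻¹)) := by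
        apply intervalIntegral.integral_mono_on (by norm_num)
        · exact ((cont_Dfun_integrand hsim).norm).intervalIntegrable _ _
        · apply Continuous.intervalIntegrable
          apply continuous_const.mul
          apply continuous_const.mul
          exact (rhoSC_cont.mul (cont_nsqinv ha)).add (rhoSC_cont.mul (cont_nsqinv hb))
        · intro x _
          exact key x
    _ = η⁻¹ ^ Multiset.card t * ((1:ℝ)/2 * (Jint a + Jint b)) := by
        rw [intervalIntegral.integral_const_mul, intervalIntegral.integral_const_mul]
        congr 1
        congr 1
        rw [intervalIntegral.integral_add (f := fun x => rhoSC x * (Complex.normSq ((x:ℂ) - a))⁻¹)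
          (g := fun x => rhoSC x * (Complex.normSq ((x:ℂ) - b))⁻¹)
          ((rhoSC_cont.mul (cont_nsqinv ha)).intervalIntegrable _ _)
          ((rhoSC_cont.mul (cont_nsqinv hb)).intervalIntegrable _ _)]
        rfl
    _ ≤ η⁻¹ ^ Multiset.card t * ((1:ℝ)/2 * (E/η + E/η)) := by
        apply mul_le_mul_of_nonneg_left _ (by positivity)
        apply mul_le_mul_of_nonneg_left _ (by norm_num)
        exact add_le_add (Jint_le ha hη hηa hEa) (Jint_le hb hη hηb hEb)
    _ = η⁻¹ ^ Multiset.card t * (E / η) := by ring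

lemma mSC_singleton_bound {z : ℂ} (hz : z.im ≠ 0) {η E : ℝ} (hη : 0 < η)
    (hηz : η ≤ |z.im|) (hE : |(mSC z).im| ≤ E) (hEpos : 0 < E) :
    ‖mSC z‖ ≤ (3/2) * Real.sqrt (E / η) := by
  set s := Real.sqrt (E / η) with hsdef
  have hspos : 0 < s := Real.sqrt_pos.mpr (div_pos hEpos hη)
  have hs2 : s ^ 2 = E / η := Real.sq_sqrt (le_of_lt (div_pos hEpos hη))
  have key : ∀ x : ℝ, ‖(rhoSC x : ℂ) * ((x:ℂ) - z)⁻¹‖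
      ≤ (1:ℝ)/2 * (s * rhoSC x + s⁻¹ * (rhoSC x * (Complex.normSq ((x:ℂ) - z))⁻¹)) := by
    intro x
    rw [norm_mul]
    have hrx : ‖((rhoSC x:ℝ):ℂ)‖ = rhoSC x := by
      rw [Complex.norm_real, Real.norm_eq_abs, abs_of_nonneg (rhoSC_nonneg x)]
    rw [hrx]
    have hu2 : (‖((x:ℂ) - z)⁻¹‖)^2 = (Complex.normSq ((x:ℂ) - z))⁻¹ := by
      rw [norm_inv, ← Complex.sq_norm, inv_pow]
    have hamgm : ‖((x:ℂ) - z)⁻¹‖ ≤ (1:ℝ)/2 * (s + s⁻¹ * (Complex.normSq ((x:ℂ) - z))⁻¹) := by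
      rw [← hu2]
      have h0 := sq_nonneg (s - ‖((x:ℂ) - z)⁻¹‖)
      have hsinv : s⁻¹ * s = 1 := inv_mul_cancel₀ (ne_of_gt hspos)
      rw [div_mul_eq_mul_div, le_div_iff₀ (by norm_num : (0:ℝ) < 2)]
      have expand : s⁻¹ * ‖((x:ℂ) - z)⁻¹‖^2 = s⁻¹ * ‖((x:ℂ) - z)⁻¹‖^2 := rfl
      nlinarith [mul_pos hspos hspos, inv_pos.mpr hspos, sq_nonneg (s - ‖((x:ℂ) - z)⁻¹‖),
        mul_nonneg (le_of_lt (inv_pos.mpr hspos)) (sq_nonneg (s - ‖((x:ℂ) - z)⁻¹‖))]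
    calc rhoSC x * ‖((x:ℂ) - z)⁻¹‖
        ≤ rhoSC x * ((1:ℝ)/2 * (s + s⁻¹ * (Complex.normSq ((x:ℂ) - z))⁻¹)) :=
          mul_le_mul_of_nonneg_left hamgm (rhoSC_nonneg x)
      _ = (1:ℝ)/2 * (s * rhoSC x + s⁻¹ * (rhoSC x * (Complex.normSq ((x:ℂ) - z))⁻¹)) := by ring
  calc ‖mSC z‖ = ‖∫ x in (-2:ℝ)..2, (rhoSC x : ℂ) * ((x:ℂ) - z)⁻¹‖ := by rw [mSC_eq_int_inv]
    _ ≤ ∫ x in (-2:ℝ)..2, ‖(rhoSC x : ℂ) * ((x:ℂ) - z)⁻¹‖ :=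
        intervalIntegral.norm_integral_le_integral_norm (by norm_num)
    _ ≤ ∫ x in (-2:ℝ)..2, (1:ℝ)/2 * (s * rhoSC x + s⁻¹ * (rhoSC x * (Complex.normSq ((x:ℂ) - z))⁻¹)) := by
        apply intervalIntegral.integral_mono_on (by norm_num)
        · exact ((cont_rhoSC_C.mul (cont_inv_sub hz)).norm).intervalIntegrable _ _
        · apply Continuous.intervalIntegrable
          apply continuous_const.mul
          exact (continuous_const.mul rhoSC_cont).add
            (continuous_const.mul (rhoSC_cont.mul (cont_nsqinv hz)))
        · intro x _
          exact key x
    _ = (1:ℝ)/2 * (s * (∫ x in (-2:ℝ)..2, rhoSC x) + s⁻¹ * Jint z) := by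
        rw [intervalIntegral.integral_const_mul]
        congr 1
        rw [intervalIntegral.integral_add (f := fun x => s * rhoSC x)
          (g := fun x => s⁻¹ * (rhoSC x * (Complex.normSq ((x:ℂ) - z))⁻¹))
          ((continuous_const.mul rhoSC_cont).intervalIntegrable _ _)
          ((continuous_const.mul (rhoSC_cont.mul (cont_nsqinv hz))).intervalIntegrable _ _)]
        rw [intervalIntegral.integral_const_mul, intervalIntegral.integral_const_mul]
        rfl
    _ ≤ (1:ℝ)/2 * (s * 2 + s⁻¹ * (E/η)) := by
        apply mul_le_mul_of_nonneg_left _ (by norm_num)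
        apply add_le_add
        · exact mul_le_mul_of_nonneg_left int_rho_le_two (le_of_lt hspos)
        · exact mul_le_mul_of_nonneg_left (Jint_le hz hη hηz hE) (le_of_lt (inv_pos.mpr hspos))
    _ = (3/2) * s := by
        have : s⁻¹ * (E/η) = s := by
          rw [← hs2]
          field_simp
        rw [this]
        ring


-- ## Section 4: bound function and product lemma

/-- The basic bound for divided differences / free cumulants. -/
def gbd (E η : ℝ) (n : ℕ) : ℝ := if n = 1 then (3/2) * Real.sqrt (E/η) else E / η^(n-1)

lemma gbd_nonneg {E η : ℝ} (hE : 0 ≤ E) (hη : 0 < η) (n : ℕ) : 0 ≤ gbd E η n := by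
  unfold gbd
  split <;> positivity

lemma gbd_sq (E η : ℝ) (hE : 0 ≤ E) (hη : 0 < η) (n : ℕ) :
    (gbd E η n)^2 = if n = 1 then (9/4) * (E/η) else E^2 / η^(2*n-2) := by
  unfold gbd
  split
  · rw [mul_pow, Real.sq_sqrt (by positivity)]
    norm_num
  · rw [div_pow, ← pow_mul]
    congr 2
    omega

lemma prod_gbd_le {E η : ℝ} (hEpos : 0 < E) (hE1 : E ≤ 1) (hηpos : 0 < η) (hη1 : η ≤ 1)
    {S : Finset ℕ} {π : Finset (Finset ℕ)} (hp : IsPartition S π) (hn : 2 ≤ S.card) :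
    ∏ B ∈ π, gbd E η B.card ≤ 3 ^ S.card * (E / η ^ (S.card - 1)) := by
  set n := S.card with hndef
  have hE0 : (0:ℝ) ≤ E := le_of_lt hEpos
  have hprodnn : 0 ≤ ∏ B ∈ π, gbd E η B.card :=
    Finset.prod_nonneg fun B _ => gbd_nonneg hE0 hηpos _
  have hsum : ∑ B ∈ π, B.card = n := sum_card_blocks hp
  -- define e
  set e : ℕ → ℕ := fun m => min m 2 with hedef
  have factor_bound : ∀ B ∈ π, (gbd E η B.card)^2 * η^(2*B.card)
      ≤ (9/4) * (E*η)^(e B.card) := by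
    intro B hB
    have hcard1 : 1 ≤ B.card := Finset.card_pos.mpr (hp.1 B hB)
    rw [gbd_sq E η hE0 hηpos]
    by_cases h1 : B.card = 1
    · rw [if_pos h1, h1]
      simp only [hedef]
      norm_num
      apply le_of_eq
      field_simp
    · rw [if_neg h1]
      have h2 : 2 ≤ B.card := by omega
      have he2 : e B.card = 2 := by simp only [hedef]; omega
      rw [he2]
      have hkey : E^2 / η^(2*B.card-2) * η^(2*B.card) = E^2 * η^2 := by
        rw [div_mul_eq_mul_div, ← pow_sub_mul_pow η (show 2*B.card-2 ≤ 2*B.card by omega)]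
        rw [show 2*B.card - (2*B.card - 2) = 2 by omega]
        rw [mul_comm (η^2) (η^(2*B.card-2)), mul_div_assoc, mul_comm (η^(2*B.card-2)) (η^2),
          mul_div_assoc, div_self (by positivity), mul_one]
      rw [hkey, mul_pow]
      nlinarith [sq_nonneg E, sq_nonneg η, mul_pos hEpos hηpos, sq_nonneg (E*η)]
  -- sum of e over blocks is at least 2
  have ht2 : 2 ≤ ∑ B ∈ π, e B.card := by
    by_cases hbig : ∃ B ∈ π, 2 ≤ B.card
    · obtain ⟨B, hB, h2⟩ := hbig
      have : e B.card = 2 := by simp only [hedef]; omega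
      calc (2:ℕ) = e B.card := this.symm
      _ ≤ _ := Finset.single_le_sum (f := fun B => e B.card) (fun _ _ => Nat.zero_le _) hB
    · push_neg at hbig
      have hall : ∀ B ∈ π, e B.card = B.card := by
        intro B hB
        have := hbig B hB
        simp only [hedef]
        omega
      rw [Finset.sum_congr rfl hall, hsum]
      exact hn
  -- product inequality via squares
  obtain ⟨mm, hmm⟩ : ∃ mm, n = mm + 2 := ⟨n - 2, by omega⟩
  have sq_ineq : (∏ B ∈ π, gbd E η B.card)^2 * η^(2*n)
      ≤ (9/4)^π.card * (E*η)^(∑ B ∈ π, e B.card) := by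
    have hh : (∏ B ∈ π, gbd E η B.card)^2 * η^(2*n)
        = ∏ B ∈ π, ((gbd E η B.card)^2 * η^(2*B.card)) := by
      rw [Finset.prod_mul_distrib, ← Finset.prod_pow, Finset.prod_pow_eq_pow_sum,
        ← Finset.mul_sum, hsum]
    rw [hh]
    have := Finset.prod_le_prod (s := π)
      (f := fun B => (gbd E η B.card)^2 * η^(2*B.card))
      (g := fun B => (9/4) * (E*η)^(e B.card))
      (fun B _ => by positivity) factor_bound
    refine le_trans this (le_of_eq ?_)
    rw [Finset.prod_mul_distrib, Finset.prod_const, Finset.prod_pow_eq_pow_sum]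
  have step2 : (9/4:ℝ)^π.card * (E*η)^(∑ B ∈ π, e B.card) ≤ 9^n * (E*η)^2 := by
    have hEη0 : (0:ℝ) ≤ E*η := by positivity
    have hEη1 : E*η ≤ 1 := mul_le_one₀ hE1 (le_of_lt hηpos) hη1
    apply mul_le_mul
    · calc ((9:ℝ)/4)^π.card ≤ 9^π.card :=
          pow_le_pow_left₀ (by norm_num) (by norm_num) _
      _ ≤ 9^n := pow_le_pow_right₀ (by norm_num) (le_trans (card_blocks_le hp) (le_refl _))
    · exact pow_le_pow_of_le_one hEη0 hEη1 ht2
    · positivity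
    · positivity
  have ha2 : (∏ B ∈ π, gbd E η B.card)^2 * η^(2*n) ≤ 9^n * (E*η)^2 :=
    le_trans sq_ineq step2
  have hb : (0:ℝ) ≤ 3 ^ n * (E / η ^ (n - 1)) := by positivity
  have hbsq : (3 ^ n * (E / η ^ (n - 1)))^2 * η^(2*n) = 9^n * (E*η)^2 := by
    rw [hmm, show mm + 2 - 1 = mm + 1 by omega]
    have h9 : (9:ℝ) = 3^2 := by norm_num
    rw [h9, ← pow_mul, mul_comm 2 (mm+2), pow_mul]
    field_simp
    ring
  have hfin : (∏ B ∈ π, gbd E η B.card)^2 ≤ (3 ^ n * (E / η ^ (n - 1)))^2 := by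
    have hηn : (0:ℝ) < η^(2*n) := by positivity
    rw [← hbsq] at ha2
    exact le_of_mul_le_mul_right ha2 hηn
  calc ∏ B ∈ π, gbd E η B.card
      = Real.sqrt ((∏ B ∈ π, gbd E η B.card)^2) := (Real.sqrt_sq hprodnn).symm
    _ ≤ Real.sqrt ((3 ^ n * (E / η ^ (n - 1)))^2) := Real.sqrt_le_sqrt hfin
    _ = 3 ^ n * (E / η ^ (n - 1)) := Real.sqrt_sq hb


-- ## Section 5: fmin/fmax helpers and the free cumulant bound

lemma Icc_nonempty_of_le {k : ℕ} (h : 1 ≤ k) : (Finset.Icc 1 k).Nonempty :=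
  ⟨1, Finset.mem_Icc.mpr ⟨le_refl 1, h⟩⟩

lemma fmin_le {k : ℕ} (h : 1 ≤ k) (g : ℕ → ℝ) {i : ℕ} (hi : i ∈ Finset.Icc 1 k) :
    fmin k g ≤ g i := by
  unfold fmin
  rw [dif_pos (Icc_nonempty_of_le h)]
  exact Finset.inf'_le g hi

lemma le_fmax {k : ℕ} (h : 1 ≤ k) (g : ℕ → ℝ) {i : ℕ} (hi : i ∈ Finset.Icc 1 k) :
    g i ≤ fmax k g := by
  unfold fmax
  rw [dif_pos (Icc_nonempty_of_le h)]
  exact Finset.le_sup' g hi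

lemma fmin_pos {k : ℕ} (h : 1 ≤ k) (g : ℕ → ℝ) (hpos : ∀ i ∈ Finset.Icc 1 k, 0 < g i) :
    0 < fmin k g := by
  unfold fmin
  rw [dif_pos (Icc_nonempty_of_le h)]
  rw [Finset.lt_inf'_iff]
  exact hpos

lemma fmax_le {k : ℕ} (h : 1 ≤ k) (g : ℕ → ℝ) {b : ℝ} (hb : ∀ i ∈ Finset.Icc 1 k, g i ≤ b) :
    fmax k g ≤ b := by
  unfold fmax
  rw [dif_pos (Icc_nonempty_of_le h)]
  exact Finset.sup'_le _ g hb

lemma fmax_pos {k : ℕ} (h : 1 ≤ k) (g : ℕ → ℝ)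
    (hpos : ∃ i ∈ Finset.Icc 1 k, 0 < g i) : 0 < fmax k g := by
  obtain ⟨i, hi, hgi⟩ := hpos
  exact lt_of_lt_of_le hgi (le_fmax h g hi)

lemma fmax_div_const {k : ℕ} (h : 1 ≤ k) (g : ℕ → ℝ) {c : ℝ} (hc : 0 < c) :
    fmax k (fun i => g i / c) = fmax k g / c := by
  unfold fmax
  rw [dif_pos (Icc_nonempty_of_le h), dif_pos (Icc_nonempty_of_le h)]
  apply le_antisymm
  · apply Finset.sup'_le
    intro i hi
    exact div_le_div_of_nonneg_right (Finset.le_sup' g hi) hc.le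
  · obtain ⟨i, hi, hsup⟩ := Finset.exists_mem_eq_sup' (Icc_nonempty_of_le h) g
    rw [hsup]
    exact Finset.le_sup' (f := fun i => g i / c) hi

lemma card_le_of_subset_Icc {k : ℕ} {S : Finset ℕ} (hS : S ⊆ Finset.Icc 1 k) : S.card ≤ k := by
  calc S.card ≤ (Finset.Icc 1 k).card := Finset.card_le_card hS
  _ = k := by rw [Nat.card_Icc]; omega

lemma mc_bound (k : ℕ) (hk : 2 ≤ k) : ∀ n : ℕ, ∃ c : ℝ, 1 ≤ c ∧
    ∀ (z : ℕ → ℂ), (∀ i ∈ Finset.Icc 1 k, (z i).im ≠ 0 ∧ |(z i).re| ≤ 3 ∧ |(z i).im| ≤ 1) →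
    ∀ dd : Multiset ℂ → ℂ, IsDivDiff mSC dd →
    ∀ mc : Finset ℕ → ℂ,
      (∀ S ⊆ Finset.Icc 1 k, S.Nonempty → dd (S.val.map z) = ∑ π ∈ NCP S, ∏ B ∈ π, mc B) →
    ∀ S, S ⊆ Finset.Icc 1 k → S.Nonempty → S.card ≤ n →
      ‖mc S‖ ≤ c * gbd (fmax k fun i => |(mSC (z i)).im|) (fmin k fun i => |(z i).im|) S.card := by
  have hk1 : 1 ≤ k := by omega
  intro n
  induction n with
  | zero =>
      refine ⟨1, le_refl 1, fun z hz dd hdd mc hmc S hSsub hSne hcard => ?_⟩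
      exfalso
      have := Finset.card_pos.mpr hSne
      omega
  | succ n ih =>
      obtain ⟨c, hc1, hcb⟩ := ih
      have hX : (0:ℝ) < 2^(2^k) * c^k * 3^k := by positivity
      refine ⟨c + 1 + 2^(2^k) * c^k * 3^k, by nlinarith, ?_⟩
      intro z hz dd hdd mc hmc S hSsub hSne hcard
      set E := fmax k fun i => |(mSC (z i)).im| with hEdef
      set η := fmin k fun i => |(z i).im| with hηdef
      have hmemfacts : ∀ i ∈ Finset.Icc 1 k, (z i).im ≠ 0 ∧ η ≤ |(z i).im| ∧
          |(mSC (z i)).im| ≤ E := by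
        intro i hi
        exact ⟨(hz i hi).1, fmin_le hk1 (fun j => |(z j).im|) hi, le_fmax hk1 (fun j => |(mSC (z j)).im|) hi⟩
      have hη_pos : 0 < η := fmin_pos hk1 _ (fun i hi => abs_pos.mpr (hz i hi).1)
      have hη1 : η ≤ 1 := by
        have h1mem : 1 ∈ Finset.Icc 1 k := Finset.mem_Icc.mpr ⟨le_refl 1, hk1⟩
        exact le_trans (fmin_le hk1 _ h1mem) (hz 1 h1mem).2.2
      have hE_pos : 0 < E := by
        apply fmax_pos hk1
        have h1mem : 1 ∈ Finset.Icc 1 k := Finset.mem_Icc.mpr ⟨le_refl 1, hk1⟩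
        exact ⟨1, h1mem, abs_im_mSC_pos (hz 1 h1mem).1⟩
      have hE1 : E ≤ 1 := fmax_le hk1 _ (fun i hi => abs_im_mSC_le_one (hz i hi).1)
      have hgbd_nn : ∀ m, 0 ≤ gbd E η m := gbd_nonneg (le_of_lt hE_pos) hη_pos
      by_cases hsmall : S.card ≤ n
      · calc ‖mc S‖ ≤ c * gbd E η S.card := hcb z hz dd hdd mc hmc S hSsub hSne hsmall
        _ ≤ (c + 1 + 2^(2^k) * c^k * 3^k) * gbd E η S.card := by
            apply mul_le_mul_of_nonneg_right _ (hgbd_nn _)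
            nlinarith
      · have hcardeq : S.card = n + 1 := by omega
        by_cases hone : S.card = 1
        · -- singleton case
          obtain ⟨i, hi⟩ := Finset.card_eq_one.mp hone
          have hiIcc : i ∈ Finset.Icc 1 k := hSsub (hi ▸ Finset.mem_singleton_self i)
          have hmcS : mc S = dd (S.val.map z) := by
            rw [hmc S hSsub hSne]
            rw [hi, NCP_singleton i, Finset.sum_singleton, Finset.prod_singleton]
          have hmap : S.val.map z = {z i} := by
            rw [hi]
            rfl
          have hdd1 : dd (S.val.map z) = mSC (z i) := by
            rw [hmap]
            exact hdd.1 (z i)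
          rw [hmcS, hdd1]
          have := mSC_singleton_bound (hmemfacts i hiIcc).1 hη_pos (hmemfacts i hiIcc).2.1
            (hmemfacts i hiIcc).2.2 hE_pos
          calc ‖mSC (z i)‖ ≤ (3/2) * Real.sqrt (E/η) := this
          _ = gbd E η S.card := by rw [gbd, if_pos hone]
          _ ≤ (c + 1 + 2^(2^k) * c^k * 3^k) * gbd E η S.card := by
              apply le_mul_of_one_le_left (hgbd_nn _)
              nlinarith
        · -- main case: 2 ≤ S.card
          have h2card : 2 ≤ S.card := by
            have := Finset.card_pos.mpr hSne
            omega
          set s : Multiset ℂ := S.val.map z with hsdef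
          have hscard : Multiset.card s = S.card := by
            rw [hsdef, Multiset.card_map]
            rfl
          have hselem : ∀ w ∈ s, ∃ i ∈ Finset.Icc 1 k, z i = w := by
            intro w hw
            obtain ⟨i, hi, hzi⟩ := Multiset.mem_map.mp hw
            exact ⟨i, hSsub hi, hzi⟩
          have hsim : ∀ w ∈ s, w.im ≠ 0 := by
            intro w hw
            obtain ⟨i, hi, hzi⟩ := hselem w hw
            rw [← hzi]
            exact (hmemfacts i hi).1
          have hs0 : s ≠ 0 := by
            intro h0
            rw [h0] at hscard
            simp at hscard
            omega
          -- recursion for mc S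
          have hrec : mc S = dd s - ∑ π ∈ (NCP S).erase {S}, ∏ B ∈ π, mc B := by
            have h := hmc S hSsub hSne
            rw [← Finset.add_sum_erase _ _ (top_mem_NCP hSne), Finset.prod_singleton] at h
            rw [h]
            ring
          -- bound on dd s
          have hdds : ‖dd s‖ ≤ gbd E η S.card := by
            rw [dd_eq_Dfun hdd s hs0 hsim]
            obtain ⟨a, ha⟩ := Multiset.exists_mem_of_ne_zero hs0
            have hs1 : s.erase a ≠ 0 := by
              intro h0
              have := Multiset.card_erase_of_mem ha
              rw [h0] at this
              simp at this
              omega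
            obtain ⟨b, hb⟩ := Multiset.exists_mem_of_ne_zero hs1
            set t : Multiset ℂ := (s.erase a).erase b with htdef
            have hseq : s = a ::ₘ b ::ₘ t := by
              rw [htdef, Multiset.cons_erase hb, Multiset.cons_erase ha]
            have hfacts : ∀ w ∈ s, w.im ≠ 0 ∧ η ≤ |w.im| ∧ |(mSC w).im| ≤ E := by
              intro w hw
              obtain ⟨i, hi, hzi⟩ := hselem w hw
              rw [← hzi]
              exact hmemfacts i hi
            have hbs : b ∈ s := Multiset.mem_of_mem_erase hb
            have hts : ∀ w ∈ t, w ∈ s := fun w hw =>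
              Multiset.mem_of_mem_erase (Multiset.mem_of_mem_erase hw)
            have hboundD := Dfun_cons_bound (t := t) hη_pos
              (hfacts a ha).1 (hfacts a ha).2.1 (hfacts a ha).2.2
              (hfacts b hbs).1 (hfacts b hbs).2.1 (hfacts b hbs).2.2
              (fun w hw => ⟨(hfacts w (hts w hw)).1, (hfacts w (hts w hw)).2.1⟩)
            rw [← hseq] at hboundD
            refine le_trans hboundD (le_of_eq ?_)
            have hct : Multiset.card t + 2 = S.card := by
              rw [← hscard, hseq]
              simp
            rw [gbd, if_neg hone]
            rw [inv_pow, show S.card - 1 = Multiset.card t + 1 by omega, pow_succ]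
            rw [div_eq_mul_inv, div_eq_mul_inv, mul_inv]
            ring
          -- bound on the partition sum
          have hterm : ∀ π ∈ (NCP S).erase {S},
              ‖∏ B ∈ π, mc B‖ ≤ c^k * (3^k * gbd E η S.card) := by
            intro π hπ
            have hπN : π ∈ NCP S := Finset.mem_of_mem_erase hπ
            have hπne : π ≠ {S} := Finset.ne_of_mem_erase hπ
            have hp := isPartition_of_mem_NCP hπN
            rw [norm_prod]
            have hblock : ∀ B ∈ π, ‖mc B‖ ≤ c * gbd E η B.card := by
              intro B hB
              apply hcb z hz dd hdd mc hmc B (le_trans (hp.2.1 B hB) hSsub) (hp.1 B hB)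
              have hBS : B ⊂ S := Finset.ssubset_of_ssubset_of_subset
                (Finset.ssubset_iff_subset_ne.mpr ⟨hp.2.1 B hB, block_ne_top hp hπne hB⟩)
                (Finset.Subset.refl S)
              have := Finset.card_lt_card hBS
              omega
            calc ∏ B ∈ π, ‖mc B‖ ≤ ∏ B ∈ π, c * gbd E η B.card :=
                Finset.prod_le_prod (fun B _ => norm_nonneg _) hblock
            _ = c^π.card * ∏ B ∈ π, gbd E η B.card := by
                rw [Finset.prod_mul_distrib, Finset.prod_const]
            _ ≤ c^k * (3^k * gbd E η S.card) := by
                apply mul_le_mul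
                · exact pow_le_pow_right₀ hc1 (le_trans (card_blocks_le hp)
                    (card_le_of_subset_Icc hSsub))
                · calc ∏ B ∈ π, gbd E η B.card
                      ≤ 3 ^ S.card * (E / η ^ (S.card - 1)) :=
                        prod_gbd_le hE_pos hE1 hη_pos hη1 hp h2card
                  _ ≤ 3^k * gbd E η S.card := by
                      rw [gbd, if_neg hone]
                      apply mul_le_mul_of_nonneg_right _ (by positivity)
                      exact pow_le_pow_right₀ (by norm_num) (card_le_of_subset_Icc hSsub)
                · exact Finset.prod_nonneg fun B _ => hgbd_nn _
                · positivity
          have hsumb : ‖∑ π ∈ (NCP S).erase {S}, ∏ B ∈ π, mc B‖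
              ≤ 2^(2^k) * (c^k * (3^k * gbd E η S.card)) := by
            refine le_trans (norm_sum_le _ _) ?_
            refine le_trans (Finset.sum_le_sum hterm) ?_
            rw [Finset.sum_const, nsmul_eq_mul]
            apply mul_le_mul_of_nonneg_right _ (mul_nonneg (by positivity)
              (mul_nonneg (by positivity) (hgbd_nn _)))
            calc (((NCP S).erase {S}).card : ℝ) ≤ ((NCP S).card : ℝ) := by
                  exact_mod_cast Finset.card_le_card (Finset.erase_subset _ _)
            _ ≤ ((2 ^ (2 ^ S.card) : ℕ) : ℝ) := by exact_mod_cast card_NCP_le S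
            _ ≤ 2^(2^k) := by
                have h1 : (2:ℕ) ^ S.card ≤ 2 ^ k :=
                  Nat.pow_le_pow_right (by norm_num) (card_le_of_subset_Icc hSsub)
                have h2 : (2:ℕ) ^ (2 ^ S.card) ≤ 2 ^ (2^k) :=
                  Nat.pow_le_pow_right (by norm_num) h1
                calc ((2 ^ (2 ^ S.card) : ℕ) : ℝ) ≤ ((2 ^ (2^k) : ℕ) : ℝ) := by exact_mod_cast h2
                _ = 2^(2^k) := by push_cast; ring
          calc ‖mc S‖ = ‖dd s - ∑ π ∈ (NCP S).erase {S}, ∏ B ∈ π, mc B‖ := by rw [hrec]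
          _ ≤ ‖dd s‖ + ‖∑ π ∈ (NCP S).erase {S}, ∏ B ∈ π, mc B‖ := norm_sub_le _ _
          _ ≤ gbd E η S.card + 2^(2^k) * (c^k * (3^k * gbd E η S.card)) := add_le_add hdds hsumb
          _ ≤ (c + 1 + 2^(2^k) * c^k * 3^k) * gbd E η S.card := by
              have hg := hgbd_nn S.card
              nlinarith [mul_nonneg (le_of_lt hX) hg]


-- ## Section 6: pTr bound

set_option synthInstance.maxHeartbeats 1000000 in
set_option maxHeartbeats 1000000 in
lemma pTr_bound {N k : ℕ} (hk : 2 ≤ k) {σ : Finset (Finset ℕ)}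
    (hσ : σ ∈ NCP (Finset.Icc 1 k)) (A : ℕ → Matrix (Fin N) (Fin N) ℂ) :
    opNorm (pTr k σ A) ≤ ∏ j ∈ Finset.Icc 1 (k-1), opNorm (A j) := by
  have hp := isPartition_of_mem_NCP hσ
  have hkmem : k ∈ Finset.Icc 1 k := Finset.mem_Icc.mpr ⟨by omega, le_refl k⟩
  obtain ⟨B₀, hB₀, hkB₀, hfil⟩ := filter_mem_eq_singleton hp hkmem
  have hfilnot : σ.filter (fun B => k ∉ B) = σ.erase B₀ := by
    ext B
    simp only [Finset.mem_filter, Finset.mem_erase]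
    constructor
    · rintro ⟨hBσ, hkB⟩
      refine ⟨fun hEq => hkB (hEq ▸ hkB₀), hBσ⟩
    · rintro ⟨hne, hBσ⟩
      refine ⟨hBσ, fun hkB => hne ?_⟩
      have hBf : B ∈ σ.filter (fun B => k ∈ B) := Finset.mem_filter.mpr ⟨hBσ, hkB⟩
      rw [hfil] at hBf
      exact Finset.mem_singleton.mp hBf
  unfold pTr
  rw [hfil, hfilnot, Finset.sup_singleton]
  have hsmul : opNorm ((∏ B ∈ σ.erase B₀, ntr (ordProd B A)) • ordProd ((id B₀).erase k) A)
      = ‖∏ B ∈ σ.erase B₀, ntr (ordProd B A)‖ * opNorm (ordProd ((id B₀).erase k) A) := by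
    unfold opNorm
    rw [_root_.map_smul]
    exact norm_smul (∏ B ∈ σ.erase B₀, ntr (ordProd B A))
      (Matrix.toEuclideanCLM (𝕜 := ℂ) (ordProd ((id B₀).erase k) A))
  rw [hsmul]
  simp only [id]
  have h1 : ‖∏ B ∈ σ.erase B₀, ntr (ordProd B A)‖
      ≤ ∏ B ∈ σ.erase B₀, ∏ j ∈ B, opNorm (A j) := by
    rw [norm_prod]
    apply Finset.prod_le_prod (fun B _ => norm_nonneg _)
    intro B _
    exact le_trans (ntr_le_opNorm _) (opNorm_ordProd_le B A)
  have h2 : opNorm (ordProd (B₀.erase k) A) ≤ ∏ j ∈ B₀.erase k, opNorm (A j) :=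
    opNorm_ordProd_le _ _
  have huniqk : ∀ B ∈ σ, k ∈ B → B = B₀ := by
    intro B hB hkB
    have hBf : B ∈ σ.filter (fun B => k ∈ B) := Finset.mem_filter.mpr ⟨hB, hkB⟩
    rw [hfil] at hBf
    exact Finset.mem_singleton.mp hBf
  have hset : Finset.Icc 1 (k-1) = (B₀.erase k) ∪ (σ.erase B₀).biUnion (fun B => B) := by
    ext x
    simp only [Finset.mem_union, Finset.mem_biUnion, Finset.mem_erase, Finset.mem_Icc]
    constructor
    · rintro ⟨h1x, h2x⟩
      have hxk : x ≠ k := by omega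
      have hxIcc : x ∈ Finset.Icc 1 k := Finset.mem_Icc.mpr ⟨h1x, by omega⟩
      obtain ⟨B, ⟨hB, hxB⟩, -⟩ := hp.2.2 x hxIcc
      by_cases hBB₀ : B = B₀
      · exact Or.inl ⟨hxk, hBB₀ ▸ hxB⟩
      · exact Or.inr ⟨B, ⟨hBB₀, hB⟩, hxB⟩
    · rintro (⟨hxk, hxB₀⟩ | ⟨B, ⟨hne, hB⟩, hxB⟩)
      · have hx1 := hp.2.1 B₀ hB₀ hxB₀
        rw [Finset.mem_Icc] at hx1
        omega
      · have hxIcc := hp.2.1 B hB hxB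
        rw [Finset.mem_Icc] at hxIcc
        have hxk : x ≠ k := by
          intro hEq
          exact hne (huniqk B hB (hEq ▸ hxB))
        omega
  have hdisj : Disjoint (B₀.erase k) ((σ.erase B₀).biUnion (fun B => B)) := by
    rw [Finset.disjoint_left]
    intro x hx hxU
    obtain ⟨B, hB, hxB⟩ := Finset.mem_biUnion.mp hxU
    have hBσ : B ∈ σ := Finset.mem_of_mem_erase hB
    have hBne : B ≠ B₀ := Finset.ne_of_mem_erase hB
    have hd := blocks_disjoint hp hBσ hB₀ hBne
    exact (Finset.disjoint_left.mp hd) hxB (Finset.mem_of_mem_erase hx)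
  calc ‖∏ B ∈ σ.erase B₀, ntr (ordProd B A)‖ * opNorm (ordProd (B₀.erase k) A)
      ≤ (∏ B ∈ σ.erase B₀, ∏ j ∈ B, opNorm (A j)) * ∏ j ∈ B₀.erase k, opNorm (A j) := by
        apply mul_le_mul h1 h2 (opNorm_nonneg' _)
        exact Finset.prod_nonneg fun B _ => Finset.prod_nonneg fun j _ => opNorm_nonneg' _
    _ = ∏ j ∈ Finset.Icc 1 (k-1), opNorm (A j) := by
        rw [hset, Finset.prod_union hdisj]
        rw [Finset.prod_biUnion]
        · ring
        · intro B hB B' hB' hne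
          exact blocks_disjoint hp (Finset.mem_of_mem_erase hB)
            (Finset.mem_of_mem_erase hB') hne

/-- Lemma 3.6, norm bound on `M_{[k]}`. -/
theorem statement12 (k : ℕ) (hk : 2 ≤ k) :
    ∃ C > (0:ℝ), ∀ N : ℕ, ∀ z : ℕ → ℂ,
      (∀ i ∈ Finset.Icc 1 k, (z i).im ≠ 0 ∧ |(z i).re| ≤ 3 ∧ |(z i).im| ≤ 1) →
      ∀ A : ℕ → Matrix (Fin N) (Fin N) ℂ,
      ∀ dd : Multiset ℂ → ℂ, IsDivDiff mSC dd →
      ∀ mc : Finset ℕ → ℂ,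
        (∀ S ⊆ Finset.Icc 1 k, S.Nonempty →
          dd (S.val.map z) = ∑ π ∈ NCP S, ∏ B ∈ π, mc B) →
      ∀ K : Finset (Finset ℕ) → Finset (Finset ℕ),
        (∀ π ∈ NCP (Finset.Icc 1 k), IsKreweras (Finset.Icc 1 k) π (K π)) →
        opNorm (∑ π ∈ NCP (Finset.Icc 1 k), (∏ B ∈ π, mc B) • pTr k (K π) A) ≤
          C * ((fmax k fun i => |(mSC (z i)).im| / Real.pi) /
              (fmin k fun i => |(z i).im|) ^ (k - 1)) *
            ∏ j ∈ Finset.Icc 1 (k - 1), opNorm (A j) := by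
  have hk1 : 1 ≤ k := by omega
  obtain ⟨c, hc1, hcb⟩ := mc_bound k hk k
  have hC : (0:ℝ) < Real.pi * (2^(2^k) * c^k * 3^k) := by
    have := Real.pi_pos
    positivity
  refine ⟨Real.pi * (2^(2^k) * c^k * 3^k), hC, ?_⟩
  intro N z hz A dd hdd mc hmc K hK
  set E := fmax k fun i => |(mSC (z i)).im| with hEdef
  set η := fmin k fun i => |(z i).im| with hηdef
  have hη_pos : 0 < η := fmin_pos hk1 _ (fun i hi => abs_pos.mpr (hz i hi).1)
  have h1mem : 1 ∈ Finset.Icc 1 k := Finset.mem_Icc.mpr ⟨le_refl 1, hk1⟩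
  have hη1 : η ≤ 1 := le_trans (fmin_le hk1 _ h1mem) (hz 1 h1mem).2.2
  have hE_pos : 0 < E := fmax_pos hk1 _ ⟨1, h1mem, abs_im_mSC_pos (hz 1 h1mem).1⟩
  have hE1 : E ≤ 1 := fmax_le hk1 _ (fun i hi => abs_im_mSC_le_one (hz i hi).1)
  have hgbd_nn : ∀ m, 0 ≤ gbd E η m := gbd_nonneg (le_of_lt hE_pos) hη_pos
  have hIccCard : (Finset.Icc 1 k).card = k := by rw [Nat.card_Icc]; omega
  have hprodA_nn : 0 ≤ ∏ j ∈ Finset.Icc 1 (k-1), opNorm (A j) :=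
    Finset.prod_nonneg fun j _ => opNorm_nonneg' _
  -- coefficient bound
  have hterm : ∀ π ∈ NCP (Finset.Icc 1 k),
      ‖∏ B ∈ π, mc B‖ ≤ c^k * (3^k * (E / η^(k-1))) := by
    intro π hπ
    have hp := isPartition_of_mem_NCP hπ
    rw [norm_prod]
    have hblock : ∀ B ∈ π, ‖mc B‖ ≤ c * gbd E η B.card := by
      intro B hB
      apply hcb z hz dd hdd mc hmc B (hp.2.1 B hB) (hp.1 B hB)
      exact card_le_of_subset_Icc (hp.2.1 B hB)
    calc ∏ B ∈ π, ‖mc B‖ ≤ ∏ B ∈ π, c * gbd E η B.card :=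
        Finset.prod_le_prod (fun B _ => norm_nonneg _) hblock
    _ = c^π.card * ∏ B ∈ π, gbd E η B.card := by
        rw [Finset.prod_mul_distrib, Finset.prod_const]
    _ ≤ c^k * (3^k * (E / η^(k-1))) := by
        apply mul_le_mul
        · exact pow_le_pow_right₀ hc1 (le_trans (card_blocks_le hp) (le_of_eq hIccCard))
        · have hpg := prod_gbd_le hE_pos hE1 hη_pos hη1 hp (by rw [hIccCard]; exact hk)
          rw [hIccCard] at hpg
          refine le_trans hpg ?_
          apply mul_le_mul_of_nonneg_right (le_refl _) (by positivity)
        · exact Finset.prod_nonneg fun B _ => hgbd_nn _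
        · positivity
  -- norm of the sum
  have hsum : opNorm (∑ π ∈ NCP (Finset.Icc 1 k), (∏ B ∈ π, mc B) • pTr k (K π) A)
      ≤ ∑ π ∈ NCP (Finset.Icc 1 k), ‖∏ B ∈ π, mc B‖ * opNorm (pTr k (K π) A) := by
    unfold opNorm
    rw [map_sum]
    refine le_trans (norm_sum_le _ _) ?_
    apply Finset.sum_le_sum
    intro π _
    rw [_root_.map_smul]
    apply le_of_eq
    exact norm_smul (∏ B ∈ π, mc B) (Matrix.toEuclideanCLM (𝕜 := ℂ) (pTr k (K π) A))
  have hmain : opNorm (∑ π ∈ NCP (Finset.Icc 1 k), (∏ B ∈ π, mc B) • pTr k (K π) A)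
      ≤ (2:ℝ)^(2^k) * ((c^k * (3^k * (E / η^(k-1)))) *
          ∏ j ∈ Finset.Icc 1 (k-1), opNorm (A j)) := by
    refine le_trans hsum ?_
    have hcard : ((NCP (Finset.Icc 1 k)).card : ℝ) ≤ (2:ℝ)^(2^k) := by
      calc ((NCP (Finset.Icc 1 k)).card : ℝ) ≤ ((2 ^ (2 ^ (Finset.Icc 1 k).card) : ℕ) : ℝ) := by
            exact_mod_cast card_NCP_le _
      _ = (2:ℝ)^(2^k) := by rw [hIccCard]; push_cast; ring
    have hstep : ∑ π ∈ NCP (Finset.Icc 1 k), ‖∏ B ∈ π, mc B‖ * opNorm (pTr k (K π) A)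
        ≤ ∑ _π ∈ NCP (Finset.Icc 1 k), (c^k * (3^k * (E / η^(k-1)))) *
            ∏ j ∈ Finset.Icc 1 (k-1), opNorm (A j) := by
      apply Finset.sum_le_sum
      intro π hπ
      apply mul_le_mul (hterm π hπ) (pTr_bound hk ((hK π hπ).1) A) (opNorm_nonneg' _)
        (by positivity)
    refine le_trans hstep ?_
    rw [Finset.sum_const, nsmul_eq_mul]
    apply mul_le_mul_of_nonneg_right hcard
    apply mul_nonneg (by positivity) hprodA_nn
  refine le_trans hmain (le_of_eq ?_)
  have hfd : (fmax k fun i => |(mSC (z i)).im| / Real.pi) = E / Real.pi :=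
    fmax_div_const hk1 _ Real.pi_pos
  rw [hfd]
  have hπ0 : Real.pi ≠ 0 := Real.pi_ne_zero
  field_simp


end Paper
end
end

section
/- Let k ≥ 2, let z₁,…,z_k ∈ ℂ∖ℝ with z₁ ≠ z_k, and let A₁,…,A_{k−1} be N×N complex matrices. For 1 ≤ i ≤ j ≤ k let M_{[i,j]} := Σ_{π∈NCP([i,j])} pTr_{K(π)}(A_i,…,A_{j−1}) ∏_{B∈π} m_∘[B], built from the spectral parameters z_i,…,z_j and matrices A_i,…,A_{j−1} (with M_{[i,i]} = m(z_i)·I), and write M_{(1,k]} := M_{[2,k]}, M_{[1,k)} := M_{[1,k−1]}, M_{[k]} := M_{[1,k]}. Then ⟨M_{[k]}⟩ = ⟨ M_{[1,k)} A_{k−1} − A₁ M_{(1,k]} ⟩ / (z₁ − z_k). -/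
open MeasureTheory ProbabilityTheory Finset
open scoped ENNReal Classical

noncomputable section

namespace Paper

/-- The deterministic approximation `M_{[i,j]}` built from the spectral parameters
`z_i,…,z_j` (through the free cumulant function `mc` of their divided differences) and the
matrices `A_i,…,A_{j-1}`, via non-crossing partitions and Kreweras complements `K`. -/
def Mblock {N : ℕ} (i j : ℕ) (A : ℕ → Matrix (Fin N) (Fin N) ℂ)
    (K : Finset ℕ → Finset (Finset ℕ) → Finset (Finset ℕ)) (mc : Finset ℕ → ℂ) :
    Matrix (Fin N) (Fin N) ℂ :=
  ∑ π ∈ NCP (Finset.Icc i j), (∏ B ∈ π, mc B) • pTr j (K (Finset.Icc i j) π) A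


section DDProof

open Finset

variable {S C : Finset ℕ} {π ρ σ : Finset (Finset ℕ)}

lemma mem_NCP : π ∈ NCP S ↔ IsPartition S π ∧ ¬ Crossing π := by
  constructor
  · intro h; exact (mem_filter.1 h).2
  · intro h
    exact mem_filter.2 ⟨mem_powerset.2 fun B hB => mem_powerset.2 (h.1.2.1 B hB), h⟩

lemma NCP_block_subset (h : π ∈ NCP S) {B : Finset ℕ} (hB : B ∈ π) : B ⊆ S :=
  (mem_NCP.1 h).1.2.1 B hB

lemma NCP_block_nonempty (h : π ∈ NCP S) {B : Finset ℕ} (hB : B ∈ π) : B.Nonempty :=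
  (mem_NCP.1 h).1.1 B hB

lemma NCP_not_crossing (h : π ∈ NCP S) : ¬ Crossing π := (mem_NCP.1 h).2

lemma NCP_existsUnique (h : π ∈ NCP S) {x : ℕ} (hx : x ∈ S) :
    ∃! B, B ∈ π ∧ x ∈ B := (mem_NCP.1 h).1.2.2 x hx

lemma NCP_exists_block (h : π ∈ NCP S) {x : ℕ} (hx : x ∈ S) :
    ∃ B ∈ π, x ∈ B := by
  obtain ⟨B, hB, -⟩ := NCP_existsUnique h hx
  exact ⟨B, hB.1, hB.2⟩

lemma NCP_block_eq (h : π ∈ NCP S) {B B' : Finset ℕ} (hB : B ∈ π) (hB' : B' ∈ π)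
    {x : ℕ} (hxB : x ∈ B) (hxB' : x ∈ B') : B = B' := by
  have hx : x ∈ S := NCP_block_subset h hB hxB
  obtain ⟨B₀, -, hu⟩ := NCP_existsUnique h hx
  rw [hu B ⟨hB, hxB⟩, hu B' ⟨hB', hxB'⟩]

lemma singleton_mem_NCP (hC : C.Nonempty) : {C} ∈ NCP C := by
  refine mem_NCP.2 ⟨⟨?_, ?_, ?_⟩, ?_⟩
  · intro B hB; rw [mem_singleton.1 hB]; exact hC
  · intro B hB; rw [mem_singleton.1 hB]
  · intro x hx
    refine ⟨C, ⟨mem_singleton_self C, hx⟩, ?_⟩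
    rintro B ⟨hB, -⟩; exact mem_singleton.1 hB
  · rintro ⟨B, hB, B', hB', hne, -⟩
    exact hne (by rw [mem_singleton.1 hB, mem_singleton.1 hB'])

lemma NCP_mem_of_mem_self (h : π ∈ NCP S) (hS : S ∈ π) : π = {S} := by
  ext B
  simp only [mem_singleton]
  constructor
  · intro hB
    obtain ⟨x, hx⟩ := NCP_block_nonempty h hB
    exact NCP_block_eq h hB hS hx (NCP_block_subset h hB hx)
  · rintro rfl; exact hS

lemma NCP_block_ssubset (h : π ∈ NCP C) (hne : π ≠ {C}) {B : Finset ℕ} (hB : B ∈ π) :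
    B ⊂ C := by
  refine ssubset_of_subset_of_ne (NCP_block_subset h hB) fun hEq => ?_
  exact hne (NCP_mem_of_mem_self h (hEq ▸ hB))

lemma crossing_insert_singleton {m : ℕ} :
    Crossing (insert {m} π) ↔ Crossing π := by
  constructor
  · rintro ⟨B, hB, B', hB', hne, a, ha, b, hb, c, hc, d, hd, h1, h2, h3⟩
    rcases mem_insert.1 hB with hB1 | hB1
    · subst hB1
      have ha' := mem_singleton.1 ha
      have hb' := mem_singleton.1 hb
      omega
    rcases mem_insert.1 hB' with hB1' | hB1'
    · subst hB1'
      have hc' := mem_singleton.1 hc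
      have hd' := mem_singleton.1 hd
      omega
    exact ⟨B, hB1, B', hB1', hne, a, ha, b, hb, c, hc, d, hd, h1, h2, h3⟩
  · rintro ⟨B, hB, B', hB', hne, a, ha, b, hb, c, hc, d, hd, h⟩
    exact ⟨B, mem_insert_of_mem hB, B', mem_insert_of_mem hB', hne,
      a, ha, b, hb, c, hc, d, hd, h⟩

lemma singleton_not_mem_NCP {m : ℕ} (hm : m ∉ S) (h : π ∈ NCP S) : {m} ∉ π := by
  intro hmem
  exact hm (NCP_block_subset h hmem (mem_singleton_self m))

lemma insert_singleton_mem_NCP {m : ℕ} (hm : m ∉ S) (h : π ∈ NCP S) :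
    insert {m} π ∈ NCP (insert m S) := by
  refine mem_NCP.2 ⟨⟨?_, ?_, ?_⟩, ?_⟩
  · intro B hB
    rcases mem_insert.1 hB with rfl | hB
    · exact ⟨m, mem_singleton_self m⟩
    · exact NCP_block_nonempty h hB
  · intro B hB
    rcases mem_insert.1 hB with rfl | hB
    · intro x hx; rw [mem_singleton.1 hx]; exact mem_insert_self m S
    · exact (NCP_block_subset h hB).trans (subset_insert m S)
  · intro x hx
    rcases mem_insert.1 hx with rfl | hx
    · refine ⟨{x}, ⟨mem_insert_self _ _, mem_singleton_self x⟩, ?_⟩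
      rintro B ⟨hB, hxB⟩
      rcases mem_insert.1 hB with rfl | hB
      · rfl
      · exact absurd (NCP_block_subset h hB hxB) hm
    · obtain ⟨B, hB, hu⟩ := NCP_existsUnique h hx
      refine ⟨B, ⟨mem_insert_of_mem hB.1, hB.2⟩, ?_⟩
      rintro B' ⟨hB', hxB'⟩
      rcases mem_insert.1 hB' with rfl | hB'
      · exact absurd ((mem_singleton.1 hxB') ▸ hx) hm
      · exact hu B' ⟨hB', hxB'⟩
  · rw [crossing_insert_singleton]
    exact NCP_not_crossing h

lemma erase_singleton_mem_NCP {m : ℕ} (hm : m ∉ S) (h : π ∈ NCP (insert m S))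
    (hmem : {m} ∈ π) : π.erase {m} ∈ NCP S := by
  have hmnotS : ∀ B ∈ π.erase {m}, m ∉ B := by
    intro B hB hmB
    exact (mem_erase.1 hB).1
      (NCP_block_eq h (mem_erase.1 hB).2 hmem hmB (mem_singleton_self m))
  refine mem_NCP.2 ⟨⟨?_, ?_, ?_⟩, ?_⟩
  · intro B hB; exact NCP_block_nonempty h (mem_erase.1 hB).2
  · intro B hB x hx
    have := NCP_block_subset h (mem_erase.1 hB).2 hx
    rcases mem_insert.1 this with rfl | hxS
    · exact absurd hx (hmnotS B hB)
    · exact hxS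
  · intro x hx
    obtain ⟨B, hB, hu⟩ := NCP_existsUnique h (mem_insert_of_mem hx)
    have hBne : B ≠ {m} := by
      intro rfl'
      exact hm ((mem_singleton.1 (rfl' ▸ hB.2)) ▸ hx)
    refine ⟨B, ⟨mem_erase.2 ⟨hBne, hB.1⟩, hB.2⟩, ?_⟩
    rintro B' ⟨hB', hxB'⟩
    exact hu B' ⟨(mem_erase.1 hB').2, hxB'⟩
  · intro hc
    obtain ⟨B, hB, B', hB', hne, rest⟩ := hc
    exact NCP_not_crossing h ⟨B, (mem_erase.1 hB).2, B', (mem_erase.1 hB').2, hne, rest⟩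

/-- The bad-pair pattern: the pair `(x,y)` (with `x < y`) of "even" points crosses the
pair of "odd" bars `2u+1, 2v+1`. -/
def BadPat (u v x y : ℕ) : Prop := (x ≤ u ∧ u < y ∧ y ≤ v) ∨ (u < x ∧ x ≤ v ∧ v < y)

/-- `(x,y)` is a bad pair for the bar structure `ρ`. -/
def Bad (ρ : Finset (Finset ℕ)) (x y : ℕ) : Prop :=
  ∃ R ∈ ρ, ∃ u ∈ R, ∃ v ∈ R, BadPat u v x y

lemma bad_mono {ρ σ : Finset (Finset ℕ)} (h : Refines ρ σ) {x y : ℕ} (hb : Bad ρ x y) :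
    Bad σ x y := by
  obtain ⟨R, hR, u, hu, v, hv, hp⟩ := hb
  obtain ⟨R', hR', hsub⟩ := h R hR
  exact ⟨R', hR', u, hsub hu, v, hsub hv, hp⟩

section BadLemmas
variable {ρ : Finset (Finset ℕ)} {x y z a b c d : ℕ}

lemma bad_g1 (hxy : x < y) (hyz : y < z) (h : Bad ρ x z) : Bad ρ x y ∨ Bad ρ y z := by
  obtain ⟨R, hR, u, hu, v, hv, hp⟩ := h
  have : BadPat u v x y ∨ BadPat u v y z := by unfold BadPat at hp ⊢; omega
  rcases this with h' | h'
  · exact Or.inl ⟨R, hR, u, hu, v, hv, h'⟩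
  · exact Or.inr ⟨R, hR, u, hu, v, hv, h'⟩

lemma bad_g2 (hxy : x < y) (hyz : y < z) (h : Bad ρ y z) : Bad ρ x y ∨ Bad ρ x z := by
  obtain ⟨R, hR, u, hu, v, hv, hp⟩ := h
  have : BadPat u v x y ∨ BadPat u v x z := by unfold BadPat at hp ⊢; omega
  rcases this with h' | h'
  · exact Or.inl ⟨R, hR, u, hu, v, hv, h'⟩
  · exact Or.inr ⟨R, hR, u, hu, v, hv, h'⟩

lemma bad_g3 (hxy : x < y) (hyz : y < z) (h : Bad ρ x y) : Bad ρ x z ∨ Bad ρ y z := by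
  obtain ⟨R, hR, u, hu, v, hv, hp⟩ := h
  have : BadPat u v x z ∨ BadPat u v y z := by unfold BadPat at hp ⊢; omega
  rcases this with h' | h'
  · exact Or.inl ⟨R, hR, u, hu, v, hv, h'⟩
  · exact Or.inr ⟨R, hR, u, hu, v, hv, h'⟩

lemma bad_g5 (h1 : a < c) (h2 : c < b) (h3 : b < d) (h : Bad ρ a d) :
    Bad ρ a b ∨ Bad ρ c d := by
  obtain ⟨R, hR, u, hu, v, hv, hp⟩ := h
  have : BadPat u v a b ∨ BadPat u v c d := by unfold BadPat at hp ⊢; omega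
  rcases this with h' | h'
  · exact Or.inl ⟨R, hR, u, hu, v, hv, h'⟩
  · exact Or.inr ⟨R, hR, u, hu, v, hv, h'⟩

end BadLemmas

/-- The symmetric goodness relation. -/
def GRel (ρ : Finset (Finset ℕ)) (x y : ℕ) : Prop :=
  x = y ∨ (x < y ∧ ¬ Bad ρ x y) ∨ (y < x ∧ ¬ Bad ρ y x)

lemma grel_refl {ρ : Finset (Finset ℕ)} (x : ℕ) : GRel ρ x x := Or.inl rfl

lemma grel_symm {ρ : Finset (Finset ℕ)} {x y : ℕ} (h : GRel ρ x y) : GRel ρ y x := by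
  rcases h with rfl | h | h
  · exact Or.inl rfl
  · exact Or.inr (Or.inr h)
  · exact Or.inr (Or.inl h)

lemma grel_of_lt {ρ : Finset (Finset ℕ)} {x y : ℕ} (hxy : x < y) (h : ¬ Bad ρ x y) :
    GRel ρ x y := Or.inr (Or.inl ⟨hxy, h⟩)

lemma grel_not_bad {ρ : Finset (Finset ℕ)} {x y : ℕ} (hxy : x < y) (h : GRel ρ x y) :
    ¬ Bad ρ x y := by
  rcases h with rfl | h | h
  · omega
  · exact h.2
  · omega

lemma grel_trans {ρ : Finset (Finset ℕ)} {x y z : ℕ}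
    (h1 : GRel ρ x y) (h2 : GRel ρ y z) : GRel ρ x z := by
  rcases eq_or_ne x y with rfl | hxy
  · exact h2
  rcases eq_or_ne y z with rfl | hyz
  · exact h1
  rcases eq_or_ne x z with rfl | hxz
  · exact grel_refl x
  have hgxy : ∀ {p q : ℕ}, p < q → GRel ρ p q → ¬ Bad ρ p q := fun h g => grel_not_bad h g
  rcases Nat.lt_or_ge x y with hlt1 | hge1
  · rcases Nat.lt_or_ge y z with hlt2 | hge2
    · -- x < y < z
      refine grel_of_lt (hlt1.trans hlt2) fun hb => ?_
      rcases bad_g1 hlt1 hlt2 hb with hb' | hb'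
      · exact hgxy hlt1 h1 hb'
      · exact hgxy hlt2 h2 hb'
    · have hzy : z < y := lt_of_le_of_ne hge2 (Ne.symm hyz)
      rcases Nat.lt_or_ge x z with hxz' | hzx'
      · -- x < z < y
        refine grel_of_lt hxz' fun hb => ?_
        rcases bad_g3 hxz' hzy hb with hb' | hb'
        · exact hgxy (hxz'.trans hzy) h1 hb'
        · exact hgxy hzy (grel_symm h2) hb'
      · have hzx : z < x := lt_of_le_of_ne hzx' (Ne.symm hxz)
        -- z < x < y
        refine grel_symm (grel_of_lt hzx fun hb => ?_)
        rcases bad_g3 hzx hlt1 hb with hb' | hb'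
        · exact hgxy (hzx.trans hlt1) (grel_symm h2) hb'
        · exact hgxy hlt1 h1 hb'
  · have hyx : y < x := lt_of_le_of_ne hge1 (Ne.symm hxy)
    rcases Nat.lt_or_ge y z with hlt2 | hge2
    · rcases Nat.lt_or_ge x z with hxz' | hzx'
      · -- y < x < z
        refine grel_of_lt hxz' fun hb => ?_
        rcases bad_g2 hyx hxz' hb with hb' | hb'
        · exact hgxy hyx (grel_symm h1) hb'
        · exact hgxy (hyx.trans hxz') h2 hb'
      · have hzx : z < x := lt_of_le_of_ne hzx' (Ne.symm hxz)
        -- y < z < x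
        refine grel_symm (grel_of_lt hzx fun hb => ?_)
        rcases bad_g2 hlt2 hzx hb with hb' | hb'
        · exact hgxy hlt2 h2 hb'
        · exact hgxy hyx (grel_symm h1) hb'
    · have hzy : z < y := lt_of_le_of_ne hge2 (Ne.symm hyz)
      -- z < y < x
      refine grel_symm (grel_of_lt (hzy.trans hyx) fun hb => ?_)
      rcases bad_g1 hzy hyx hb with hb' | hb'
      · exact hgxy hzy (grel_symm h2) hb'
      · exact hgxy hyx (grel_symm h1) hb'

/-- The class of `x` for the goodness relation. -/
noncomputable def cls (S : Finset ℕ) (ρ : Finset (Finset ℕ)) (x : ℕ) : Finset ℕ :=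
  S.filter (GRel ρ x)

/-- The partition of `S` into goodness classes. -/
noncomputable def tauP (S : Finset ℕ) (ρ : Finset (Finset ℕ)) : Finset (Finset ℕ) :=
  S.image (cls S ρ)

lemma mem_cls {S : Finset ℕ} {ρ : Finset (Finset ℕ)} {x y : ℕ} :
    y ∈ cls S ρ x ↔ y ∈ S ∧ GRel ρ x y := mem_filter

lemma self_mem_cls {S : Finset ℕ} {ρ : Finset (Finset ℕ)} {x : ℕ} (hx : x ∈ S) :
    x ∈ cls S ρ x := mem_cls.2 ⟨hx, grel_refl x⟩

lemma cls_eq_of_grel {S : Finset ℕ} {ρ : Finset (Finset ℕ)} {x y : ℕ}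
    (h : GRel ρ x y) : cls S ρ x = cls S ρ y := by
  ext w
  simp only [mem_cls]
  exact and_congr_right fun _ =>
    ⟨fun hw => grel_trans (grel_symm h) hw, fun hw => grel_trans h hw⟩

lemma cls_subset {S : Finset ℕ} {ρ : Finset (Finset ℕ)} {x : ℕ} : cls S ρ x ⊆ S :=
  filter_subset _ _

lemma tauP_mem_NCP {S : Finset ℕ} {ρ : Finset (Finset ℕ)} : tauP S ρ ∈ NCP S := by
  refine mem_NCP.2 ⟨⟨?_, ?_, ?_⟩, ?_⟩
  · intro B hB
    obtain ⟨x, hx, rfl⟩ := mem_image.1 hB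
    exact ⟨x, self_mem_cls hx⟩
  · intro B hB
    obtain ⟨x, hx, rfl⟩ := mem_image.1 hB
    exact cls_subset
  · intro x hx
    refine ⟨cls S ρ x, ⟨mem_image_of_mem _ hx, self_mem_cls hx⟩, ?_⟩
    rintro B ⟨hB, hxB⟩
    obtain ⟨w, hw, rfl⟩ := mem_image.1 hB
    exact cls_eq_of_grel (mem_cls.1 hxB).2
  · rintro ⟨B, hB, B', hB', hne, a, ha, b, hb, c, hc, d, hd, h1, h2, h3⟩
    obtain ⟨p, hp, rfl⟩ := mem_image.1 hB
    obtain ⟨q, hq, rfl⟩ := mem_image.1 hB'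
    have hab : ¬ Bad ρ a b := grel_not_bad (h1.trans h2)
      (grel_trans (grel_symm (mem_cls.1 ha).2) (mem_cls.1 hb).2)
    have hcd : ¬ Bad ρ c d := grel_not_bad (h2.trans h3)
      (grel_trans (grel_symm (mem_cls.1 hc).2) (mem_cls.1 hd).2)
    -- glue: derive GRel ρ a c, contradicting B ≠ B'
    have had : ¬ Bad ρ a d := fun hb' => by
      rcases bad_g5 h1 h2 h3 hb' with h' | h'
      exacts [hab h', hcd h']
    have hbd : ¬ Bad ρ b d := fun hb' => by
      rcases bad_g2 (h1.trans h2) h3 hb' with h' | h'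
      exacts [hab h', had h']
    have hcb : ¬ Bad ρ c b := fun hb' => by
      rcases bad_g3 h2 h3 hb' with h' | h'
      exacts [hcd h', hbd h']
    have hac : ¬ Bad ρ a c := fun hb' => by
      rcases bad_g3 h1 h2 hb' with h' | h'
      exacts [hab h', hcb h']
    apply hne
    have h1' : cls S ρ p = cls S ρ a := cls_eq_of_grel (mem_cls.1 ha).2
    have h2' : cls S ρ q = cls S ρ c := cls_eq_of_grel (mem_cls.1 hc).2
    rw [h1', h2', cls_eq_of_grel (grel_of_lt h1 hac)]

lemma mem_of_mem_tauP {S : Finset ℕ} {ρ : Finset (Finset ℕ)} {B : Finset ℕ}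
    (hB : B ∈ tauP S ρ) {x : ℕ} (hx : x ∈ B) : B = cls S ρ x := by
  obtain ⟨w, hw, rfl⟩ := mem_image.1 hB
  exact cls_eq_of_grel (mem_cls.1 hx).2

lemma crossing_of_bad {π ρ : Finset (Finset ℕ)}
    {B : Finset ℕ} (hB : B ∈ π) {x y : ℕ} (hx : x ∈ B) (hy : y ∈ B)
    (hxy : x < y) (hbad : Bad ρ x y) : Crossing (interleaved π ρ) := by
  obtain ⟨R, hR, u, hu, v, hv, hp⟩ := hbad
  have hBmem : B.image (fun t => 2 * t) ∈ interleaved π ρ :=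
    mem_union_left _ (mem_image_of_mem _ hB)
  have hRmem : R.image (fun t => 2 * t + 1) ∈ interleaved π ρ :=
    mem_union_right _ (mem_image_of_mem _ hR)
  have hne : B.image (fun t => 2 * t) ≠ R.image (fun t => 2 * t + 1) := by
    intro hEq
    have : (2 * x) ∈ R.image (fun t => 2 * t + 1) := hEq ▸ mem_image_of_mem _ hx
    obtain ⟨w, -, hw⟩ := mem_image.1 this
    omega
  rcases hp with ⟨h1, h2, h3⟩ | ⟨h1, h2, h3⟩
  · exact ⟨_, hBmem, _, hRmem, hne, 2 * x, mem_image_of_mem _ hx,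
      2 * y, mem_image_of_mem _ hy, 2 * u + 1, mem_image_of_mem _ hu,
      2 * v + 1, mem_image_of_mem _ hv, by omega, by omega, by omega⟩
  · exact ⟨_, hRmem, _, hBmem, hne.symm, 2 * u + 1, mem_image_of_mem _ hu,
      2 * v + 1, mem_image_of_mem _ hv, 2 * x, mem_image_of_mem _ hx,
      2 * y, mem_image_of_mem _ hy, by omega, by omega, by omega⟩

lemma bad_of_crossing {S : Finset ℕ} {π ρ : Finset (Finset ℕ)}
    (hπ : π ∈ NCP S) (hρ : ρ ∈ NCP S)
    (hc : Crossing (interleaved π ρ)) :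
    ∃ B ∈ π, ∃ x ∈ B, ∃ y ∈ B, x < y ∧ Bad ρ x y := by
  obtain ⟨B, hB, B', hB', hne, a, ha, b, hb, c, hc', d, hd, h1, h2, h3⟩ := hc
  rcases mem_union.1 hB with hBe | hBo <;> rcases mem_union.1 hB' with hBe' | hBo'
  · -- both even: crossing of π
    obtain ⟨P, hP, rfl⟩ := mem_image.1 hBe
    obtain ⟨Q, hQ, rfl⟩ := mem_image.1 hBe'
    obtain ⟨a', ha', rfl⟩ := mem_image.1 ha
    obtain ⟨b', hb', rfl⟩ := mem_image.1 hb
    obtain ⟨c', hc'', rfl⟩ := mem_image.1 hc'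
    obtain ⟨d', hd', rfl⟩ := mem_image.1 hd
    have hPQ : P ≠ Q := fun hEq => hne (by rw [hEq])
    exact absurd ⟨P, hP, Q, hQ, hPQ, a', ha', b', hb', c', hc'', d', hd',
      by omega, by omega, by omega⟩ (NCP_not_crossing hπ)
  · -- B even, B' odd : pattern 1
    obtain ⟨P, hP, rfl⟩ := mem_image.1 hBe
    obtain ⟨R, hR, rfl⟩ := mem_image.1 hBo'
    obtain ⟨x, hx, rfl⟩ := mem_image.1 ha
    obtain ⟨y, hy, rfl⟩ := mem_image.1 hb
    obtain ⟨u, hu, rfl⟩ := mem_image.1 hc'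
    obtain ⟨v, hv, rfl⟩ := mem_image.1 hd
    exact ⟨P, hP, x, hx, y, hy, by omega,
      R, hR, u, hu, v, hv, Or.inl (by omega)⟩
  · -- B odd, B' even : pattern 2
    obtain ⟨R, hR, rfl⟩ := mem_image.1 hBo
    obtain ⟨P, hP, rfl⟩ := mem_image.1 hBe'
    obtain ⟨u, hu, rfl⟩ := mem_image.1 ha
    obtain ⟨v, hv, rfl⟩ := mem_image.1 hb
    obtain ⟨x, hx, rfl⟩ := mem_image.1 hc'
    obtain ⟨y, hy, rfl⟩ := mem_image.1 hd
    exact ⟨P, hP, x, hx, y, hy, by omega,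
      R, hR, u, hu, v, hv, Or.inr (by omega)⟩
  · -- both odd : crossing of ρ
    obtain ⟨P, hP, rfl⟩ := mem_image.1 hBo
    obtain ⟨Q, hQ, rfl⟩ := mem_image.1 hBo'
    obtain ⟨a', ha', rfl⟩ := mem_image.1 ha
    obtain ⟨b', hb', rfl⟩ := mem_image.1 hb
    obtain ⟨c', hc'', rfl⟩ := mem_image.1 hc'
    obtain ⟨d', hd', rfl⟩ := mem_image.1 hd
    have hPQ : P ≠ Q := fun hEq => hne (by rw [hEq])
    exact absurd ⟨P, hP, Q, hQ, hPQ, a', ha', b', hb', c', hc'', d', hd',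
      by omega, by omega, by omega⟩ (NCP_not_crossing hρ)

/-- non-crossing of the interleaving is equivalent to refining the goodness classes. -/
lemma noCross_iff_refines_tauP {S : Finset ℕ} {π ρ : Finset (Finset ℕ)}
    (hπ : π ∈ NCP S) (hρ : ρ ∈ NCP S) :
    ¬ Crossing (interleaved π ρ) ↔ Refines π (tauP S ρ) := by
  constructor
  · intro h B hB
    obtain ⟨x₀, hx₀⟩ := NCP_block_nonempty hπ hB
    have hx₀S : x₀ ∈ S := NCP_block_subset hπ hB hx₀
    refine ⟨cls S ρ x₀, mem_image_of_mem _ hx₀S, fun y hy => ?_⟩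
    have hyS : y ∈ S := NCP_block_subset hπ hB hy
    refine mem_cls.2 ⟨hyS, ?_⟩
    rcases Nat.lt_trichotomy x₀ y with hlt | rfl | hlt
    · exact grel_of_lt hlt fun hb => h (crossing_of_bad hB hx₀ hy hlt hb)
    · exact grel_refl _
    · exact grel_symm (grel_of_lt hlt fun hb => h (crossing_of_bad hB hy hx₀ hlt hb))
  · intro h hc
    obtain ⟨B, hB, x, hx, y, hy, hxy, hbad⟩ := bad_of_crossing hπ hρ hc
    obtain ⟨B', hB', hsub⟩ := h B hB
    obtain ⟨w, hw, rfl⟩ := mem_image.1 hB'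
    exact grel_not_bad hxy
      (grel_trans (grel_symm (mem_cls.1 (hsub hx)).2) (mem_cls.1 (hsub hy)).2) hbad

/-- non-crossing of the interleaving is equivalent to refining the Kreweras complement. -/
lemma noCross_iff_refines_K {S : Finset ℕ} {π ρ : Finset (Finset ℕ)}
    {K : Finset ℕ → Finset (Finset ℕ) → Finset (Finset ℕ)}
    (hK : ∀ S : Finset ℕ, ∀ π ∈ NCP S, IsKreweras S π (K S π))
    (hπ : π ∈ NCP S) (hρ : ρ ∈ NCP S) :
    ¬ Crossing (interleaved π ρ) ↔ Refines ρ (K S π) := by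
  obtain ⟨hKmem, hKnc, hKmax⟩ := hK S π hπ
  constructor
  · intro h; exact hKmax ρ hρ h
  · intro h hc
    obtain ⟨B, hB, x, hx, y, hy, hxy, hbad⟩ := bad_of_crossing hπ hρ hc
    exact hKnc (crossing_of_bad hB hx hy hxy (bad_mono h hbad))

lemma sum_refines {S : Finset ℕ} {τ : Finset (Finset ℕ)} (hτ : τ ∈ NCP S)
    (F : Finset ℕ → ℂ) :
    ∑ π ∈ (NCP S).filter (fun π => Refines π τ), ∏ B ∈ π, F B
      = ∏ C ∈ τ, ∑ σ ∈ NCP C, ∏ B ∈ σ, F B := by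
  classical
  rw [Finset.prod_sum]
  symm
  refine Finset.sum_bij' (i := fun p _ => τ.attach.biUnion fun C => p C.1 C.2)
    (j := fun π _ => fun C _ => π.filter (· ⊆ C)) ?_ ?_ ?_ ?_ ?_
  · -- i maps into the filter set
    intro p hp
    have hp' : ∀ C (hC : C ∈ τ), p C hC ∈ NCP C := Finset.mem_pi.1 hp
    have hBfact : ∀ {B : Finset ℕ}, B ∈ τ.attach.biUnion (fun C => p C.1 C.2) →
        ∃ C : {x // x ∈ τ}, B ∈ p C.1 C.2 ∧ B ⊆ C.1 ∧ B.Nonempty := by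
      intro B hB
      obtain ⟨C, -, hBC⟩ := Finset.mem_biUnion.1 hB
      exact ⟨C, hBC, NCP_block_subset (hp' C.1 C.2) hBC,
        NCP_block_nonempty (hp' C.1 C.2) hBC⟩
    refine mem_filter.2 ⟨mem_NCP.2 ⟨⟨?_, ?_, ?_⟩, ?_⟩, ?_⟩
    · intro B hB; exact (hBfact hB).choose_spec.2.2
    · intro B hB
      obtain ⟨C, -, hsub, -⟩ := hBfact hB
      exact hsub.trans (NCP_block_subset hτ C.2)
    · intro x hx
      obtain ⟨C, hC, hxC⟩ := NCP_exists_block hτ hx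
      obtain ⟨B, hB, hxB⟩ := NCP_exists_block (hp' C hC) hxC
      refine ⟨B, ⟨Finset.mem_biUnion.2 ⟨⟨C, hC⟩, Finset.mem_attach _ _, hB⟩, hxB⟩, ?_⟩
      rintro B' ⟨hB', hxB'⟩
      obtain ⟨C', hBC', hsub', -⟩ := hBfact hB'
      have hCC : C'.1 = C := NCP_block_eq hτ C'.2 hC (hsub' hxB') hxC
      obtain ⟨Cv, hCv⟩ := C'
      subst hCC
      exact NCP_block_eq (hp' Cv hCv) hBC' hB hxB' hxB
    · rintro ⟨B, hB, B', hB', hne, a, ha, b, hb, c, hcc, d, hd, h1, h2, h3⟩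
      obtain ⟨C, hBC, hsub, -⟩ := hBfact hB
      obtain ⟨C', hBC', hsub', -⟩ := hBfact hB'
      rcases eq_or_ne C C' with rfl | hCC
      · exact NCP_not_crossing (hp' C.1 C.2)
          ⟨B, hBC, B', hBC', hne, a, ha, b, hb, c, hcc, d, hd, h1, h2, h3⟩
      · have hCC1 : C.1 ≠ C'.1 := fun hEq => hCC (Subtype.ext hEq)
        exact NCP_not_crossing hτ
          ⟨C.1, C.2, C'.1, C'.2, hCC1, a, hsub ha, b, hsub hb, c, hsub' hcc,
            d, hsub' hd, h1, h2, h3⟩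
    · intro B hB
      obtain ⟨C, -, hsub, -⟩ := hBfact hB
      exact ⟨C.1, C.2, hsub⟩
  · -- j maps into the pi set
    intro π hπ
    obtain ⟨hπN, hπR⟩ := mem_filter.1 hπ
    refine Finset.mem_pi.2 fun C hC => mem_NCP.2 ⟨⟨?_, ?_, ?_⟩, ?_⟩
    · intro B hB; exact NCP_block_nonempty hπN (mem_filter.1 hB).1
    · intro B hB; exact (mem_filter.1 hB).2
    · intro x hx
      have hxS : x ∈ S := NCP_block_subset hτ hC hx
      obtain ⟨B, hB, hxB⟩ := NCP_exists_block hπN hxS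
      obtain ⟨C', hC', hsub⟩ := hπR B hB
      have : C' = C := NCP_block_eq hτ hC' hC (hsub hxB) hx
      subst this
      refine ⟨B, ⟨mem_filter.2 ⟨hB, hsub⟩, hxB⟩, ?_⟩
      rintro B' ⟨hB', hxB'⟩
      exact NCP_block_eq hπN (mem_filter.1 hB').1 hB hxB' hxB
    · rintro ⟨B, hB, B', hB', hne, rest⟩
      exact NCP_not_crossing hπN
        ⟨B, (mem_filter.1 hB).1, B', (mem_filter.1 hB').1, hne, rest⟩
  · -- left inverse
    intro p hp
    have hp' : ∀ C (hC : C ∈ τ), p C hC ∈ NCP C := Finset.mem_pi.1 hp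
    funext C hC
    ext B
    simp only [mem_filter, Finset.mem_biUnion]
    constructor
    · rintro ⟨⟨C', -, hBC'⟩, hsub⟩
      obtain ⟨x, hx⟩ := NCP_block_nonempty (hp' C'.1 C'.2) hBC'
      have hCC : C'.1 = C :=
        NCP_block_eq hτ C'.2 hC (NCP_block_subset (hp' C'.1 C'.2) hBC' hx) (hsub hx)
      obtain ⟨Cv, hCv⟩ := C'
      subst hCC
      exact hBC'
    · intro hB
      exact ⟨⟨⟨C, hC⟩, Finset.mem_attach _ _, hB⟩,
        NCP_block_subset (hp' C hC) hB⟩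
  · -- right inverse
    intro π hπ
    obtain ⟨hπN, hπR⟩ := mem_filter.1 hπ
    ext B
    simp only [Finset.mem_biUnion, mem_filter]
    constructor
    · rintro ⟨C, -, hB, -⟩
      exact hB
    · intro hB
      obtain ⟨C, hC, hsub⟩ := hπR B hB
      exact ⟨⟨C, hC⟩, Finset.mem_attach _ _, hB, hsub⟩
  · -- products agree
    intro p hp
    have hp' : ∀ C (hC : C ∈ τ), p C hC ∈ NCP C := Finset.mem_pi.1 hp
    rw [Finset.prod_biUnion]
    intro C hC C' hC' hne
    simp only [Function.onFun]
    rw [Finset.disjoint_left]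
    intro B hB hB'
    obtain ⟨x, hx⟩ := NCP_block_nonempty (hp' C.1 C.2) hB
    have : C.1 = C'.1 :=
      NCP_block_eq hτ C.2 C'.2 (NCP_block_subset (hp' C.1 C.2) hB hx)
        (NCP_block_subset (hp' C'.1 C'.2) hB' hx)
    exact hne (Subtype.ext this)

end DDProof

/-- Free cumulant function of `t`, defined by the Möbius-type recursion. -/
noncomputable def cum (t : Finset ℕ → ℂ) (C : Finset ℕ) : ℂ :=
  t C - ∑ π ∈ ((NCP C).erase {C}).attach, ∏ B ∈ π.1.attach, cum t B.1
termination_by C.card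
decreasing_by
  have hπ := π.2
  have hmem : π.1 ∈ NCP C := (Finset.mem_erase.1 hπ).2
  have hne : π.1 ≠ {C} := (Finset.mem_erase.1 hπ).1
  exact Finset.card_lt_card (NCP_block_ssubset hmem hne B.2)

section DDProof2

open Finset

lemma cum_spec (t : Finset ℕ → ℂ) {C : Finset ℕ} (hC : C.Nonempty) :
    t C = ∑ π ∈ NCP C, ∏ B ∈ π, cum t B := by
  have h1 : {C} ∈ NCP C := singleton_mem_NCP hC
  rw [← Finset.insert_erase h1, Finset.sum_insert (notMem_erase _ _),
    Finset.prod_singleton]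
  have h2 : ∑ π ∈ ((NCP C).erase {C}).attach, ∏ B ∈ π.1.attach, cum t B.1
      = ∑ π ∈ (NCP C).erase {C}, ∏ B ∈ π, cum t B := by
    rw [← Finset.sum_attach ((NCP C).erase {C}) (fun π => ∏ B ∈ π, cum t B)]
    exact Finset.sum_congr rfl fun π _ => Finset.prod_attach _ _
  have h3 : cum t C = t C - ∑ π ∈ (NCP C).erase {C}, ∏ B ∈ π, cum t B := by
    rw [cum, h2]
  rw [h3]; ring

/-- The central double-sum chain. -/
lemma chain {k : ℕ} (z : ℕ → ℂ) (dd : Multiset ℂ → ℂ) (mc : Finset ℕ → ℂ)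
    (hmc : ∀ S ⊆ Finset.Icc 1 k, S.Nonempty →
      dd (S.val.map z) = ∑ π ∈ NCP S, ∏ B ∈ π, mc B)
    (K : Finset ℕ → Finset (Finset ℕ) → Finset (Finset ℕ))
    (hK : ∀ S : Finset ℕ, ∀ π ∈ NCP S, IsKreweras S π (K S π))
    {S : Finset ℕ} (hS : S ⊆ Finset.Icc 1 k)
    (tt TT : Finset ℕ → ℂ)
    (hmom : ∀ C : Finset ℕ, C ⊆ S → C.Nonempty → TT C = ∑ σ ∈ NCP C, ∏ B ∈ σ, tt B) :
    ∑ π ∈ NCP S, (∏ B ∈ π, mc B) * ∏ B ∈ K S π, TT B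
      = ∑ ρ ∈ NCP S, (∏ B ∈ ρ, tt B) * ∏ C ∈ tauP S ρ, dd (C.val.map z) := by
  classical
  have hKmem : ∀ π ∈ NCP S, K S π ∈ NCP S := fun π hπ => (hK S π hπ).1
  calc
    ∑ π ∈ NCP S, (∏ B ∈ π, mc B) * ∏ B ∈ K S π, TT B
        = ∑ π ∈ NCP S, ∑ ρ ∈ NCP S,
            (if ¬ Crossing (interleaved π ρ) then (∏ B ∈ π, mc B) * ∏ B ∈ ρ, tt B
             else 0) := by
          refine Finset.sum_congr rfl fun π hπ => ?_
          have h1 : ∏ B ∈ K S π, TT B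
              = ∑ ρ ∈ (NCP S).filter (fun ρ => Refines ρ (K S π)), ∏ B ∈ ρ, tt B := by
            rw [sum_refines (hKmem π hπ) tt]
            refine Finset.prod_congr rfl fun B hB => ?_
            exact hmom B (NCP_block_subset (hKmem π hπ) hB)
              (NCP_block_nonempty (hKmem π hπ) hB)
          have h2 : (NCP S).filter (fun ρ => Refines ρ (K S π))
              = (NCP S).filter (fun ρ => ¬ Crossing (interleaved π ρ)) := by
            refine Finset.filter_congr fun ρ hρ => ?_
            exact (noCross_iff_refines_K hK hπ hρ).symm
          rw [h1, h2, Finset.sum_filter, Finset.mul_sum]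
          refine Finset.sum_congr rfl fun ρ hρ => ?_
          split <;> simp
    _ = ∑ ρ ∈ NCP S, ∑ π ∈ NCP S,
            (if ¬ Crossing (interleaved π ρ) then (∏ B ∈ π, mc B) * ∏ B ∈ ρ, tt B
             else 0) := Finset.sum_comm
    _ = ∑ ρ ∈ NCP S, (∏ B ∈ ρ, tt B) * ∏ C ∈ tauP S ρ, dd (C.val.map z) := by
          refine Finset.sum_congr rfl fun ρ hρ => ?_
          have h2 : (NCP S).filter (fun π => ¬ Crossing (interleaved π ρ))
              = (NCP S).filter (fun π => Refines π (tauP S ρ)) := by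
            refine Finset.filter_congr fun π hπ => ?_
            exact noCross_iff_refines_tauP hπ hρ
          have h3 : ∑ π ∈ NCP S,
              (if ¬ Crossing (interleaved π ρ) then (∏ B ∈ π, mc B) * ∏ B ∈ ρ, tt B
               else 0)
              = ∑ π ∈ (NCP S).filter (fun π => Refines π (tauP S ρ)),
                  (∏ B ∈ π, mc B) * ∏ B ∈ ρ, tt B := by
            rw [← Finset.sum_filter, h2]
          rw [h3, ← Finset.sum_mul, sum_refines tauP_mem_NCP mc]
          rw [mul_comm]
          congr 1
          refine Finset.prod_congr rfl fun C hC => ?_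
          exact (hmc C ((NCP_block_subset (tauP_mem_NCP) hC).trans hS)
            (NCP_block_nonempty tauP_mem_NCP hC)).symm

lemma NCP_empty : NCP (∅ : Finset ℕ) = {∅} := by
  ext π
  simp only [mem_singleton]
  constructor
  · intro h
    rw [Finset.eq_empty_iff_forall_notMem]
    intro B hB
    obtain ⟨x, hx⟩ := NCP_block_nonempty h hB
    exact absurd (NCP_block_subset h hB hx) (Finset.notMem_empty x)
  · rintro rfl
    refine mem_NCP.2 ⟨⟨?_, ?_, ?_⟩, ?_⟩
    · intro B hB; exact absurd hB (Finset.notMem_empty B)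
    · intro B hB; exact absurd hB (Finset.notMem_empty B)
    · intro x hx; exact absurd hx (Finset.notMem_empty x)
    · rintro ⟨B, hB, -⟩; exact absurd hB (Finset.notMem_empty B)

lemma sort_insert_max {a : ℕ} {C : Finset ℕ} (h : ∀ y ∈ C, y ≤ a) (ha : a ∉ C) :
    (insert a C).sort (· ≤ ·) = C.sort (· ≤ ·) ++ [a] := by
  refine List.Perm.eq_of_pairwise' (Finset.pairwise_sort _ _) ?_ ?_
  rotate_left
  · have h1 : ((insert a C).sort (· ≤ ·) : Multiset ℕ)
        = ((a :: C.sort (· ≤ ·) : List ℕ) : Multiset ℕ) := by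
      rw [Finset.sort_eq, ← Multiset.cons_coe, Finset.sort_eq,
        Finset.insert_val_of_notMem ha]
    exact (Multiset.coe_eq_coe.1 h1).trans (List.perm_append_singleton a _).symm
  · refine List.pairwise_append.2 ⟨Finset.pairwise_sort _ _, List.pairwise_singleton _ a, ?_⟩
    intro x hx y hy
    rw [List.mem_singleton] at hy
    subst hy
    exact h x ((Finset.mem_sort _).1 hx)

lemma ordProd_empty {N : ℕ} (A : ℕ → Matrix (Fin N) (Fin N) ℂ) : ordProd ∅ A = 1 := by
  simp [ordProd]

lemma ordProd_insert_min {N : ℕ} (A : ℕ → Matrix (Fin N) (Fin N) ℂ) {a : ℕ} {C : Finset ℕ}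
    (h : ∀ y ∈ C, a ≤ y) (ha : a ∉ C) :
    ordProd (insert a C) A = A a * ordProd C A := by
  unfold ordProd
  rw [Finset.sort_insert _ h ha, List.map_cons, List.prod_cons]

lemma ordProd_insert_max {N : ℕ} (A : ℕ → Matrix (Fin N) (Fin N) ℂ) {a : ℕ} {C : Finset ℕ}
    (h : ∀ y ∈ C, y ≤ a) (ha : a ∉ C) :
    ordProd (insert a C) A = ordProd C A * A a := by
  unfold ordProd
  rw [sort_insert_max h ha, List.map_append, List.prod_append, List.map_singleton,
    List.prod_singleton]

lemma ntr_smul {N : ℕ} (c : ℂ) (M : Matrix (Fin N) (Fin N) ℂ) :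
    ntr (c • M) = c * ntr M := by
  unfold ntr
  rw [Matrix.trace_smul, smul_eq_mul]
  ring

lemma ntr_one {N : ℕ} (hN : N ≠ 0) : ntr (1 : Matrix (Fin N) (Fin N) ℂ) = 1 := by
  unfold ntr
  rw [Matrix.trace_one, Fintype.card_fin]
  have : (N : ℂ) ≠ 0 := Nat.cast_ne_zero.2 hN
  field_simp

/-- the block of `σ` containing `s` -/
lemma filter_mem_block {S : Finset ℕ} {σ : Finset (Finset ℕ)} {s : ℕ}
    (hσ : σ ∈ NCP S) (hs : s ∈ S) :
    ∃ Bs, Bs ∈ σ ∧ s ∈ Bs ∧ σ.filter (fun B => s ∈ B) = {Bs} := by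
  obtain ⟨Bs, hBs, hsBs⟩ := NCP_exists_block hσ hs
  refine ⟨Bs, hBs, hsBs, ?_⟩
  ext B
  simp only [mem_filter, mem_singleton]
  constructor
  · rintro ⟨hB, hsB⟩
    exact NCP_block_eq hσ hB hBs hsB hsBs
  · rintro rfl
    exact ⟨hBs, hsBs⟩

lemma pTr_eq {N : ℕ} (A : ℕ → Matrix (Fin N) (Fin N) ℂ) {S : Finset ℕ}
    {σ : Finset (Finset ℕ)} {s : ℕ} (hσ : σ ∈ NCP S) (hs : s ∈ S)
    {Bs : Finset ℕ} (hBs : Bs ∈ σ) (hsBs : s ∈ Bs) :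
    pTr s σ A
      = (∏ B ∈ σ.filter (fun B => s ∉ B), ntr (ordProd B A)) • ordProd (Bs.erase s) A := by
  obtain ⟨Bs', hBs', hsBs', hfil⟩ := filter_mem_block hσ hs
  have : Bs' = Bs := NCP_block_eq hσ hBs' hBs hsBs' hsBs
  subst this
  unfold pTr
  rw [hfil, Finset.sup_singleton]
  rfl

lemma ntr_pTr_plain {N : ℕ} (A : ℕ → Matrix (Fin N) (Fin N) ℂ) {S : Finset ℕ}
    {σ : Finset (Finset ℕ)} {s : ℕ} (hσ : σ ∈ NCP S) (hs : s ∈ S) :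
    ntr (pTr s σ A) = ∏ B ∈ σ, ntr (ordProd (B.erase s) A) := by
  obtain ⟨Bs, hBs, hsBs, hfil⟩ := filter_mem_block hσ hs
  rw [pTr_eq A hσ hs hBs hsBs, ntr_smul,
    ← Finset.prod_filter_mul_prod_filter_not σ (fun B => s ∈ B)
      (fun B => ntr (ordProd (B.erase s) A)), hfil, Finset.prod_singleton]
  have h2 : ∏ B ∈ σ.filter (fun B => s ∉ B), ntr (ordProd (B.erase s) A)
      = ∏ B ∈ σ.filter (fun B => s ∉ B), ntr (ordProd B A) := by
    refine Finset.prod_congr rfl fun B hB => ?_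
    rw [Finset.erase_eq_of_notMem (mem_filter.1 hB).2]
  rw [h2]
  ring

lemma ntr_pTr_mulRight {N : ℕ} (A : ℕ → Matrix (Fin N) (Fin N) ℂ) {S : Finset ℕ}
    {σ : Finset (Finset ℕ)} {s : ℕ} (hσ : σ ∈ NCP S) (hs : s ∈ S)
    (hmax : ∀ B ∈ σ, ∀ y ∈ B, y ≤ s) :
    ntr (pTr s σ A * A s) = ∏ B ∈ σ, ntr (ordProd B A) := by
  obtain ⟨Bs, hBs, hsBs, hfil⟩ := filter_mem_block hσ hs
  rw [pTr_eq A hσ hs hBs hsBs, smul_mul_assoc, ntr_smul]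
  have h1 : ordProd (Bs.erase s) A * A s = ordProd Bs A := by
    rw [← ordProd_insert_max A (fun y hy => hmax Bs hBs y (Finset.mem_of_mem_erase hy))
      (Finset.notMem_erase s Bs), Finset.insert_erase hsBs]
  rw [h1, ← Finset.prod_filter_mul_prod_filter_not σ (fun B => s ∈ B)
    (fun B => ntr (ordProd B A)), hfil, Finset.prod_singleton]
  ring

lemma ntr_pTr_mulLeft {N : ℕ} (A : ℕ → Matrix (Fin N) (Fin N) ℂ) {S : Finset ℕ}
    {σ : Finset (Finset ℕ)} {s m : ℕ} (hσ : σ ∈ NCP S) (hs : s ∈ S)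
    (hmin : ∀ B ∈ σ, ∀ y ∈ B, m < y) :
    ntr (A m * pTr s σ A)
      = (∏ B ∈ σ.filter (fun B => s ∉ B), ntr (ordProd B A))
        * ntr (ordProd (insert m ((σ.filter (fun B => s ∈ B)).sup id |>.erase s)) A) := by
  obtain ⟨Bs, hBs, hsBs, hfil⟩ := filter_mem_block hσ hs
  rw [pTr_eq A hσ hs hBs hsBs, mul_smul_comm, ntr_smul, hfil, Finset.sup_singleton]
  have hins : ordProd (insert m ((id Bs).erase s)) A = A m * ordProd (Bs.erase s) A := by
    refine ordProd_insert_min A (fun y hy => le_of_lt (hmin Bs hBs y (Finset.mem_of_mem_erase hy))) ?_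
    intro hm
    exact lt_irrefl m (hmin Bs hBs m (Finset.mem_of_mem_erase hm))
  rw [hins]

/-- removal moment formula: `t (C.erase m)` expands over `NCP C`. -/
lemma moment_remove (t : Finset ℕ → ℂ) (ht : t ∅ = 1) (m : ℕ) {C : Finset ℕ}
    (hC : C.Nonempty) :
    t (C.erase m)
      = ∑ σ ∈ NCP C, ∏ B ∈ σ,
          (if B = {m} then 1 else if m ∈ B then 0 else cum t B) := by
  classical
  by_cases hm : m ∈ C
  · -- split off σ's where {m} is not a singleton block: those vanish
    rw [← Finset.sum_filter_add_sum_filter_not (NCP C) (fun σ => {m} ∈ σ)]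
    have hzero : ∑ σ ∈ (NCP C).filter (fun σ => ¬ {m} ∈ σ), ∏ B ∈ σ,
        (if B = {m} then 1 else if m ∈ B then 0 else cum t B) = 0 := by
      refine Finset.sum_eq_zero fun σ hσ => ?_
      obtain ⟨hσN, hσs⟩ := mem_filter.1 hσ
      obtain ⟨B, hB, hmB⟩ := NCP_exists_block hσN hm
      have hBne : B ≠ {m} := fun hEq => hσs (hEq ▸ hB)
      refine Finset.prod_eq_zero hB ?_
      rw [if_neg hBne, if_pos hmB]
    rw [hzero, add_zero]
    -- bijection with NCP (C.erase m)
    have hmC' : m ∉ C.erase m := Finset.notMem_erase m C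
    have hCis : insert m (C.erase m) = C := Finset.insert_erase hm
    have hbij : ∑ σ ∈ (NCP C).filter (fun σ => {m} ∈ σ), ∏ B ∈ σ,
        (if B = {m} then 1 else if m ∈ B then 0 else cum t B)
        = ∑ σ' ∈ NCP (C.erase m), ∏ B ∈ σ', cum t B := by
      refine Finset.sum_bij' (i := fun σ _ => σ.erase {m}) (j := fun σ' _ => insert {m} σ')
        ?_ ?_ ?_ ?_ ?_
      · intro σ hσ
        obtain ⟨hσN, hσs⟩ := mem_filter.1 hσ
        have hσN' : σ ∈ NCP (insert m (C.erase m)) := by rw [hCis]; exact hσN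
        exact erase_singleton_mem_NCP hmC' hσN' hσs
      · intro σ' hσ'
        have h1 : insert {m} σ' ∈ NCP (insert m (C.erase m)) :=
          insert_singleton_mem_NCP hmC' hσ'
        rw [hCis] at h1
        exact mem_filter.2 ⟨h1, mem_insert_self _ _⟩
      · intro σ hσ
        exact Finset.insert_erase (mem_filter.1 hσ).2
      · intro σ' hσ'
        exact Finset.erase_insert (singleton_not_mem_NCP hmC' hσ')
      · intro σ hσ
        obtain ⟨hσN, hσs⟩ := mem_filter.1 hσ
        have : ∀ B ∈ σ.erase {m}, m ∉ B := by
          intro B hB hmB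
          exact (mem_erase.1 hB).1
            (NCP_block_eq hσN (mem_erase.1 hB).2 hσs hmB (mem_singleton_self m))
        show (∏ B ∈ σ, (if B = {m} then 1 else if m ∈ B then 0 else cum t B))
          = ∏ B ∈ σ.erase {m}, cum t B
        conv_lhs => rw [← Finset.insert_erase hσs]
        rw [Finset.prod_insert (notMem_erase _ _), if_pos rfl, one_mul]
        refine Finset.prod_congr rfl fun B hB => ?_
        rw [if_neg (mem_erase.1 hB).1, if_neg (this B hB)]
    rw [hbij]
    rcases Finset.eq_empty_or_nonempty (C.erase m) with hCe | hCe
    · rw [hCe, NCP_empty, Finset.sum_singleton, Finset.prod_empty, ht]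
    · exact cum_spec t hCe
  · rw [Finset.erase_eq_of_notMem hm, cum_spec t hC]
    refine Finset.sum_congr rfl fun σ hσ => Finset.prod_congr rfl fun B hB => ?_
    have hsub := NCP_block_subset hσ hB
    have h1 : B ≠ {m} := by
      rintro rfl
      exact hm (hsub (mem_singleton_self m))
    have h2 : m ∉ B := fun hmB => hm (hsub hmB)
    rw [if_neg h1, if_neg h2]

/-- the rotation `k ↦ 1`. -/
def rotf (k : ℕ) (x : ℕ) : ℕ := if x = k then 1 else x

/-- the rotation `1 ↦ k`. -/
def rotg (k : ℕ) (x : ℕ) : ℕ := if x = 1 then k else x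

lemma rotf_of_ne {k x : ℕ} (h : x ≠ k) : rotf k x = x := if_neg h
lemma rotf_k {k : ℕ} : rotf k k = 1 := if_pos rfl
lemma rotg_of_ne {k x : ℕ} (h : x ≠ 1) : rotg k x = x := if_neg h
lemma rotg_one {k : ℕ} : rotg k 1 = k := if_pos rfl

lemma rotg_rotf {k x : ℕ} (hx : 2 ≤ x) (hxk : x ≤ k) : rotg k (rotf k x) = x := by
  unfold rotf rotg; split_ifs <;> omega

lemma rotf_rotg {k x : ℕ} (hk : 2 ≤ k) (hx : 1 ≤ x) (hxk : x ≤ k - 1) :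
    rotf k (rotg k x) = x := by
  unfold rotf rotg; split_ifs <;> omega

lemma image_rotg_rotf {k : ℕ} {B : Finset ℕ} (hB : ∀ x ∈ B, 2 ≤ x ∧ x ≤ k) :
    (B.image (rotf k)).image (rotg k) = B := by
  rw [Finset.image_image]
  have h : ∀ x ∈ B, (rotg k ∘ rotf k) x = id x := fun x hx =>
    rotg_rotf (hB x hx).1 (hB x hx).2
  rw [Finset.image_congr fun x hx => h x hx, Finset.image_id]

lemma image_rotf_rotg {k : ℕ} (hk : 2 ≤ k) {B : Finset ℕ}
    (hB : ∀ x ∈ B, 1 ≤ x ∧ x ≤ k - 1) :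
    (B.image (rotg k)).image (rotf k) = B := by
  rw [Finset.image_image]
  have h : ∀ x ∈ B, (rotf k ∘ rotg k) x = id x := fun x hx =>
    rotf_rotg hk (hB x hx).1 (hB x hx).2
  rw [Finset.image_congr fun x hx => h x hx, Finset.image_id]

lemma mem_image_rotf_of_ne {k : ℕ} {B : Finset ℕ} {e : ℕ}
    (he : e ∈ B.image (rotf k)) (h1 : e ≠ 1) : e ∈ B := by
  obtain ⟨w, hw, hwe⟩ := Finset.mem_image.1 he
  unfold rotf at hwe
  split_ifs at hwe with h
  · omega
  · exact hwe ▸ hw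

lemma k_mem_of_one_mem_rotf {k : ℕ} {B : Finset ℕ} (hB : ∀ x ∈ B, 2 ≤ x)
    (he : (1 : ℕ) ∈ B.image (rotf k)) : k ∈ B := by
  obtain ⟨w, hw, hwe⟩ := Finset.mem_image.1 he
  unfold rotf at hwe
  split_ifs at hwe with h
  · exact h ▸ hw
  · have := hB w hw; omega

lemma mem_image_rotg_of_ne {k : ℕ} {B : Finset ℕ} {e : ℕ}
    (he : e ∈ B.image (rotg k)) (h1 : e ≠ k) : e ∈ B := by
  obtain ⟨w, hw, hwe⟩ := Finset.mem_image.1 he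
  unfold rotg at hwe
  split_ifs at hwe with h
  · omega
  · exact hwe ▸ hw

lemma one_mem_of_k_mem_rotg {k : ℕ} {B : Finset ℕ} (hB : ∀ x ∈ B, x ≤ k - 1)
    (hk : 2 ≤ k) (he : k ∈ B.image (rotg k)) : 1 ∈ B := by
  obtain ⟨w, hw, hwe⟩ := Finset.mem_image.1 he
  unfold rotg at hwe
  split_ifs at hwe with h
  · exact h ▸ hw
  · have := hB w hw; omega

lemma mem_image_rotf_self {k : ℕ} {B : Finset ℕ} {e : ℕ} (he : e ∈ B) (h1 : e ≠ k) :
    e ∈ B.image (rotf k) := by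
  refine Finset.mem_image.2 ⟨e, he, rotf_of_ne h1⟩

lemma mem_image_rotg_self {k : ℕ} {B : Finset ℕ} {e : ℕ} (he : e ∈ B) (h1 : e ≠ 1) :
    e ∈ B.image (rotg k) := by
  refine Finset.mem_image.2 ⟨e, he, rotg_of_ne h1⟩

lemma crossing_image_rotf {k : ℕ} (hk : 2 ≤ k) {π : Finset (Finset ℕ)}
    (hel : ∀ B ∈ π, ∀ x ∈ B, 2 ≤ x ∧ x ≤ k) (hc : Crossing π) :
    Crossing (π.image (·.image (rotf k))) := by
  obtain ⟨B, hB, B', hB', hne, a, ha, b, hb, c, hcc, d, hd, h1, h2, h3⟩ := hc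
  have hBi : B.image (rotf k) ∈ π.image (·.image (rotf k)) := Finset.mem_image_of_mem _ hB
  have hBi' : B'.image (rotf k) ∈ π.image (·.image (rotf k)) := Finset.mem_image_of_mem _ hB'
  have hnei : B.image (rotf k) ≠ B'.image (rotf k) := by
    intro hEq
    exact hne (by rw [← image_rotg_rotf (hel B hB), hEq, image_rotg_rotf (hel B' hB')])
  have hak := hel B hB a ha
  have hbk := hel B hB b hb
  have hck := hel B' hB' c hcc
  have hdk := hel B' hB' d hd
  by_cases hdK : d = k
  · -- d = k : new pattern  1 < a < c < b  with (1,c) in B'-image, (a,b) in B-image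
    refine ⟨B'.image (rotf k), hBi', B.image (rotf k), hBi, hnei.symm,
      1, ?_, c, ?_, a, ?_, b, ?_, by omega, by omega, by omega⟩
    · exact Finset.mem_image.2 ⟨d, hd, by rw [hdK]; exact rotf_k⟩
    · exact mem_image_rotf_self hcc (by omega)
    · exact mem_image_rotf_self ha (by omega)
    · exact mem_image_rotf_self hb (by omega)
  · refine ⟨B.image (rotf k), hBi, B'.image (rotf k), hBi', hnei,
      a, mem_image_rotf_self ha (by omega), b, mem_image_rotf_self hb (by omega),
      c, mem_image_rotf_self hcc (by omega), d, mem_image_rotf_self hd (by omega),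
      h1, h2, h3⟩

lemma crossing_of_image_rotf {k : ℕ} (hk : 2 ≤ k) {π : Finset (Finset ℕ)}
    (hel : ∀ B ∈ π, ∀ x ∈ B, 2 ≤ x ∧ x ≤ k)
    (hc : Crossing (π.image (·.image (rotf k)))) : Crossing π := by
  obtain ⟨Bi, hBi, Bi', hBi', hne, a, ha, b, hb, c, hcc, d, hd, h1, h2, h3⟩ := hc
  obtain ⟨B, hB, rfl⟩ := Finset.mem_image.1 hBi
  obtain ⟨B', hB', rfl⟩ := Finset.mem_image.1 hBi'
  have hneB : B ≠ B' := fun hEq => hne (by rw [hEq])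
  have hub : ∀ {P : Finset ℕ}, P ∈ π → ∀ {e : ℕ}, e ∈ P.image (rotf k) → e ≤ k - 1 := by
    intro P hP e he
    obtain ⟨w, hw, hwe⟩ := Finset.mem_image.1 he
    have := hel P hP w hw
    unfold rotf at hwe
    split_ifs at hwe <;> omega
  have hda := hub hB' hd
  have hca := hub hB' hcc
  have hba := hub hB hb
  have hlb1 : ∀ {P : Finset ℕ}, P ∈ π → ∀ {e : ℕ}, e ∈ P.image (rotf k) → 1 ≤ e := by
    intro P hP e he
    obtain ⟨w, hw, hwe⟩ := Finset.mem_image.1 he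
    have := hel P hP w hw
    unfold rotf at hwe
    split_ifs at hwe <;> omega
  have ha1 := hlb1 hB ha
  by_cases haO : a = 1
  · -- a = 1: k ∈ B; pattern c < b < d < k
    have hkB : k ∈ B := k_mem_of_one_mem_rotf (fun x hx => (hel B hB x hx).1) (haO ▸ ha)
    refine ⟨B', hB', B, hB, hneB.symm, c, mem_image_rotf_of_ne hcc (by omega),
      d, mem_image_rotf_of_ne hd (by omega), b, mem_image_rotf_of_ne hb (by omega),
      k, hkB, h2, h3, by omega⟩
  · refine ⟨B, hB, B', hB', hneB, a, mem_image_rotf_of_ne ha haO,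
      b, mem_image_rotf_of_ne hb (by omega), c, mem_image_rotf_of_ne hcc (by omega),
      d, mem_image_rotf_of_ne hd (by omega), h1, h2, h3⟩

lemma rotf_injOn {k : ℕ} {x y : ℕ} (hx : 2 ≤ x ∧ x ≤ k) (hy : 2 ≤ y ∧ y ≤ k)
    (h : rotf k x = rotf k y) : x = y := by
  unfold rotf at h; split_ifs at h <;> omega

lemma rotP_mem_NCP {k : ℕ} (hk : 2 ≤ k) {C : Finset ℕ}
    (hC : ∀ x ∈ C, 2 ≤ x ∧ x ≤ k) {π : Finset (Finset ℕ)} (hπ : π ∈ NCP C) :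
    π.image (·.image (rotf k)) ∈ NCP (C.image (rotf k)) := by
  have hel : ∀ B ∈ π, ∀ x ∈ B, 2 ≤ x ∧ x ≤ k := fun B hB x hx =>
    hC x (NCP_block_subset hπ hB hx)
  refine mem_NCP.2 ⟨⟨?_, ?_, ?_⟩, ?_⟩
  · intro Bi hBi
    obtain ⟨B, hB, rfl⟩ := Finset.mem_image.1 hBi
    exact (NCP_block_nonempty hπ hB).image _
  · intro Bi hBi
    obtain ⟨B, hB, rfl⟩ := Finset.mem_image.1 hBi
    exact Finset.image_subset_image (NCP_block_subset hπ hB)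
  · intro y hy
    obtain ⟨x, hx, rfl⟩ := Finset.mem_image.1 hy
    obtain ⟨B, hB, hxB⟩ := NCP_exists_block hπ hx
    refine ⟨B.image (rotf k), ⟨Finset.mem_image_of_mem _ hB, Finset.mem_image_of_mem _ hxB⟩, ?_⟩
    rintro Bi' ⟨hBi', hyBi'⟩
    obtain ⟨B', hB', rfl⟩ := Finset.mem_image.1 hBi'
    obtain ⟨x', hx', hxx'⟩ := Finset.mem_image.1 hyBi'
    have : x' = x := rotf_injOn (hel B' hB' x' hx') (hC x hx) hxx'
    subst this
    rw [NCP_block_eq hπ hB' hB hx' hxB]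
  · intro hc
    exact NCP_not_crossing hπ (crossing_of_image_rotf hk hel hc)

lemma crossing_image_rotg {k : ℕ} (hk : 2 ≤ k) {π : Finset (Finset ℕ)}
    (hel : ∀ B ∈ π, ∀ x ∈ B, 1 ≤ x ∧ x ≤ k - 1) (hc : Crossing π) :
    Crossing (π.image (·.image (rotg k))) := by
  obtain ⟨B, hB, B', hB', hne, a, ha, b, hb, c, hcc, d, hd, h1, h2, h3⟩ := hc
  have hBi : B.image (rotg k) ∈ π.image (·.image (rotg k)) := Finset.mem_image_of_mem _ hB
  have hBi' : B'.image (rotg k) ∈ π.image (·.image (rotg k)) := Finset.mem_image_of_mem _ hB'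
  have hnei : B.image (rotg k) ≠ B'.image (rotg k) := by
    intro hEq
    exact hne (by rw [← image_rotf_rotg hk (hel B hB), hEq, image_rotf_rotg hk (hel B' hB')])
  have hak := hel B hB a ha
  have hbk := hel B hB b hb
  have hck := hel B' hB' c hcc
  have hdk := hel B' hB' d hd
  by_cases haO : a = 1
  · -- a = 1 : k ∈ B-image; pattern c < b < d < k
    refine ⟨B'.image (rotg k), hBi', B.image (rotg k), hBi, hnei.symm,
      c, mem_image_rotg_self hcc (by omega), d, mem_image_rotg_self hd (by omega),
      b, mem_image_rotg_self hb (by omega), k, Finset.mem_image.2 ⟨1, haO ▸ ha, rotg_one⟩,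
      h2, h3, by omega⟩
  · refine ⟨B.image (rotg k), hBi, B'.image (rotg k), hBi', hnei,
      a, mem_image_rotg_self ha haO, b, mem_image_rotg_self hb (by omega),
      c, mem_image_rotg_self hcc (by omega), d, mem_image_rotg_self hd (by omega),
      h1, h2, h3⟩

lemma crossing_of_image_rotg {k : ℕ} (hk : 2 ≤ k) {π : Finset (Finset ℕ)}
    (hel : ∀ B ∈ π, ∀ x ∈ B, 1 ≤ x ∧ x ≤ k - 1)
    (hc : Crossing (π.image (·.image (rotg k)))) : Crossing π := by
  obtain ⟨Bi, hBi, Bi', hBi', hne, a, ha, b, hb, c, hcc, d, hd, h1, h2, h3⟩ := hc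
  obtain ⟨B, hB, rfl⟩ := Finset.mem_image.1 hBi
  obtain ⟨B', hB', rfl⟩ := Finset.mem_image.1 hBi'
  have hneB : B ≠ B' := fun hEq => hne (by rw [hEq])
  have hlb : ∀ {P : Finset ℕ}, P ∈ π → ∀ {e : ℕ}, e ∈ P.image (rotg k) →
      2 ≤ e ∨ e = k := by
    intro P hP e he
    obtain ⟨w, hw, hwe⟩ := Finset.mem_image.1 he
    have := hel P hP w hw
    unfold rotg at hwe
    split_ifs at hwe <;> omega
  have hub : ∀ {P : Finset ℕ}, P ∈ π → ∀ {e : ℕ}, e ∈ P.image (rotg k) → e ≤ k := by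
    intro P hP e he
    obtain ⟨w, hw, hwe⟩ := Finset.mem_image.1 he
    have := hel P hP w hw
    unfold rotg at hwe
    split_ifs at hwe <;> omega
  by_cases hdK : d = k
  · -- d = k : 1 ∈ B', pattern 1 < a < c < b
    have h1B : (1 : ℕ) ∈ B' :=
      one_mem_of_k_mem_rotg (fun x hx => (hel B' hB' x hx).2) hk (hdK ▸ hd)
    have ha2 : 2 ≤ a := by rcases hlb hB ha with h | h <;> omega
    have hb2 : b ≤ k := hub hB hb
    have hc2 : 2 ≤ c := by rcases hlb hB' hcc with h | h <;> omega
    refine ⟨B', hB', B, hB, hneB.symm, 1, h1B,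
      c, mem_image_rotg_of_ne hcc (by omega), a, mem_image_rotg_of_ne ha (by omega),
      b, mem_image_rotg_of_ne hb (by omega), by omega, h1, h2⟩
  · have hd2 : d ≤ k := hub hB' hd
    refine ⟨B, hB, B', hB', hneB, a, mem_image_rotg_of_ne ha (by omega),
      b, mem_image_rotg_of_ne hb (by omega), c, mem_image_rotg_of_ne hcc (by omega),
      d, mem_image_rotg_of_ne hd hdK, h1, h2, h3⟩

lemma rotg_injOn {k : ℕ} (hk : 2 ≤ k) {x y : ℕ} (hx : 1 ≤ x ∧ x ≤ k - 1)
    (hy : 1 ≤ y ∧ y ≤ k - 1) (h : rotg k x = rotg k y) : x = y := by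
  unfold rotg at h; split_ifs at h <;> omega

lemma rotQ_mem_NCP {k : ℕ} (hk : 2 ≤ k) {C : Finset ℕ}
    (hC : ∀ x ∈ C, 1 ≤ x ∧ x ≤ k - 1) {π : Finset (Finset ℕ)} (hπ : π ∈ NCP C) :
    π.image (·.image (rotg k)) ∈ NCP (C.image (rotg k)) := by
  have hel : ∀ B ∈ π, ∀ x ∈ B, 1 ≤ x ∧ x ≤ k - 1 := fun B hB x hx =>
    hC x (NCP_block_subset hπ hB hx)
  refine mem_NCP.2 ⟨⟨?_, ?_, ?_⟩, ?_⟩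
  · intro Bi hBi
    obtain ⟨B, hB, rfl⟩ := Finset.mem_image.1 hBi
    exact (NCP_block_nonempty hπ hB).image _
  · intro Bi hBi
    obtain ⟨B, hB, rfl⟩ := Finset.mem_image.1 hBi
    exact Finset.image_subset_image (NCP_block_subset hπ hB)
  · intro y hy
    obtain ⟨x, hx, rfl⟩ := Finset.mem_image.1 hy
    obtain ⟨B, hB, hxB⟩ := NCP_exists_block hπ hx
    refine ⟨B.image (rotg k), ⟨Finset.mem_image_of_mem _ hB, Finset.mem_image_of_mem _ hxB⟩, ?_⟩
    rintro Bi' ⟨hBi', hyBi'⟩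
    obtain ⟨B', hB', rfl⟩ := Finset.mem_image.1 hBi'
    obtain ⟨x', hx', hxx'⟩ := Finset.mem_image.1 hyBi'
    have : x' = x := rotg_injOn hk (hel B' hB' x' hx') (hC x hx) hxx'
    subst this
    rw [NCP_block_eq hπ hB' hB hx' hxB]
  · intro hc
    exact NCP_not_crossing hπ (crossing_of_image_rotg hk hel hc)

lemma sum_NCP_rot {k : ℕ} (hk : 2 ≤ k) {C : Finset ℕ} (hC : ∀ x ∈ C, 2 ≤ x ∧ x ≤ k)
    (G : Finset (Finset ℕ) → ℂ) :
    ∑ π' ∈ NCP (C.image (rotf k)), G π'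
      = ∑ π ∈ NCP C, G (π.image (·.image (rotf k))) := by
  have hC' : ∀ y ∈ C.image (rotf k), 1 ≤ y ∧ y ≤ k - 1 := by
    intro y hy
    obtain ⟨x, hx, rfl⟩ := Finset.mem_image.1 hy
    have := hC x hx
    unfold rotf; split_ifs <;> omega
  have hinv : ∀ {π' : Finset (Finset ℕ)}, π' ∈ NCP (C.image (rotf k)) →
      (π'.image (·.image (rotg k))).image (·.image (rotf k)) = π' := by
    intro π' hπ'
    rw [Finset.image_image]
    have h : ∀ B ∈ π', ((·.image (rotf k)) ∘ (·.image (rotg k))) B = id B := fun B hB =>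
      image_rotf_rotg hk fun x hx => hC' x (NCP_block_subset hπ' hB hx)
    rw [Finset.image_congr fun B hB => h B hB, Finset.image_id]
  refine Finset.sum_bij' (i := fun π' _ => π'.image (·.image (rotg k)))
    (j := fun π _ => π.image (·.image (rotf k))) ?_ ?_ ?_ ?_ ?_
  · intro π' hπ'
    have h1 := rotQ_mem_NCP hk hC' hπ'
    rwa [image_rotg_rotf hC] at h1
  · intro π hπ
    exact rotP_mem_NCP hk hC hπ
  · intro π' hπ'
    exact hinv hπ'
  · intro π hπ
    show (π.image (·.image (rotf k))).image (·.image (rotg k)) = π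
    rw [Finset.image_image]
    have h : ∀ B ∈ π, ((·.image (rotg k)) ∘ (·.image (rotf k))) B = id B := fun B hB =>
      image_rotg_rotf fun x hx => hC x (NCP_block_subset hπ hB hx)
    rw [Finset.image_congr fun B hB => h B hB, Finset.image_id]
  · intro π' hπ'
    show G π' = G ((π'.image (·.image (rotg k))).image (·.image (rotf k)))
    rw [hinv hπ']

lemma image_rotf_of_not_mem {k : ℕ} {B : Finset ℕ} (hB : k ∉ B) :
    B.image (rotf k) = B := by
  have h : ∀ x ∈ B, rotf k x = id x := fun x hx =>
    rotf_of_ne fun hEq => hB (hEq ▸ hx)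
  rw [Finset.image_congr fun x hx => h x hx, Finset.image_id]

lemma image_rotf_of_mem {k : ℕ} {B : Finset ℕ} (hel : ∀ x ∈ B, 2 ≤ x) (hB : k ∈ B) :
    B.image (rotf k) = insert 1 (B.erase k) := by
  have hk2 : 2 ≤ k := hel k hB
  ext y
  simp only [Finset.mem_image, mem_insert, mem_erase]
  constructor
  · rintro ⟨x, hx, rfl⟩
    by_cases hxk : x = k
    · left; rw [hxk]; exact rotf_k
    · right; rw [rotf_of_ne hxk]; exact ⟨hxk, hx⟩
  · rintro (rfl | ⟨hyk, hy⟩)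
    · exact ⟨k, hB, rotf_k⟩
    · exact ⟨y, hy, rotf_of_ne hyk⟩

lemma image_rotf_Icc {k : ℕ} (hk : 2 ≤ k) :
    (Finset.Icc 2 k).image (rotf k) = Finset.Icc 1 (k - 1) := by
  ext y
  simp only [Finset.mem_image, Finset.mem_Icc]
  constructor
  · rintro ⟨x, hx, rfl⟩
    unfold rotf; split_ifs <;> omega
  · intro hy
    by_cases hy1 : y = 1
    · exact ⟨k, by omega, by rw [hy1]; exact rotf_k⟩
    · exact ⟨y, by omega, rotf_of_ne (by omega)⟩

/-- rotated moment formula. -/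
lemma moment_rot {k : ℕ} (hk : 2 ≤ k) (t : Finset ℕ → ℂ) {C : Finset ℕ}
    (hC : ∀ x ∈ C, 2 ≤ x ∧ x ≤ k) (hCne : C.Nonempty) :
    t (C.image (rotf k)) = ∑ σ ∈ NCP C, ∏ B ∈ σ, cum t (B.image (rotf k)) := by
  rw [cum_spec t (hCne.image _), sum_NCP_rot hk hC (fun π' => ∏ B ∈ π', cum t B)]
  refine Finset.sum_congr rfl fun σ hσ => ?_
  refine Finset.prod_image ?_
  intro B hB B' hB' hEq
  beta_reduce at hEq
  have hrng : ∀ {P : Finset ℕ}, P ∈ σ → ∀ x ∈ P, 2 ≤ x ∧ x ≤ k := fun hP x hx =>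
    hC x (NCP_block_subset hσ hP hx)
  rw [← image_rotg_rotf (hrng hB), hEq, image_rotg_rotf (hrng hB')]

section ClassComp

variable {k : ℕ} {ρ : Finset (Finset ℕ)} {a b x y : ℕ}

lemma bad_insert_singleton {m : ℕ} :
    Bad (insert {m} ρ) x y ↔ Bad ρ x y := by
  constructor
  · rintro ⟨R, hR, u, hu, v, hv, hp⟩
    rcases mem_insert.1 hR with rfl | hR'
    · rw [mem_singleton] at hu hv
      subst hu; subst hv
      unfold BadPat at hp; omega
    · exact ⟨R, hR', u, hu, v, hv, hp⟩
  · rintro ⟨R, hR, u, hu, v, hv, hp⟩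
    exact ⟨R, mem_insert_of_mem hR, u, hu, v, hv, hp⟩

/-- transfer of badness at `k` for bars bounded by `k-1`. -/
lemma bad_k_iff (hbl : ∀ R ∈ ρ, ∀ w ∈ R, 1 ≤ w ∧ w ≤ k - 1) (hk : 2 ≤ k)
    (ha : a ≤ k - 1) : Bad ρ a k ↔ Bad ρ 1 a := by
  constructor
  · rintro ⟨R, hR, u, hu, v, hv, hp⟩
    have h1 := hbl R hR u hu
    have h2 := hbl R hR v hv
    refine ⟨R, hR, u, hu, v, hv, ?_⟩
    unfold BadPat at hp ⊢; omega
  · rintro ⟨R, hR, u, hu, v, hv, hp⟩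
    have h1 := hbl R hR u hu
    have h2 := hbl R hR v hv
    refine ⟨R, hR, u, hu, v, hv, ?_⟩
    unfold BadPat at hp ⊢; omega

/-- transfer of badness for pairs below `k` under the `1 ↦ k` rotation of the bars. -/
lemma bad_rotg_iff_low (hk : 2 ≤ k) (hbl : ∀ R ∈ ρ, ∀ w ∈ R, 1 ≤ w ∧ w ≤ k - 1)
    (ha : 2 ≤ a) (hb : b ≤ k - 1) (hab : a < b) :
    Bad (ρ.image (·.image (rotg k))) a b ↔ Bad ρ a b := by
  constructor
  · rintro ⟨R₃, hR₃, u', hu', v', hv', hp⟩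
    obtain ⟨R, hR, rfl⟩ := Finset.mem_image.1 hR₃
    obtain ⟨u, hu, rfl⟩ := Finset.mem_image.1 hu'
    obtain ⟨v, hv, rfl⟩ := Finset.mem_image.1 hv'
    have h1 := hbl R hR u hu
    have h2 := hbl R hR v hv
    by_cases hu1 : u = 1 <;> by_cases hv1 : v = 1
    · subst hu1; subst hv1
      rw [rotg_one] at hp
      unfold BadPat at hp; omega
    · -- u = 1 : bars (rotg u = k, rotg v = v)
      rw [hu1, rotg_one, rotg_of_ne hv1] at hp
      refine ⟨R, hR, u, hu, v, hv, ?_⟩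
      rw [hu1]
      unfold BadPat at hp ⊢; omega
    · rw [hv1, rotg_one, rotg_of_ne hu1] at hp
      refine ⟨R, hR, v, hv, u, hu, ?_⟩
      rw [hv1]
      unfold BadPat at hp ⊢; omega
    · rw [rotg_of_ne hu1, rotg_of_ne hv1] at hp
      exact ⟨R, hR, u, hu, v, hv, hp⟩
  · rintro ⟨R, hR, u, hu, v, hv, hp⟩
    have h1 := hbl R hR u hu
    have h2 := hbl R hR v hv
    refine ⟨R.image (rotg k), Finset.mem_image_of_mem _ hR, ?_⟩
    by_cases hu1 : u = 1
    · -- replace the bar u=1 by the bar k ; pattern P2 (u<a≤v<b) becomes P1 (a≤v<b≤k)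
      refine ⟨v, mem_image_rotg_self hv (by unfold BadPat at hp; omega),
        k, Finset.mem_image.2 ⟨1, hu1 ▸ hu, rotg_one⟩, ?_⟩
      unfold BadPat at hp ⊢; omega
    · refine ⟨u, mem_image_rotg_self hu hu1,
        v, mem_image_rotg_self hv (by unfold BadPat at hp; omega), ?_⟩
      unfold BadPat at hp ⊢; omega

/-- transfer of badness at `k` under the `1 ↦ k` rotation of the bars. -/
lemma bad_rotg_iff_k (hk : 2 ≤ k) (hbl : ∀ R ∈ ρ, ∀ w ∈ R, 1 ≤ w ∧ w ≤ k - 1)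
    (ha : 2 ≤ a) (ha' : a ≤ k - 1) :
    Bad (ρ.image (·.image (rotg k))) a k ↔ Bad ρ 1 a := by
  constructor
  · rintro ⟨R₃, hR₃, u', hu', v', hv', hp⟩
    obtain ⟨R, hR, rfl⟩ := Finset.mem_image.1 hR₃
    obtain ⟨u, hu, rfl⟩ := Finset.mem_image.1 hu'
    obtain ⟨v, hv, rfl⟩ := Finset.mem_image.1 hv'
    have h1 := hbl R hR u hu
    have h2 := hbl R hR v hv
    by_cases hu1 : u = 1 <;> by_cases hv1 : v = 1
    · subst hu1; subst hv1
      rw [rotg_one] at hp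
      unfold BadPat at hp; omega
    · rw [hu1, rotg_one, rotg_of_ne hv1] at hp
      refine ⟨R, hR, u, hu, v, hv, ?_⟩
      rw [hu1]
      unfold BadPat at hp ⊢; omega
    · -- v = 1 : bars are (u, k) : pattern P1 a≤u<k≤k gives 1<a≤u : Bad ρ 1 a  via (1, u)
      rw [hv1, rotg_one, rotg_of_ne hu1] at hp
      refine ⟨R, hR, v, hv, u, hu, ?_⟩
      rw [hv1]
      unfold BadPat at hp ⊢; omega
    · rw [rotg_of_ne hu1, rotg_of_ne hv1] at hp
      refine ⟨R, hR, u, hu, v, hv, ?_⟩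
      unfold BadPat at hp ⊢; omega
  · rintro ⟨R, hR, u, hu, v, hv, hp⟩
    have h1 := hbl R hR u hu
    have h2 := hbl R hR v hv
    refine ⟨R.image (rotg k), Finset.mem_image_of_mem _ hR, ?_⟩
    by_cases hu1 : u = 1
    · refine ⟨v, mem_image_rotg_self hv (by unfold BadPat at hp; omega),
        k, Finset.mem_image.2 ⟨1, hu1 ▸ hu, rotg_one⟩, ?_⟩
      unfold BadPat at hp ⊢; omega
    · refine ⟨u, mem_image_rotg_self hu hu1,
        v, mem_image_rotg_self hv (by unfold BadPat at hp; omega), ?_⟩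
      unfold BadPat at hp ⊢; omega

lemma not_bad_self {ρ : Finset (Finset ℕ)} {x : ℕ} : ¬ Bad ρ x x := by
  rintro ⟨R, hR, u, hu, v, hv, hp⟩
  unfold BadPat at hp; omega

lemma not_bad_one_one {ρ : Finset (Finset ℕ)} : ¬ Bad ρ 1 1 := not_bad_self

lemma grel_insert_low_iff {m : ℕ} : GRel (insert {m} ρ) x y ↔ GRel ρ x y := by
  unfold GRel
  rw [bad_insert_singleton, bad_insert_singleton]

lemma grel_one_iff {ρ : Finset (Finset ℕ)} {a : ℕ} (ha : 1 ≤ a) :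
    GRel ρ 1 a ↔ ¬ Bad ρ 1 a := by
  constructor
  · intro h
    rcases eq_or_lt_of_le ha with rfl | hlt
    · exact not_bad_one_one
    · exact grel_not_bad hlt h
  · intro h
    rcases eq_or_lt_of_le ha with rfl | hlt
    · exact grel_refl 1
    · exact grel_of_lt hlt h

lemma grel_insert_k_iff (hk : 2 ≤ k)
    (hbl : ∀ R ∈ ρ, ∀ w ∈ R, 1 ≤ w ∧ w ≤ k - 1)
    (ha : 1 ≤ a) (ha' : a ≤ k - 1) :
    GRel (insert {k} ρ) a k ↔ GRel ρ 1 a := by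
  have hak : a < k := by omega
  rw [grel_one_iff ha]
  constructor
  · intro h
    have hnb : ¬ Bad (insert {k} ρ) a k := grel_not_bad hak h
    rw [bad_insert_singleton, bad_k_iff hbl hk ha'] at hnb
    exact hnb
  · intro h
    refine grel_of_lt hak ?_
    rw [bad_insert_singleton, bad_k_iff hbl hk ha']
    exact h

lemma cls_one_iff {ρ : Finset (Finset ℕ)} (hk : 2 ≤ k) {x : ℕ}
    (hx : x ∈ Finset.Icc 1 (k - 1)) :
    cls (Finset.Icc 1 (k - 1)) ρ x = cls (Finset.Icc 1 (k - 1)) ρ 1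
      ↔ x ∈ cls (Finset.Icc 1 (k - 1)) ρ 1 := by
  constructor
  · intro h; rw [← h]; exact self_mem_cls hx
  · intro h; exact (cls_eq_of_grel (grel_symm (mem_cls.1 h).2))

lemma tau1_eq (hk : 2 ≤ k) {ρ : Finset (Finset ℕ)}
    (hρ : ρ ∈ NCP (Finset.Icc 1 (k - 1))) :
    tauP (Finset.Icc 1 k) (insert {k} ρ)
      = insert (insert k (cls (Finset.Icc 1 (k - 1)) ρ 1))
          ((tauP (Finset.Icc 1 (k - 1)) ρ).erase (cls (Finset.Icc 1 (k - 1)) ρ 1)) := by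
  have hbl : ∀ R ∈ ρ, ∀ w ∈ R, 1 ≤ w ∧ w ≤ k - 1 := by
    intro R hR w hw
    have := NCP_block_subset hρ hR hw
    rw [Finset.mem_Icc] at this
    exact this
  set S₂ := Finset.Icc 1 (k - 1) with hS₂
  set B₁ := cls S₂ ρ 1 with hB₁
  have h1S₂ : (1 : ℕ) ∈ S₂ := by rw [hS₂, Finset.mem_Icc]; omega
  have h1B₁ : (1 : ℕ) ∈ B₁ := self_mem_cls h1S₂
  -- the class of k
  have f3 : cls (Finset.Icc 1 k) (insert {k} ρ) k = insert k B₁ := by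
    ext y
    rw [mem_cls, mem_insert, hB₁, mem_cls]
    constructor
    · rintro ⟨hyS, hg⟩
      rw [Finset.mem_Icc] at hyS
      by_cases hy : y = k
      · exact Or.inl hy
      · have hy' : y ≤ k - 1 := by omega
        refine Or.inr ⟨by rw [Finset.mem_Icc]; omega, ?_⟩
        rw [← grel_insert_k_iff hk hbl (by omega) hy']
        exact grel_symm hg
    · rintro (rfl | ⟨hyS, hg⟩)
      · exact ⟨by rw [Finset.mem_Icc]; omega, grel_refl y⟩
      · rw [Finset.mem_Icc] at hyS
        refine ⟨by rw [Finset.mem_Icc]; omega, ?_⟩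
        exact grel_symm ((grel_insert_k_iff hk hbl (by omega) (by omega)).2 hg)
  -- classes of x ≤ k-1
  have f2 : ∀ x, x ∈ S₂ →
      cls (Finset.Icc 1 k) (insert {k} ρ) x
        = if x ∈ B₁ then insert k B₁ else cls S₂ ρ x := by
    intro x hxS
    have hxI : 1 ≤ x ∧ x ≤ k - 1 := by rw [hS₂, Finset.mem_Icc] at hxS; exact hxS
    by_cases hxB : x ∈ B₁
    · rw [if_pos hxB]
      have hcx : cls S₂ ρ x = B₁ := (cls_one_iff hk hxS).2 hxB
      ext y
      rw [mem_cls, mem_insert]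
      constructor
      · rintro ⟨hyS, hg⟩
        rw [Finset.mem_Icc] at hyS
        by_cases hy : y = k
        · exact Or.inl hy
        · have hy' : y ≤ k - 1 := by omega
          refine Or.inr ?_
          rw [← hcx, mem_cls]
          refine ⟨by rw [hS₂, Finset.mem_Icc]; omega, ?_⟩
          exact grel_insert_low_iff.1 hg
      · rintro (rfl | hyB)
        · refine ⟨by rw [Finset.mem_Icc]; omega, ?_⟩
          exact (grel_insert_k_iff hk hbl hxI.1 hxI.2).2 ((mem_cls.1 hxB).2)
        · rw [← hcx, mem_cls] at hyB
          obtain ⟨hyS, hg⟩ := hyB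
          rw [hS₂, Finset.mem_Icc] at hyS
          exact ⟨by rw [Finset.mem_Icc]; omega, grel_insert_low_iff.2 hg⟩
    · rw [if_neg hxB]
      ext y
      rw [mem_cls, mem_cls]
      constructor
      · rintro ⟨hyS, hg⟩
        rw [Finset.mem_Icc] at hyS
        by_cases hy : y = k
        · subst hy
          exfalso
          apply hxB
          rw [hB₁, mem_cls]
          exact ⟨hxS, (grel_insert_k_iff hk hbl hxI.1 hxI.2).1 hg⟩
        · refine ⟨by rw [hS₂, Finset.mem_Icc]; omega, grel_insert_low_iff.1 hg⟩
      · rintro ⟨hyS, hg⟩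
        rw [hS₂, Finset.mem_Icc] at hyS
        exact ⟨by rw [Finset.mem_Icc]; omega, grel_insert_low_iff.2 hg⟩
  -- now the partition identity
  ext Cs
  rw [tauP, Finset.mem_image, mem_insert]
  constructor
  · rintro ⟨x, hx, rfl⟩
    rw [Finset.mem_Icc] at hx
    by_cases hxk : x = k
    · subst hxk; exact Or.inl f3
    · have hxS : x ∈ S₂ := by rw [hS₂, Finset.mem_Icc]; omega
      rw [f2 x hxS]
      by_cases hxB : x ∈ B₁
      · rw [if_pos hxB]; exact Or.inl rfl
      · rw [if_neg hxB]
        refine Or.inr (mem_erase.2 ⟨?_, Finset.mem_image_of_mem _ hxS⟩)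
        intro hEq
        exact hxB ((cls_one_iff hk hxS).1 hEq)
  · rintro (rfl | hC)
    · refine ⟨k, by rw [Finset.mem_Icc]; omega, f3⟩
    · obtain ⟨hne, hC2⟩ := mem_erase.1 hC
      obtain ⟨x, hxS, rfl⟩ := Finset.mem_image.1 hC2
      have hxB : x ∉ B₁ := fun hxB => hne ((cls_one_iff hk hxS).2 hxB)
      refine ⟨x, ?_, ?_⟩
      · rw [hS₂, Finset.mem_Icc] at hxS
        rw [Finset.mem_Icc]; omega
      · rw [f2 x hxS, if_neg hxB]

lemma grel_rotg_low_iff (hk : 2 ≤ k)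
    (hbl : ∀ R ∈ ρ, ∀ w ∈ R, 1 ≤ w ∧ w ≤ k - 1)
    (hx : 2 ≤ x ∧ x ≤ k - 1) (hy : 2 ≤ y ∧ y ≤ k - 1) :
    GRel (ρ.image (·.image (rotg k))) x y ↔ GRel ρ x y := by
  constructor
  · intro h
    rcases h with rfl | ⟨hlt, hnb⟩ | ⟨hlt, hnb⟩
    · exact grel_refl x
    · exact Or.inr (Or.inl ⟨hlt, by rwa [bad_rotg_iff_low hk hbl hx.1 hy.2 hlt] at hnb⟩)
    · exact Or.inr (Or.inr ⟨hlt, by rwa [bad_rotg_iff_low hk hbl hy.1 hx.2 hlt] at hnb⟩)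
  · intro h
    rcases h with rfl | ⟨hlt, hnb⟩ | ⟨hlt, hnb⟩
    · exact grel_refl x
    · exact Or.inr (Or.inl ⟨hlt, by rwa [bad_rotg_iff_low hk hbl hx.1 hy.2 hlt]⟩)
    · exact Or.inr (Or.inr ⟨hlt, by rwa [bad_rotg_iff_low hk hbl hy.1 hx.2 hlt]⟩)

lemma grel_rotg_k_iff (hk : 2 ≤ k)
    (hbl : ∀ R ∈ ρ, ∀ w ∈ R, 1 ≤ w ∧ w ≤ k - 1)
    (ha : 2 ≤ a ∧ a ≤ k - 1) :
    GRel (ρ.image (·.image (rotg k))) a k ↔ GRel ρ 1 a := by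
  have hak : a < k := by omega
  rw [grel_one_iff (by omega : 1 ≤ a)]
  constructor
  · intro h
    have hnb := grel_not_bad hak h
    rwa [bad_rotg_iff_k hk hbl ha.1 ha.2] at hnb
  · intro h
    refine grel_of_lt hak ?_
    rwa [bad_rotg_iff_k hk hbl ha.1 ha.2]

lemma tau3_eq (hk : 2 ≤ k) {ρ : Finset (Finset ℕ)}
    (hρ : ρ ∈ NCP (Finset.Icc 1 (k - 1))) :
    tauP (Finset.Icc 2 k) (ρ.image (·.image (rotg k)))
      = insert (insert k ((cls (Finset.Icc 1 (k - 1)) ρ 1).erase 1))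
          ((tauP (Finset.Icc 1 (k - 1)) ρ).erase (cls (Finset.Icc 1 (k - 1)) ρ 1)) := by
  have hbl : ∀ R ∈ ρ, ∀ w ∈ R, 1 ≤ w ∧ w ≤ k - 1 := by
    intro R hR w hw
    have := NCP_block_subset hρ hR hw
    rw [Finset.mem_Icc] at this
    exact this
  set S₂ := Finset.Icc 1 (k - 1) with hS₂
  set B₁ := cls S₂ ρ 1 with hB₁
  have h1S₂ : (1 : ℕ) ∈ S₂ := by rw [hS₂, Finset.mem_Icc]; omega
  have h1B₁ : (1 : ℕ) ∈ B₁ := self_mem_cls h1S₂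
  have hB₁sub : ∀ w ∈ B₁, 1 ≤ w ∧ w ≤ k - 1 := by
    intro w hw
    have := cls_subset hw
    rw [hS₂, Finset.mem_Icc] at this
    exact this
  have f3 : cls (Finset.Icc 2 k) (ρ.image (·.image (rotg k))) k
      = insert k (B₁.erase 1) := by
    ext y
    rw [mem_cls, mem_insert, mem_erase]
    constructor
    · rintro ⟨hyS, hg⟩
      rw [Finset.mem_Icc] at hyS
      by_cases hy : y = k
      · exact Or.inl hy
      · have hy2 : 2 ≤ y ∧ y ≤ k - 1 := by omega
        refine Or.inr ⟨by omega, ?_⟩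
        rw [hB₁, mem_cls]
        exact ⟨by rw [hS₂, Finset.mem_Icc]; omega,
          (grel_rotg_k_iff hk hbl hy2).1 (grel_symm hg)⟩
    · rintro (rfl | ⟨hy1, hyB⟩)
      · exact ⟨by rw [Finset.mem_Icc]; omega, grel_refl y⟩
      · have hyw := hB₁sub y hyB
        refine ⟨by rw [Finset.mem_Icc]; omega, ?_⟩
        exact grel_symm ((grel_rotg_k_iff hk hbl (by omega)).2 (mem_cls.1 hyB).2)
  have f2 : ∀ x, 2 ≤ x → x ≤ k - 1 →
      cls (Finset.Icc 2 k) (ρ.image (·.image (rotg k))) x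
        = if x ∈ B₁ then insert k (B₁.erase 1) else cls S₂ ρ x := by
    intro x hx2 hx1
    have hxS : x ∈ S₂ := by rw [hS₂, Finset.mem_Icc]; omega
    by_cases hxB : x ∈ B₁
    · rw [if_pos hxB]
      have hcx : cls S₂ ρ x = B₁ := (cls_one_iff hk hxS).2 hxB
      ext y
      rw [mem_cls, mem_insert, mem_erase]
      constructor
      · rintro ⟨hyS, hg⟩
        rw [Finset.mem_Icc] at hyS
        by_cases hy : y = k
        · exact Or.inl hy
        · have hy2 : 2 ≤ y ∧ y ≤ k - 1 := by omega
          refine Or.inr ⟨by omega, ?_⟩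
          rw [← hcx, mem_cls]
          exact ⟨by rw [hS₂, Finset.mem_Icc]; omega,
            (grel_rotg_low_iff hk hbl ⟨hx2, hx1⟩ hy2).1 hg⟩
      · rintro (rfl | ⟨hy1, hyB⟩)
        · refine ⟨by rw [Finset.mem_Icc]; omega, ?_⟩
          exact (grel_rotg_k_iff hk hbl ⟨hx2, hx1⟩).2 (mem_cls.1 hxB).2
        · have hyw := hB₁sub y hyB
          rw [← hcx, mem_cls] at hyB
          refine ⟨by rw [Finset.mem_Icc]; omega, ?_⟩
          exact (grel_rotg_low_iff hk hbl ⟨hx2, hx1⟩ (by omega)).2 hyB.2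
    · rw [if_neg hxB]
      ext y
      rw [mem_cls, mem_cls]
      constructor
      · rintro ⟨hyS, hg⟩
        rw [Finset.mem_Icc] at hyS
        by_cases hy : y = k
        · subst hy
          exfalso
          apply hxB
          rw [hB₁, mem_cls]
          exact ⟨hxS, (grel_rotg_k_iff hk hbl ⟨hx2, hx1⟩).1 hg⟩
        · have hy2 : 2 ≤ y ∧ y ≤ k - 1 := by omega
          refine ⟨by rw [hS₂, Finset.mem_Icc]; omega, ?_⟩
          exact (grel_rotg_low_iff hk hbl ⟨hx2, hx1⟩ hy2).1 hg
      · rintro ⟨hyS, hg⟩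
        rw [hS₂, Finset.mem_Icc] at hyS
        by_cases hy1 : y = 1
        · exfalso
          apply hxB
          rw [hB₁, mem_cls]
          refine ⟨hxS, grel_symm ?_⟩
          rw [← hy1]
          exact hg
        · refine ⟨by rw [Finset.mem_Icc]; omega, ?_⟩
          exact (grel_rotg_low_iff hk hbl ⟨hx2, hx1⟩ (by omega)).2 hg
  ext Cs
  rw [tauP, Finset.mem_image, mem_insert]
  constructor
  · rintro ⟨x, hx, rfl⟩
    rw [Finset.mem_Icc] at hx
    by_cases hxk : x = k
    · subst hxk; exact Or.inl f3
    · rw [f2 x hx.1 (by omega)]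
      by_cases hxB : x ∈ B₁
      · rw [if_pos hxB]; exact Or.inl rfl
      · rw [if_neg hxB]
        have hxS : x ∈ S₂ := by rw [hS₂, Finset.mem_Icc]; omega
        refine Or.inr (mem_erase.2 ⟨?_, Finset.mem_image_of_mem _ hxS⟩)
        intro hEq
        exact hxB ((cls_one_iff hk hxS).1 hEq)
  · rintro (rfl | hC)
    · exact ⟨k, by rw [Finset.mem_Icc]; omega, f3⟩
    · obtain ⟨hne, hC2⟩ := mem_erase.1 hC
      obtain ⟨x, hxS, rfl⟩ := Finset.mem_image.1 hC2
      have hxB : x ∉ B₁ := fun hxB => hne ((cls_one_iff hk hxS).2 hxB)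
      have hx1 : x ≠ 1 := fun hEq => hxB (hEq ▸ h1B₁)
      rw [hS₂, Finset.mem_Icc] at hxS
      refine ⟨x, by rw [Finset.mem_Icc]; omega, ?_⟩
      rw [f2 x (by omega) (by omega), if_neg hxB]

end ClassComp

lemma key_identity {k : ℕ} (hk : 2 ≤ k) (z : ℕ → ℂ) (dd : Multiset ℂ → ℂ)
    (hrec : ∀ (z₁ zn : ℂ) (s : Multiset ℂ), z₁ ≠ zn →
      dd (z₁ ::ₘ zn ::ₘ s) = (dd (zn ::ₘ s) - dd (z₁ ::ₘ s)) / (zn - z₁))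
    (hz1k : z 1 ≠ z k)
    {ρ : Finset (Finset ℕ)} (hρ : ρ ∈ NCP (Finset.Icc 1 (k - 1))) :
    (z 1 - z k) * ∏ C ∈ tauP (Finset.Icc 1 k) (insert {k} ρ), dd (C.val.map z)
      = ∏ C ∈ tauP (Finset.Icc 1 (k - 1)) ρ, dd (C.val.map z)
        - ∏ C ∈ tauP (Finset.Icc 2 k) (ρ.image (·.image (rotg k))), dd (C.val.map z) := by
  set B₁ := cls (Finset.Icc 1 (k - 1)) ρ 1 with hB₁def
  have h1S₂ : (1 : ℕ) ∈ Finset.Icc 1 (k - 1) := by rw [Finset.mem_Icc]; omega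
  have h1B₁ : (1 : ℕ) ∈ B₁ := self_mem_cls h1S₂
  have hB₁mem : B₁ ∈ tauP (Finset.Icc 1 (k - 1)) ρ := Finset.mem_image_of_mem _ h1S₂
  have hkc : ∀ C ∈ tauP (Finset.Icc 1 (k - 1)) ρ, k ∉ C := by
    intro C hC hkC
    have := NCP_block_subset (tauP_mem_NCP) hC hkC
    rw [Finset.mem_Icc] at this
    omega
  have hkB₁ : k ∉ B₁ := hkc B₁ hB₁mem
  have hnm1 : insert k B₁ ∉ (tauP (Finset.Icc 1 (k - 1)) ρ).erase B₁ := by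
    intro h
    exact hkc _ (Finset.mem_of_mem_erase h) (mem_insert_self k B₁)
  have hnm3 : insert k (B₁.erase 1) ∉ (tauP (Finset.Icc 1 (k - 1)) ρ).erase B₁ := by
    intro h
    exact hkc _ (Finset.mem_of_mem_erase h) (mem_insert_self k _)
  rw [tau1_eq hk hρ, tau3_eq hk hρ, Finset.prod_insert hnm1, Finset.prod_insert hnm3,
    ← Finset.mul_prod_erase _ _ hB₁mem]
  set s := (B₁.erase 1).val.map z with hs
  have e2 : (B₁.val.map z) = z 1 ::ₘ s := by
    rw [hs, ← Multiset.map_cons, Finset.erase_val, Multiset.cons_erase]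
    exact h1B₁
  have e3 : ((insert k (B₁.erase 1)).val.map z) = z k ::ₘ s := by
    rw [Finset.insert_val_of_notMem (fun h => hkB₁ (Finset.mem_of_mem_erase h)),
      Multiset.map_cons, hs]
  have e1 : ((insert k B₁).val.map z) = z 1 ::ₘ z k ::ₘ s := by
    rw [Finset.insert_val_of_notMem hkB₁, Multiset.map_cons, e2, Multiset.cons_swap]
  rw [e1, e2, e3, hrec (z 1) (z k) s hz1k]
  have hne : z k - z 1 ≠ 0 := sub_ne_zero.2 (Ne.symm hz1k)
  field_simp
  ring

lemma Icc_erase_top {k : ℕ} (hk : 2 ≤ k) :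
    (Finset.Icc 1 k).erase k = Finset.Icc 1 (k - 1) := by
  ext x
  rw [mem_erase, Finset.mem_Icc, Finset.mem_Icc]
  omega

lemma Icc_insert_top {k : ℕ} (hk : 2 ≤ k) :
    insert k (Finset.Icc 1 (k - 1)) = Finset.Icc 1 k := by
  ext x
  rw [mem_insert, Finset.mem_Icc, Finset.mem_Icc]
  omega

lemma sum_singleton_split {m : ℕ} {T : Finset ℕ} (hm : m ∉ T)
    (g : Finset ℕ → ℂ) (f : Finset (Finset ℕ) → ℂ) :
    ∑ ρ ∈ NCP (insert m T),
        (∏ B ∈ ρ, (if B = {m} then 1 else if m ∈ B then 0 else g B)) * f ρ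
      = ∑ ρ' ∈ NCP T, (∏ B ∈ ρ', g B) * f (insert {m} ρ') := by
  classical
  have hmmem : m ∈ insert m T := mem_insert_self m T
  rw [← Finset.sum_filter_add_sum_filter_not (NCP (insert m T)) (fun ρ => {m} ∈ ρ)]
  have hzero : ∑ ρ ∈ (NCP (insert m T)).filter (fun ρ => ¬ {m} ∈ ρ),
      (∏ B ∈ ρ, (if B = {m} then 1 else if m ∈ B then 0 else g B)) * f ρ = 0 := by
    refine Finset.sum_eq_zero fun ρ hρ => ?_
    obtain ⟨hρN, hρs⟩ := mem_filter.1 hρ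
    obtain ⟨B, hB, hmB⟩ := NCP_exists_block hρN hmmem
    have hBne : B ≠ {m} := fun hEq => hρs (hEq ▸ hB)
    rw [Finset.prod_eq_zero hB (by rw [if_neg hBne, if_pos hmB]), zero_mul]
  rw [hzero, add_zero]
  refine Finset.sum_bij' (i := fun ρ _ => ρ.erase {m}) (j := fun ρ' _ => insert {m} ρ')
    ?_ ?_ ?_ ?_ ?_
  · intro ρ hρ
    obtain ⟨hρN, hρs⟩ := mem_filter.1 hρ
    exact erase_singleton_mem_NCP hm hρN hρs
  · intro ρ' hρ'
    exact mem_filter.2 ⟨insert_singleton_mem_NCP hm hρ', mem_insert_self _ _⟩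
  · intro ρ hρ
    exact Finset.insert_erase (mem_filter.1 hρ).2
  · intro ρ' hρ'
    exact Finset.erase_insert (singleton_not_mem_NCP hm hρ')
  · intro ρ hρ
    obtain ⟨hρN, hρs⟩ := mem_filter.1 hρ
    have hnotm : ∀ B ∈ ρ.erase {m}, m ∉ B := by
      intro B hB hmB
      exact (mem_erase.1 hB).1
        (NCP_block_eq hρN (mem_erase.1 hB).2 hρs hmB (mem_singleton_self m))
    have hval : (∏ B ∈ ρ, (if B = {m} then 1 else if m ∈ B then 0 else g B))
        = ∏ B ∈ ρ.erase {m}, g B := by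
      conv_lhs => rw [← Finset.insert_erase hρs]
      rw [Finset.prod_insert (notMem_erase _ _), if_pos rfl, one_mul]
      refine Finset.prod_congr rfl fun B hB => ?_
      rw [if_neg (mem_erase.1 hB).1, if_neg (hnotm B hB)]
    rw [hval, Finset.insert_erase hρs]

lemma ntr_finset_sum {N : ℕ} {ι : Type*} (s : Finset ι) (f : ι → Matrix (Fin N) (Fin N) ℂ) :
    ntr (∑ i ∈ s, f i) = ∑ i ∈ s, ntr (f i) := by
  unfold ntr
  rw [Matrix.trace_sum, Finset.mul_sum]

lemma ntr_Mblock_L {N k : ℕ} (hk : 2 ≤ k) (A : ℕ → Matrix (Fin N) (Fin N) ℂ)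
    (K : Finset ℕ → Finset (Finset ℕ) → Finset (Finset ℕ))
    (hK : ∀ S : Finset ℕ, ∀ π ∈ NCP S, IsKreweras S π (K S π)) (mc : Finset ℕ → ℂ) :
    ntr (Mblock 1 k A K mc)
      = ∑ π ∈ NCP (Finset.Icc 1 k), (∏ B ∈ π, mc B)
          * ∏ B ∈ K (Finset.Icc 1 k) π, ntr (ordProd (B.erase k) A) := by
  unfold Mblock
  rw [ntr_finset_sum]
  refine Finset.sum_congr rfl fun π hπ => ?_
  rw [ntr_smul]
  congr 1
  exact ntr_pTr_plain A (hK _ π hπ).1 (by rw [Finset.mem_Icc]; omega)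

lemma ntr_Mblock_M {N k : ℕ} (hk : 2 ≤ k) (A : ℕ → Matrix (Fin N) (Fin N) ℂ)
    (K : Finset ℕ → Finset (Finset ℕ) → Finset (Finset ℕ))
    (hK : ∀ S : Finset ℕ, ∀ π ∈ NCP S, IsKreweras S π (K S π)) (mc : Finset ℕ → ℂ) :
    ntr (Mblock 1 (k - 1) A K mc * A (k - 1))
      = ∑ π ∈ NCP (Finset.Icc 1 (k - 1)), (∏ B ∈ π, mc B)
          * ∏ B ∈ K (Finset.Icc 1 (k - 1)) π, ntr (ordProd B A) := by
  unfold Mblock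
  rw [Finset.sum_mul, ntr_finset_sum]
  refine Finset.sum_congr rfl fun π hπ => ?_
  rw [smul_mul_assoc, ntr_smul]
  congr 1
  refine ntr_pTr_mulRight A (hK _ π hπ).1 (by rw [Finset.mem_Icc]; omega) ?_
  intro B hB y hy
  have := NCP_block_subset (hK _ π hπ).1 hB hy
  rw [Finset.mem_Icc] at this
  omega

lemma ntr_pTr_R {N k : ℕ} (hk : 2 ≤ k) (A : ℕ → Matrix (Fin N) (Fin N) ℂ)
    {σ : Finset (Finset ℕ)} (hσ : σ ∈ NCP (Finset.Icc 2 k)) :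
    ntr (A 1 * pTr k σ A) = ∏ B ∈ σ, ntr (ordProd (B.image (rotf k)) A) := by
  have hkS : k ∈ Finset.Icc 2 k := by rw [Finset.mem_Icc]; omega
  obtain ⟨Bs, hBs, hkBs, hfil⟩ := filter_mem_block hσ hkS
  have hel : ∀ B ∈ σ, ∀ y ∈ B, 2 ≤ y ∧ y ≤ k := by
    intro B hB y hy
    have := NCP_block_subset hσ hB hy
    rwa [Finset.mem_Icc] at this
  rw [pTr_eq A hσ hkS hBs hkBs, mul_smul_comm, ntr_smul]
  have h2 : Bs.image (rotf k) = insert 1 (Bs.erase k) :=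
    image_rotf_of_mem (fun x hx => (hel Bs hBs x hx).1) hkBs
  have h1 : ordProd (insert 1 (Bs.erase k)) A = A 1 * ordProd (Bs.erase k) A := by
    refine ordProd_insert_min A (fun y hy => ?_) (fun h1m => ?_)
    · have := hel Bs hBs y (Finset.mem_of_mem_erase hy); omega
    · have := hel Bs hBs 1 (Finset.mem_of_mem_erase h1m); omega
  rw [← h1, ← h2,
    ← Finset.prod_filter_mul_prod_filter_not σ (fun B => k ∈ B)
      (fun B => ntr (ordProd (B.image (rotf k)) A)), hfil, Finset.prod_singleton]
  have h3 : ∏ B ∈ σ.filter (fun B => k ∉ B), ntr (ordProd (B.image (rotf k)) A)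
      = ∏ B ∈ σ.filter (fun B => k ∉ B), ntr (ordProd B A) := by
    refine Finset.prod_congr rfl fun B hB => ?_
    rw [image_rotf_of_not_mem (mem_filter.1 hB).2]
  rw [h3]
  ring

lemma ntr_Mblock_R {N k : ℕ} (hk : 2 ≤ k) (A : ℕ → Matrix (Fin N) (Fin N) ℂ)
    (K : Finset ℕ → Finset (Finset ℕ) → Finset (Finset ℕ))
    (hK : ∀ S : Finset ℕ, ∀ π ∈ NCP S, IsKreweras S π (K S π)) (mc : Finset ℕ → ℂ) :
    ntr (A 1 * Mblock 2 k A K mc)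
      = ∑ π ∈ NCP (Finset.Icc 2 k), (∏ B ∈ π, mc B)
          * ∏ B ∈ K (Finset.Icc 2 k) π, ntr (ordProd (B.image (rotf k)) A) := by
  unfold Mblock
  rw [Finset.mul_sum, ntr_finset_sum]
  refine Finset.sum_congr rfl fun π hπ => ?_
  rw [mul_smul_comm, ntr_smul]
  congr 1
  exact ntr_pTr_R hk A (hK _ π hπ).1

end DDProof2

/-- eq. (4.7), the tracial divided-difference relation for `⟨M_{[k]}⟩`. -/
theorem statement17
    (k N : ℕ) (hk : 2 ≤ k) (z : ℕ → ℂ) (hz : ∀ i ∈ Finset.Icc 1 k, (z i).im ≠ 0)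
    (hz1k : z 1 ≠ z k)
    (A : ℕ → Matrix (Fin N) (Fin N) ℂ)
    (dd : Multiset ℂ → ℂ) (hdd : IsDivDiff mSC dd)
    (mc : Finset ℕ → ℂ)
    (hmc : ∀ S ⊆ Finset.Icc 1 k, S.Nonempty →
      dd (S.val.map z) = ∑ π ∈ NCP S, ∏ B ∈ π, mc B)
    (K : Finset ℕ → Finset (Finset ℕ) → Finset (Finset ℕ))
    (hK : ∀ S : Finset ℕ, ∀ π ∈ NCP S, IsKreweras S π (K S π)) :
    ntr (Mblock 1 k A K mc) =
      ntr (Mblock 1 (k - 1) A K mc * A (k - 1) - A 1 * Mblock 2 k A K mc) / (z 1 - z k) := by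
  classical
  rcases Nat.eq_zero_or_pos N with rfl | hNpos
  · simp [ntr]
  have hN0 : N ≠ 0 := hNpos.ne'
  have htE : ntr (ordProd (∅ : Finset ℕ) A) = 1 := by rw [ordProd_empty, ntr_one hN0]
  have hz1k' : z 1 - z k ≠ 0 := sub_ne_zero.2 hz1k
  have hrec := hdd.2.1
  have hsub2 : Finset.Icc 1 (k - 1) ⊆ Finset.Icc 1 k := by
    intro x hx; rw [Finset.mem_Icc] at hx ⊢; omega
  have hsub3 : Finset.Icc 2 k ⊆ Finset.Icc 1 k := by
    intro x hx; rw [Finset.mem_Icc] at hx ⊢; omega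
  -- the trace function and its cumulants
  set t : Finset ℕ → ℂ := fun C => ntr (ordProd C A) with ht
  -- LEFT SIDE
  have hmomL : ∀ C : Finset ℕ, C ⊆ Finset.Icc 1 k → C.Nonempty →
      ntr (ordProd (C.erase k) A) = ∑ σ ∈ NCP C, ∏ B ∈ σ,
        (if B = {k} then 1 else if k ∈ B then 0 else cum t B) :=
    fun C _ hCne => moment_remove t htE k hCne
  have hL1 : ntr (Mblock 1 k A K mc)
      = ∑ π ∈ NCP (Finset.Icc 1 k), (∏ B ∈ π, mc B)
          * ∏ B ∈ K (Finset.Icc 1 k) π, ntr (ordProd (B.erase k) A) :=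
    ntr_Mblock_L hk A K hK mc
  have hL2 : ∑ π ∈ NCP (Finset.Icc 1 k), (∏ B ∈ π, mc B)
          * ∏ B ∈ K (Finset.Icc 1 k) π, ntr (ordProd (B.erase k) A)
      = ∑ ρ ∈ NCP (Finset.Icc 1 k),
          (∏ B ∈ ρ, (if B = {k} then 1 else if k ∈ B then 0 else cum t B))
            * ∏ C ∈ tauP (Finset.Icc 1 k) ρ, dd (C.val.map z) :=
    chain z dd mc hmc K hK (subset_refl _)
      (fun B => if B = {k} then 1 else if k ∈ B then 0 else cum t B)
      (fun C => ntr (ordProd (C.erase k) A)) hmomL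
  have hkT : k ∉ Finset.Icc 1 (k - 1) := by rw [Finset.mem_Icc]; omega
  have hL3 : ∑ ρ ∈ NCP (Finset.Icc 1 k),
          (∏ B ∈ ρ, (if B = {k} then 1 else if k ∈ B then 0 else cum t B))
            * ∏ C ∈ tauP (Finset.Icc 1 k) ρ, dd (C.val.map z)
      = ∑ ρ' ∈ NCP (Finset.Icc 1 (k - 1)), (∏ B ∈ ρ', cum t B)
          * ∏ C ∈ tauP (Finset.Icc 1 k) (insert {k} ρ'), dd (C.val.map z) := by
    have h := sum_singleton_split hkT (cum t)
      (fun ρ => ∏ C ∈ tauP (Finset.Icc 1 k) ρ, dd (C.val.map z))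
    rw [Icc_insert_top hk] at h
    exact h
  -- MIDDLE
  have hmomM : ∀ C : Finset ℕ, C ⊆ Finset.Icc 1 (k - 1) → C.Nonempty →
      ntr (ordProd C A) = ∑ σ ∈ NCP C, ∏ B ∈ σ, cum t B :=
    fun C _ hCne => cum_spec t hCne
  have hM1 : ntr (Mblock 1 (k - 1) A K mc * A (k - 1))
      = ∑ π ∈ NCP (Finset.Icc 1 (k - 1)), (∏ B ∈ π, mc B)
          * ∏ B ∈ K (Finset.Icc 1 (k - 1)) π, ntr (ordProd B A) :=
    ntr_Mblock_M hk A K hK mc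
  have hM2 : ∑ π ∈ NCP (Finset.Icc 1 (k - 1)), (∏ B ∈ π, mc B)
          * ∏ B ∈ K (Finset.Icc 1 (k - 1)) π, ntr (ordProd B A)
      = ∑ ρ' ∈ NCP (Finset.Icc 1 (k - 1)), (∏ B ∈ ρ', cum t B)
          * ∏ C ∈ tauP (Finset.Icc 1 (k - 1)) ρ', dd (C.val.map z) :=
    chain z dd mc hmc K hK hsub2 (cum t) (fun C => ntr (ordProd C A)) hmomM
  -- RIGHT
  have hmomR : ∀ C : Finset ℕ, C ⊆ Finset.Icc 2 k → C.Nonempty →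
      ntr (ordProd (C.image (rotf k)) A) = ∑ σ ∈ NCP C, ∏ B ∈ σ,
        cum t (B.image (rotf k)) := by
    intro C hCs hCne
    refine moment_rot hk t (fun x hx => ?_) hCne
    have := hCs hx; rwa [Finset.mem_Icc] at this
  have hR1 : ntr (A 1 * Mblock 2 k A K mc)
      = ∑ π ∈ NCP (Finset.Icc 2 k), (∏ B ∈ π, mc B)
          * ∏ B ∈ K (Finset.Icc 2 k) π, ntr (ordProd (B.image (rotf k)) A) :=
    ntr_Mblock_R hk A K hK mc
  have hR2 : ∑ π ∈ NCP (Finset.Icc 2 k), (∏ B ∈ π, mc B)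
          * ∏ B ∈ K (Finset.Icc 2 k) π, ntr (ordProd (B.image (rotf k)) A)
      = ∑ ρ ∈ NCP (Finset.Icc 2 k),
          (∏ B ∈ ρ, cum t (B.image (rotf k)))
            * ∏ C ∈ tauP (Finset.Icc 2 k) ρ, dd (C.val.map z) :=
    chain z dd mc hmc K hK hsub3 (fun B => cum t (B.image (rotf k)))
      (fun C => ntr (ordProd (C.image (rotf k)) A)) hmomR
  have hS₃el : ∀ x ∈ Finset.Icc 2 k, 2 ≤ x ∧ x ≤ k := by
    intro x hx; rwa [Finset.mem_Icc] at hx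
  have hR3 : ∑ ρ ∈ NCP (Finset.Icc 2 k),
          (∏ B ∈ ρ, cum t (B.image (rotf k)))
            * ∏ C ∈ tauP (Finset.Icc 2 k) ρ, dd (C.val.map z)
      = ∑ ρ' ∈ NCP (Finset.Icc 1 (k - 1)), (∏ B ∈ ρ', cum t B)
          * ∏ C ∈ tauP (Finset.Icc 2 k) (ρ'.image (·.image (rotg k))), dd (C.val.map z) := by
    have h0 := sum_NCP_rot hk hS₃el
      (G := fun σ => (∏ B ∈ σ, cum t B)
        * ∏ C ∈ tauP (Finset.Icc 2 k) (σ.image (·.image (rotg k))), dd (C.val.map z))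
    rw [image_rotf_Icc hk] at h0
    rw [h0]
    refine Finset.sum_congr rfl fun ρ hρ => ?_
    have hrng : ∀ {P : Finset ℕ}, P ∈ ρ → ∀ x ∈ P, 2 ≤ x ∧ x ≤ k := fun hP x hx =>
      hS₃el x (NCP_block_subset hρ hP hx)
    have hinv : (ρ.image (·.image (rotf k))).image (·.image (rotg k)) = ρ := by
      rw [Finset.image_image]
      have h : ∀ B ∈ ρ, ((·.image (rotg k)) ∘ (·.image (rotf k))) B = id B := fun B hB =>
        image_rotg_rotf (hrng hB)
      rw [Finset.image_congr fun B hB => h B hB, Finset.image_id]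
    have hprod : ∏ B ∈ ρ.image (·.image (rotf k)), cum t B
        = ∏ B ∈ ρ, cum t (B.image (rotf k)) := by
      refine Finset.prod_image ?_
      intro B hB B' hB' hEq
      beta_reduce at hEq
      rw [← image_rotg_rotf (hrng hB), hEq, image_rotg_rotf (hrng hB')]
    rw [hinv, hprod]
  -- FINISH
  have hntr_sub : ntr (Mblock 1 (k - 1) A K mc * A (k - 1) - A 1 * Mblock 2 k A K mc)
      = ntr (Mblock 1 (k - 1) A K mc * A (k - 1)) - ntr (A 1 * Mblock 2 k A K mc) := by
    unfold ntr
    rw [Matrix.trace_sub, mul_sub]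
  rw [hntr_sub, hM1, hM2, hR1, hR2, hR3, hL1, hL2, hL3, eq_div_iff hz1k',
    ← Finset.sum_sub_distrib, Finset.sum_mul]
  refine Finset.sum_congr rfl fun ρ' hρ' => ?_
  have hki := key_identity hk z dd hrec hz1k hρ'
  calc ((∏ B ∈ ρ', cum t B)
        * ∏ C ∈ tauP (Finset.Icc 1 k) (insert {k} ρ'), dd (C.val.map z)) * (z 1 - z k)
      = (∏ B ∈ ρ', cum t B) * ((z 1 - z k)
          * ∏ C ∈ tauP (Finset.Icc 1 k) (insert {k} ρ'), dd (C.val.map z)) := by ring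
    _ = (∏ B ∈ ρ', cum t B)
          * (∏ C ∈ tauP (Finset.Icc 1 (k - 1)) ρ', dd (C.val.map z)
            - ∏ C ∈ tauP (Finset.Icc 2 k) (ρ'.image (·.image (rotg k))), dd (C.val.map z)) := by
        rw [hki]
    _ = (∏ B ∈ ρ', cum t B) * ∏ C ∈ tauP (Finset.Icc 1 (k - 1)) ρ', dd (C.val.map z)
        - (∏ B ∈ ρ', cum t B)
          * ∏ C ∈ tauP (Finset.Icc 2 k) (ρ'.image (·.image (rotg k))), dd (C.val.map z) := by
        ring

end Paper
end
end
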